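/- arXiv:0811.4214 — 11 statements merged into one kernel-verified Lean document; each statement's English description precedes it below -/
import Mathlib

section
/- Let φ: ℝ → ℝ be differentiable, let r ≥ 0 be an integer with ℓ_k − ℓ_{k−1} ≥ 2r+1 for all k (non-overlapping clusters), let C_k = {ℓ_k − r, …, ℓ_k + r}, and let (ν_k) be any real weights. For u_h ∈ X_h with nodal values U_k and element gradients U'_k, define the cluster-summed nodal force F_{j,h}(u_h) = Σ_{k=−K+1}^K ν_k Σ_{ℓ∈C_k} F_ℓ(u_h) ζ_j(εℓ), where F_ℓ(u_h) = φ'(u'_{h,ℓ}) − φ'(u'_{h,ℓ+1}). Then F_{j,h}(u_h) = ν_j (φ'(U'_j) − φ'(U'_{j+1})) for every j, independently of the cluster radius r. Consequently, if ν_j ≠ 0 for all j, then F_{j,h}(u_h) = 0 for all j if and only if φ'(U'_j) − φ'(U'_{j+1}) = 0 for all j, i.e. the force-based cluster equations without external force are equivalent to the exact constrained atomistic equilibrium equations. -/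
/-- `v : ℤ → ℝ` belongs to the coarse space `X_h`. -/
def IsCoarse (N : ℤ) (ε : ℝ) (L : ℤ → ℤ) (v : ℤ → ℝ) : Prop :=
  (∀ l : ℤ, v (l + 2 * N) = v l) ∧ v 0 = 0 ∧
    ∀ k l : ℤ, L (k - 1) ≤ l → l ≤ L k →
      v l = v (L (k - 1)) +
        ε * ((l - L (k - 1) : ℤ) : ℝ) *
          ((v (L k) - v (L (k - 1))) / (ε * ((L k - L (k - 1) : ℤ) : ℝ)))

/-- without external forces, the force-based cluster summation rule
reduces to `F_{j,h}(u_h) = ν_j (φ'(U'_j) - φ'(U'_{j+1}))`, independently of the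
cluster radius; hence (for nonvanishing weights) the cluster equations are
equivalent to the exact constrained equilibrium equations. -/
theorem statement1
    (N K : ℤ) (hN : 1 ≤ N) (hK : 1 ≤ K)
    (ε : ℝ) (hε : ε = (N : ℝ)⁻¹)
    (L : ℤ → ℤ) (hmono : StrictMono L) (hL0 : L 0 = 0)
    (hLper : ∀ k : ℤ, L (k + 2 * K) = L k + 2 * N)
    (hsz : ℤ → ℝ) (hhsz : ∀ k : ℤ, hsz k = ε * ((L k - L (k - 1) : ℤ) : ℝ))
    (r : ℤ) (hr : 0 ≤ r) (hnov : ∀ k : ℤ, 2 * r + 1 ≤ L k - L (k - 1))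
    (ζ : ℤ → ℤ → ℝ)
    (hζ1 : ∀ j l : ℤ, L (j - 1) ≤ l → l ≤ L j →
      ζ j l = ((l - L (j - 1) : ℤ) : ℝ) / ((L j - L (j - 1) : ℤ) : ℝ))
    (hζ2 : ∀ j l : ℤ, L j ≤ l → l ≤ L (j + 1) →
      ζ j l = ((L (j + 1) - l : ℤ) : ℝ) / ((L (j + 1) - L j : ℤ) : ℝ))
    (hζ3 : ∀ j l : ℤ, L (j + 1) < l → l < L (j - 1) + 2 * N → ζ j l = 0)
    (hζ4 : ∀ j l : ℤ, ζ j (l + 2 * N) = ζ j l)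
    (ν : ℤ → ℝ)
    (φ : ℝ → ℝ) (hφ : Differentiable ℝ φ)
    (u : ℤ → ℝ) (hu : IsCoarse N ε L u)
    (Up : ℤ → ℝ) (hUp : ∀ k : ℤ, Up k = (u (L k) - u (L (k - 1))) / hsz k)
    (F : ℤ → ℝ)
    (hF : ∀ l : ℤ, F l = deriv φ (ε⁻¹ * (u l - u (l - 1))) -
      deriv φ (ε⁻¹ * (u (l + 1) - u l)))
    (Fh : ℤ → ℝ)
    (hFh : ∀ j : ℤ, Fh j = ∑ k ∈ Finset.Icc (-K + 1) K,
      ν k * ∑ l ∈ Finset.Icc (L k - r) (L k + r), F l * ζ j l) :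
    (∀ j ∈ Finset.Icc (-K + 1) K,
        Fh j = ν j * (deriv φ (Up j) - deriv φ (Up (j + 1)))) ∧
      ((∀ j : ℤ, ν j ≠ 0) →
        ((∀ j ∈ Finset.Icc (-K + 1) K, Fh j = 0) ↔
          ∀ j ∈ Finset.Icc (-K + 1) K,
            deriv φ (Up j) - deriv φ (Up (j + 1)) = 0)) := by
  
  have hεne : ε ≠ 0 := by
    rw [hε]
    exact inv_ne_zero (by exact_mod_cast (by omega : N ≠ 0))
  -- gradient of u on each element
  have hgrad : ∀ k l : ℤ, L (k - 1) < l → l ≤ L k →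
      ε⁻¹ * (u l - u (l - 1)) = Up k := by
    intro k l h1 h2
    obtain ⟨-, -, haff⟩ := hu
    have hc : ((L k - L (k - 1) : ℤ) : ℝ) ≠ 0 :=
      Int.cast_ne_zero.mpr (sub_ne_zero.mpr (hmono (show k - 1 < k by omega)).ne')
    rw [haff k l h1.le h2, haff k (l - 1) (by omega) (by omega), hUp, hhsz]
    push_cast
    field_simp
    ring
  have hFLk : ∀ k : ℤ, F (L k) = deriv φ (Up k) - deriv φ (Up (k + 1)) := by
    intro k
    have h1 : ε⁻¹ * (u (L k) - u (L k - 1)) = Up k :=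
      hgrad k (L k) (hmono (by omega)) le_rfl
    have hk : k + 1 - 1 = k := by ring
    have h2 := hgrad (k + 1) (L k + 1) (by rw [hk]; omega)
      (by have := hmono (show k < k + 1 by omega); omega)
    simp only [add_sub_cancel_right] at h2
    rw [hF, h1, h2]
  have hFzero : ∀ k l : ℤ, L k - r ≤ l → l ≤ L k + r → l ≠ L k → F l = 0 := by
    intro k l hl1 hl2 hne
    have hn1 := hnov k
    have hn2 : 2 * r + 1 ≤ L (k + 1) - L k := by
      have := hnov (k + 1); simpa using this
    have hk : k + 1 - 1 = k := by ring
    rcases lt_or_gt_of_ne hne with h | h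
    · have e1 := hgrad k l (by omega) (by omega)
      have e2 := hgrad k (l + 1) (by omega) (by omega)
      simp only [add_sub_cancel_right] at e2
      rw [hF, e1, e2, sub_self]
    · have e1 := hgrad (k + 1) l (by rw [hk]; omega) (by omega)
      have e2 := hgrad (k + 1) (l + 1) (by rw [hk]; omega) (by omega)
      simp only [add_sub_cancel_right] at e2
      rw [hF, e1, e2, sub_self]
  have hζone : ∀ j : ℤ, ζ j (L j) = 1 := by
    intro j
    rw [hζ1 j (L j) (hmono (by omega)).le le_rfl, div_self]
    exact Int.cast_ne_zero.mpr (sub_ne_zero.mpr (hmono (show j - 1 < j by omega)).ne')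
  have hz1 : ∀ j : ℤ, ζ j (L (j - 1)) = 0 := by
    intro j
    rw [hζ1 j (L (j - 1)) le_rfl (hmono (by omega)).le]
    simp
  have hz2 : ∀ j : ℤ, ζ j (L (j + 1)) = 0 := by
    intro j
    rw [hζ2 j (L (j + 1)) (hmono (by omega)).le le_rfl]
    simp
  have hζzero : ∀ j k : ℤ, -K + 1 ≤ j → j ≤ K → -K + 1 ≤ k → k ≤ K → k ≠ j →
      ζ j (L k) = 0 := by
    intro j k hj1 hj2 hk1 hk2 hne
    rcases eq_or_ne k (j - 1) with rfl | h1
    · exact hz1 j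
    rcases eq_or_ne k (j + 1) with rfl | h2
    · exact hz2 j
    rcases lt_or_gt_of_ne hne with hlt | hgt
    · have hshift : ζ j (L k) = ζ j (L (k + 2 * K)) := by
        rw [← hζ4 j (L k), (hLper k).symm]
      rw [hshift]
      rcases eq_or_ne (k + 2 * K) (j + 1) with he | hne'
      · rw [he]; exact hz2 j
      · apply hζ3
        · exact hmono (by omega)
        · rw [show L (j - 1) + 2 * N = L (j - 1 + 2 * K) from (hLper (j - 1)).symm]
          exact hmono (by omega)
    · rcases eq_or_ne k (j - 1 + 2 * K) with rfl | hne'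
      · rw [show L (j - 1 + 2 * K) = L (j - 1) + 2 * N from hLper (j - 1), hζ4]
        exact hz1 j
      · apply hζ3
        · exact hmono (by omega)
        · rw [show L (j - 1) + 2 * N = L (j - 1 + 2 * K) from (hLper (j - 1)).symm]
          exact hmono (by omega)
  have hinner : ∀ j k : ℤ, ∑ l ∈ Finset.Icc (L k - r) (L k + r), F l * ζ j l =
      (deriv φ (Up k) - deriv φ (Up (k + 1))) * ζ j (L k) := by
    intro j k
    rw [Finset.sum_eq_single_of_mem (L k) (Finset.mem_Icc.mpr ⟨by omega, by omega⟩)]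
    · rw [hFLk k]
    · intro l hl hne
      rw [Finset.mem_Icc] at hl
      rw [hFzero k l hl.1 hl.2 hne, zero_mul]
  have hmain : ∀ j ∈ Finset.Icc (-K + 1) K,
      Fh j = ν j * (deriv φ (Up j) - deriv φ (Up (j + 1))) := by
    intro j hj
    rw [Finset.mem_Icc] at hj
    rw [hFh j, Finset.sum_eq_single_of_mem j (Finset.mem_Icc.mpr ⟨hj.1, hj.2⟩)]
    · rw [hinner j j, hζone j, mul_one]
    · intro k hk hne
      rw [Finset.mem_Icc] at hk
      rw [hinner j k, hζzero j k hj.1 hj.2 hk.1 hk.2 hne, mul_zero, mul_zero]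
  refine ⟨hmain, fun hν => ⟨fun h j hj => ?_, fun h j hj => ?_⟩⟩
  · have := hmain j hj
    rw [h j hj] at this
    rcases mul_eq_zero.mp this.symm with h0 | h0
    · exact absurd h0 (hν j)
    · exact h0
  · rw [hmain j hj, h j hj, mul_zero]
end

section
/- Let φ: ℝ → ℝ be differentiable, let (f_ℓ)_{ℓ∈ℤ} be a 2N-periodic real sequence, let r ≥ 0 be an integer with ℓ_k − ℓ_{k−1} ≥ 2r+1 for all k, let C_k = {ℓ_k − r, …, ℓ_k + r}, and let (ν_k) be any real weights. For u_h ∈ X_h define F_ℓ(u_h) = φ'(u'_{h,ℓ}) − φ'(u'_{h,ℓ+1}) − ε f_ℓ and F_{j,h}(u_h) = Σ_{k=−K+1}^K ν_k Σ_{ℓ∈C_k} F_ℓ(u_h) ζ_j(εℓ). Then for every j, F_{j,h}(u_h) = ν_j (φ'(U'_j) − φ'(U'_{j+1})) − f̃_j, where f̃_j = Σ_{k=−K+1}^K ν_k Σ_{ℓ∈C_k} ε f_ℓ ζ_j(εℓ) is the cluster summation rule applied to the external forces alone. -/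
/-!
Inside an element the coarse displacement is affine, so the discrete stress `φ'(u'_ℓ)` is
constant there. Hence in a cluster, which is centred at a repatom and fits into the two adjacent
elements, the internal force `φ'(u'_ℓ) − φ'(u'_{ℓ+1})` vanishes at every atom except the repatom,
where it equals `φ'(U'_k) − φ'(U'_{k+1})`. The cluster sums therefore sample the internal forces
only at repatoms, where `ζ_j` is the Kronecker delta `δ_{jk}`; what is left is the cluster
summation of the external forces.
-/

open Finset

theorem IsCoarse.grad_eq {N : ℤ} {ε : ℝ} {L : ℤ → ℤ} {u : ℤ → ℝ} (hu : IsCoarse N ε L u)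
    (hε : ε ≠ 0) {k l : ℤ} (hl₁ : L (k - 1) < l) (hl₂ : l ≤ L k) :
    ε⁻¹ * (u l - u (l - 1)) =
      (u (L k) - u (L (k - 1))) / (ε * ((L k - L (k - 1) : ℤ) : ℝ)) := by
  have hd : ((L k - L (k - 1) : ℤ) : ℝ) ≠ 0 := by exact_mod_cast (by omega : L k - L (k - 1) ≠ 0)
  rw [hu.2.2 k l hl₁.le hl₂, hu.2.2 k (l - 1) (by omega) (by omega)]
  field_simp
  push_cast
  ring

theorem sum_cluster_sub_mul {L : ℤ → ℤ} {r : ℤ} (hr : 0 ≤ r)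
    (hnov : ∀ k : ℤ, 2 * r + 1 ≤ L k - L (k - 1)) {a A : ℤ → ℝ}
    (ha : ∀ k l : ℤ, L (k - 1) < l → l ≤ L k → a l = A k) (w : ℤ → ℝ) (k : ℤ) :
    ∑ l ∈ Icc (L k - r) (L k + r), (a l - a (l + 1)) * w l = (A k - A (k + 1)) * w (L k) := by
  have hleft := hnov k
  have hright := hnov (k + 1)
  rw [add_sub_cancel_right] at hright
  have hnode : a (L k) - a (L k + 1) = A k - A (k + 1) := by
    rw [ha k (L k) (by omega) le_rfl, ha (k + 1) (L k + 1) (by simp) (by omega)]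
  rw [sum_eq_single_of_mem (L k) (mem_Icc.2 ⟨by omega, by omega⟩), hnode]
  intro l hl hne
  obtain ⟨hl₁, hl₂⟩ := mem_Icc.1 hl
  suffices a l = a (l + 1) by rw [this, sub_self, zero_mul]
  rcases hne.lt_or_gt with hlt | hgt
  · rw [ha k l (by omega) (by omega), ha k (l + 1) (by omega) (by omega)]
  · rw [ha (k + 1) l (by simp; omega) (by omega), ha (k + 1) (l + 1) (by simp; omega) (by omega)]

section NodalBasis

variable {N K : ℤ} {L : ℤ → ℤ} {ζ : ℤ → ℤ → ℝ}

theorem nodalBasis_node_self (hmono : StrictMono L)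
    (hζ1 : ∀ j l : ℤ, L (j - 1) ≤ l → l ≤ L j →
      ζ j l = ((l - L (j - 1) : ℤ) : ℝ) / ((L j - L (j - 1) : ℤ) : ℝ))
    (j : ℤ) : ζ j (L j) = 1 := by
  rw [hζ1 j (L j) (hmono.monotone (by omega)) le_rfl, div_self]
  exact_mod_cast (sub_pos.2 (hmono (sub_one_lt j))).ne'

theorem nodalBasis_node_eq_zero_of_lt_of_lt (hmono : StrictMono L)
    (hLper : ∀ k : ℤ, L (k + 2 * K) = L k + 2 * N)
    (hζ1 : ∀ j l : ℤ, L (j - 1) ≤ l → l ≤ L j →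
      ζ j l = ((l - L (j - 1) : ℤ) : ℝ) / ((L j - L (j - 1) : ℤ) : ℝ))
    (hζ2 : ∀ j l : ℤ, L j ≤ l → l ≤ L (j + 1) →
      ζ j l = ((L (j + 1) - l : ℤ) : ℝ) / ((L (j + 1) - L j : ℤ) : ℝ))
    (hζ3 : ∀ j l : ℤ, L (j + 1) < l → l < L (j - 1) + 2 * N → ζ j l = 0)
    (hζ4 : ∀ j l : ℤ, ζ j (l + 2 * N) = ζ j l)
    {j k : ℤ} (hjk : j < k) (hkj : k < j + 2 * K) : ζ j (L k) = 0 := by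
  rcases (by omega : k = j + 1 ∨ k = j - 1 + 2 * K ∨ (j + 1 < k ∧ k < j - 1 + 2 * K)) with
    rfl | rfl | ⟨h₁, h₂⟩
  · rw [hζ2 j _ (hmono.monotone (by omega)) le_rfl]
    simp
  · rw [hLper, hζ4, hζ1 j _ le_rfl (hmono.monotone (by omega))]
    simp
  · exact hζ3 j _ (hmono h₁) (hLper (j - 1) ▸ hmono h₂)

theorem sum_mul_nodalBasis_node (hmono : StrictMono L)
    (hLper : ∀ k : ℤ, L (k + 2 * K) = L k + 2 * N)
    (hζ1 : ∀ j l : ℤ, L (j - 1) ≤ l → l ≤ L j →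
      ζ j l = ((l - L (j - 1) : ℤ) : ℝ) / ((L j - L (j - 1) : ℤ) : ℝ))
    (hζ2 : ∀ j l : ℤ, L j ≤ l → l ≤ L (j + 1) →
      ζ j l = ((L (j + 1) - l : ℤ) : ℝ) / ((L (j + 1) - L j : ℤ) : ℝ))
    (hζ3 : ∀ j l : ℤ, L (j + 1) < l → l < L (j - 1) + 2 * N → ζ j l = 0)
    (hζ4 : ∀ j l : ℤ, ζ j (l + 2 * N) = ζ j l)
    (c : ℤ → ℝ) {j : ℤ} (hj : j ∈ Icc (-K + 1) K) :
    ∑ k ∈ Icc (-K + 1) K, c k * ζ j (L k) = c j := by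
  rw [sum_eq_single_of_mem j hj, nodalBasis_node_self hmono hζ1, mul_one]
  intro k hk hkj
  obtain ⟨hj₁, hj₂⟩ := mem_Icc.1 hj
  obtain ⟨hk₁, hk₂⟩ := mem_Icc.1 hk
  suffices ζ j (L k) = 0 by rw [this, mul_zero]
  rcases hkj.lt_or_gt with hlt | hgt
  · rw [← hζ4, ← hLper]
    exact nodalBasis_node_eq_zero_of_lt_of_lt hmono hLper hζ1 hζ2 hζ3 hζ4 (by omega) (by omega)
  · exact nodalBasis_node_eq_zero_of_lt_of_lt hmono hLper hζ1 hζ2 hζ3 hζ4 hgt (by omega)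

end NodalBasis

theorem statement2_general
    (N K : ℤ) (hN : 1 ≤ N)
    (ε : ℝ) (hε : ε = (N : ℝ)⁻¹)
    (L : ℤ → ℤ) (hmono : StrictMono L)
    (hLper : ∀ k : ℤ, L (k + 2 * K) = L k + 2 * N)
    (hsz : ℤ → ℝ) (hhsz : ∀ k : ℤ, hsz k = ε * ((L k - L (k - 1) : ℤ) : ℝ))
    (r : ℤ) (hr : 0 ≤ r) (hnov : ∀ k : ℤ, 2 * r + 1 ≤ L k - L (k - 1))
    (ζ : ℤ → ℤ → ℝ)
    (hζ1 : ∀ j l : ℤ, L (j - 1) ≤ l → l ≤ L j →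
      ζ j l = ((l - L (j - 1) : ℤ) : ℝ) / ((L j - L (j - 1) : ℤ) : ℝ))
    (hζ2 : ∀ j l : ℤ, L j ≤ l → l ≤ L (j + 1) →
      ζ j l = ((L (j + 1) - l : ℤ) : ℝ) / ((L (j + 1) - L j : ℤ) : ℝ))
    (hζ3 : ∀ j l : ℤ, L (j + 1) < l → l < L (j - 1) + 2 * N → ζ j l = 0)
    (hζ4 : ∀ j l : ℤ, ζ j (l + 2 * N) = ζ j l)
    (ν : ℤ → ℝ)
    (φ : ℝ → ℝ)
    (f : ℤ → ℝ)
    (u : ℤ → ℝ) (hu : IsCoarse N ε L u)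
    (Up : ℤ → ℝ) (hUp : ∀ k : ℤ, Up k = (u (L k) - u (L (k - 1))) / hsz k)
    (F : ℤ → ℝ)
    (hF : ∀ l : ℤ, F l = deriv φ (ε⁻¹ * (u l - u (l - 1))) -
      deriv φ (ε⁻¹ * (u (l + 1) - u l)) - ε * f l)
    (Fh : ℤ → ℝ)
    (hFh : ∀ j : ℤ, Fh j = ∑ k ∈ Finset.Icc (-K + 1) K,
      ν k * ∑ l ∈ Finset.Icc (L k - r) (L k + r), F l * ζ j l)
    (ftil : ℤ → ℝ)
    (hftil : ∀ j : ℤ, ftil j = ∑ k ∈ Finset.Icc (-K + 1) K,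
      ν k * ∑ l ∈ Finset.Icc (L k - r) (L k + r), ε * f l * ζ j l) :
    ∀ j ∈ Finset.Icc (-K + 1) K,
      Fh j = ν j * (deriv φ (Up j) - deriv φ (Up (j + 1))) - ftil j := by
  intro j hj
  have hε0 : ε ≠ 0 := hε ▸ inv_ne_zero (by exact_mod_cast (by omega : N ≠ 0))
  set σ : ℤ → ℝ := fun l ↦ deriv φ (ε⁻¹ * (u l - u (l - 1)))
  have hσ : ∀ k l : ℤ, L (k - 1) < l → l ≤ L k → σ l = deriv φ (Up k) := fun k l h₁ h₂ ↦ by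
    simp only [σ, hUp, hhsz, hu.grad_eq hε0 h₁ h₂]
  have hcluster : ∀ k : ℤ, ∑ l ∈ Icc (L k - r) (L k + r), F l * ζ j l =
      (deriv φ (Up k) - deriv φ (Up (k + 1))) * ζ j (L k) -
        ∑ l ∈ Icc (L k - r) (L k + r), ε * f l * ζ j l := fun k ↦ by
    have hFσ : ∀ l, F l * ζ j l = (σ l - σ (l + 1)) * ζ j l - ε * f l * ζ j l := fun l ↦ by
      simp only [σ, hF, add_sub_cancel_right]
      ring
    rw [sum_congr rfl fun l _ ↦ hFσ l, sum_sub_distrib, sum_cluster_sub_mul hr hnov hσ]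
  calc Fh j
      = ∑ k ∈ Icc (-K + 1) K, ν k * (deriv φ (Up k) - deriv φ (Up (k + 1))) * ζ j (L k) -
          ftil j := by
        rw [hFh, hftil, ← sum_sub_distrib]
        exact sum_congr rfl fun k _ ↦ by rw [hcluster]; ring
    _ = ν j * (deriv φ (Up j) - deriv φ (Up (j + 1))) - ftil j := by
        rw [sum_mul_nodalBasis_node hmono hLper hζ1 hζ2 hζ3 hζ4 _ hj]

/-- with external forces, the force-based cluster summation rule
gives `F_{j,h}(u_h) = ν_j (φ'(U'_j) - φ'(U'_{j+1})) - f̃_j`, where `f̃_j` is the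
cluster summation rule applied to the external forces alone. -/
theorem statement2
    (N K : ℤ) (hN : 1 ≤ N) (hK : 1 ≤ K)
    (ε : ℝ) (hε : ε = (N : ℝ)⁻¹)
    (L : ℤ → ℤ) (hmono : StrictMono L) (hL0 : L 0 = 0)
    (hLper : ∀ k : ℤ, L (k + 2 * K) = L k + 2 * N)
    (hsz : ℤ → ℝ) (hhsz : ∀ k : ℤ, hsz k = ε * ((L k - L (k - 1) : ℤ) : ℝ))
    (r : ℤ) (hr : 0 ≤ r) (hnov : ∀ k : ℤ, 2 * r + 1 ≤ L k - L (k - 1))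
    (ζ : ℤ → ℤ → ℝ)
    (hζ1 : ∀ j l : ℤ, L (j - 1) ≤ l → l ≤ L j →
      ζ j l = ((l - L (j - 1) : ℤ) : ℝ) / ((L j - L (j - 1) : ℤ) : ℝ))
    (hζ2 : ∀ j l : ℤ, L j ≤ l → l ≤ L (j + 1) →
      ζ j l = ((L (j + 1) - l : ℤ) : ℝ) / ((L (j + 1) - L j : ℤ) : ℝ))
    (hζ3 : ∀ j l : ℤ, L (j + 1) < l → l < L (j - 1) + 2 * N → ζ j l = 0)
    (hζ4 : ∀ j l : ℤ, ζ j (l + 2 * N) = ζ j l)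
    (ν : ℤ → ℝ)
    (φ : ℝ → ℝ) (hφ : Differentiable ℝ φ)
    (f : ℤ → ℝ) (hfper : ∀ l : ℤ, f (l + 2 * N) = f l)
    (u : ℤ → ℝ) (hu : IsCoarse N ε L u)
    (Up : ℤ → ℝ) (hUp : ∀ k : ℤ, Up k = (u (L k) - u (L (k - 1))) / hsz k)
    (F : ℤ → ℝ)
    (hF : ∀ l : ℤ, F l = deriv φ (ε⁻¹ * (u l - u (l - 1))) -
      deriv φ (ε⁻¹ * (u (l + 1) - u l)) - ε * f l)
    (Fh : ℤ → ℝ)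
    (hFh : ∀ j : ℤ, Fh j = ∑ k ∈ Finset.Icc (-K + 1) K,
      ν k * ∑ l ∈ Finset.Icc (L k - r) (L k + r), F l * ζ j l)
    (ftil : ℤ → ℝ)
    (hftil : ∀ j : ℤ, ftil j = ∑ k ∈ Finset.Icc (-K + 1) K,
      ν k * ∑ l ∈ Finset.Icc (L k - r) (L k + r), ε * f l * ζ j l) :
    ∀ j ∈ Finset.Icc (-K + 1) K,
      Fh j = ν j * (deriv φ (Up j) - deriv φ (Up (j + 1))) - ftil j :=
  statement2_general N K hN ε hε L hmono hLper hsz hhsz r hr hnov ζ hζ1 hζ2 hζ3 hζ4 ν φ f u hu Up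
    hUp F hF Fh hFh ftil hftil
end

section
/- Let f̄ ∈ C²(ℝ) be 2-periodic and set f_ℓ = f̄(εℓ). Let r ≥ 0 be an integer with ℓ_k − ℓ_{k−1} ≥ 2r+1 for all k, let C_k = {ℓ_k − r, …, ℓ_k + r}, and let (ν_k) be weights that sum piecewise affine functions exactly, i.e. Σ_{ℓ=−N+1}^N ζ_j(εℓ) = Σ_{k=−K+1}^K ν_k Σ_{ℓ∈C_k} ζ_j(εℓ) for all j, and that satisfy 0 ≤ ν_k ≤ C₀ (h_k + h_{k+1})/(ε(2r+1)) for all k and a constant C₀ ≥ 1. Assume the mesh is κ-regular for some κ ≥ 1. Then there is a constant C, depending only on the C² norm of f̄, on κ, and on C₀, such that |f̃_j − Σ_{ℓ=−N+1}^N ε f_ℓ ζ_j(εℓ)| ≤ C (h_j² + h_{j+1}²) for every j, where f̃_j = Σ_{k=−K+1}^K ν_k Σ_{ℓ∈C_k} ε f_ℓ ζ_j(εℓ). -/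
/-!
Subtracting the constant `f̄(εℓ_j)` from the force changes neither side of the error, because
the weights reproduce the mass `∑_ℓ ζ_j(εℓ)`. Up to periodicity, `ζ_j` is supported within
distance `h_j + h_{j+1}` of `εℓ_j`, so there the remainder is at most `B (h_j + h_{j+1})` by the
mean value theorem. The weights being nonnegative, the cluster sum and the exact sum of the
remainder are both bounded by `B (h_j + h_{j+1})` times the mass `ε ∑_ℓ ζ_j(εℓ)`, and this mass
is at most `2 (h_j + h_{j+1})`. Hence the error is at most `4 B (h_j + h_{j+1})²`.
-/

open Finset Function

theorem Function.Periodic.sum_Ico_add_eq {α M : Type*} [AddCommGroup α] [LinearOrder α]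
    [IsOrderedAddMonoid α] [Archimedean α] [LocallyFiniteOrder α] [AddCommMonoid M]
    {f : α → M} {p : α} (hf : Periodic f p) (hp : 0 < p) (a b : α) :
    ∑ x ∈ Ico a (a + p), f x = ∑ x ∈ Ico b (b + p), f x :=
  sum_nbij' (toIcoMod hp b) (toIcoMod hp a)
    (fun x _ ↦ mem_Ico.2 (toIcoMod_mem_Ico hp b x))
    (fun x _ ↦ mem_Ico.2 (toIcoMod_mem_Ico hp a x))
    (fun x hx ↦ by rw [toIcoMod_toIcoMod, toIcoMod_eq_self]; exact mem_Ico.1 hx)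
    (fun x hx ↦ by rw [toIcoMod_toIcoMod, toIcoMod_eq_self]; exact mem_Ico.1 hx)
    (fun x _ ↦ by rw [← self_sub_toIcoDiv_zsmul, hf.sub_zsmul_eq])

theorem abs_sum_clusters_sub_sum_le {α ι R : Type*} [CommRing R] [LinearOrder R]
    [IsStrictOrderedRing R] (s : Finset α) (t : Finset ι) (C : ι → Finset α) {ν : ι → R}
    {φ u : α → R} {c δ : R} (hφ : ∀ a, 0 ≤ φ a) (hν : ∀ k ∈ t, 0 ≤ ν k)
    (hexact : ∑ a ∈ s, φ a = ∑ k ∈ t, ν k * ∑ a ∈ C k, φ a)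
    (hu : ∀ a, φ a ≠ 0 → |u a - c| ≤ δ) :
    |∑ k ∈ t, ν k * ∑ a ∈ C k, u a * φ a - ∑ a ∈ s, u a * φ a| ≤
      2 * δ * ∑ a ∈ s, φ a := by
  have split (s' : Finset α) :
      ∑ a ∈ s', u a * φ a = ∑ a ∈ s', (u a - c) * φ a + c * ∑ a ∈ s', φ a := by
    rw [mul_sum, ← sum_add_distrib]
    exact sum_congr rfl fun a _ ↦ by ring
  have bound (s' : Finset α) : |∑ a ∈ s', (u a - c) * φ a| ≤ δ * ∑ a ∈ s', φ a := by
    rw [mul_sum]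
    refine (abs_sum_le_sum_abs _ _).trans (sum_le_sum fun a _ ↦ ?_)
    by_cases ha : φ a = 0
    · simp [ha]
    · rw [abs_mul, abs_of_nonneg (hφ a)]
      exact mul_le_mul_of_nonneg_right (hu a ha) (hφ a)
  have hclusters : |∑ k ∈ t, ν k * ∑ a ∈ C k, (u a - c) * φ a| ≤ δ * ∑ a ∈ s, φ a :=
    calc |∑ k ∈ t, ν k * ∑ a ∈ C k, (u a - c) * φ a|
        ≤ ∑ k ∈ t, ν k * (δ * ∑ a ∈ C k, φ a) := by
          refine (abs_sum_le_sum_abs _ _).trans (sum_le_sum fun k hk ↦ ?_)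
          rw [abs_mul, abs_of_nonneg (hν k hk)]
          exact mul_le_mul_of_nonneg_left (bound _) (hν k hk)
      _ = δ * ∑ a ∈ s, φ a := by
          rw [hexact, mul_sum]
          exact sum_congr rfl fun k _ ↦ by ring
  have hdiff : ∑ k ∈ t, ν k * ∑ a ∈ C k, u a * φ a - ∑ a ∈ s, u a * φ a =
      ∑ k ∈ t, ν k * ∑ a ∈ C k, (u a - c) * φ a - ∑ a ∈ s, (u a - c) * φ a := by
    simp_rw [split, mul_add, sum_add_distrib]
    rw [hexact, mul_sum]
    simp_rw [mul_left_comm _ c]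
    ring
  rw [hdiff]
  linarith [abs_sub _ _ |>.trans (add_le_add hclusters (bound s))]

theorem abs_mul_sub_le_of_mem_Icc {ε : ℝ} (hε : 0 ≤ ε) {L : ℤ → ℤ} (hL : Monotone L)
    {hsz : ℤ → ℝ} (hhsz : ∀ k, hsz k = ε * ((L k - L (k - 1) : ℤ) : ℝ)) {j l : ℤ}
    (h₁ : L (j - 1) ≤ l) (h₂ : l ≤ L (j + 1)) : |ε * l - ε * L j| ≤ hsz j + hsz (j + 1) := by
  have e₁ : ε * L (j - 1) ≤ ε * l := by gcongr
  have e₂ : ε * l ≤ ε * L (j + 1) := by gcongr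
  have e₃ : ε * L (j - 1) ≤ ε * L j := by gcongr; exact hL (by omega)
  have e₄ : ε * L j ≤ ε * L (j + 1) := by gcongr; exact hL (by omega)
  rw [hhsz, hhsz, add_sub_cancel_right, abs_le]
  push_cast
  constructor <;> linarith

theorem meshSize_nonneg {ε : ℝ} (hε : 0 ≤ ε) {L : ℤ → ℤ} (hL : Monotone L) {hsz : ℤ → ℝ}
    (hhsz : ∀ k, hsz k = ε * ((L k - L (k - 1) : ℤ) : ℝ)) (k : ℤ) : 0 ≤ hsz k := by
  rw [hhsz]
  exact mul_nonneg hε (Int.cast_nonneg (sub_nonneg.2 (hL (by omega))))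

theorem abs_sub_le_of_abs_deriv_le {f : ℝ → ℝ} {B : ℝ} (hf : Differentiable ℝ f)
    (hf' : ∀ x, |deriv f x| ≤ B) (x y : ℝ) : |f x - f y| ≤ B * |x - y| := by
  simpa only [Real.norm_eq_abs] using
    convex_univ.norm_image_sub_le_of_norm_deriv_le (fun z _ ↦ hf z) (fun z _ ↦ hf' z)
      (Set.mem_univ y) (Set.mem_univ x)

structure IsNodalBasis (N : ℤ) (L : ℤ → ℤ) (ζ : ℤ → ℤ → ℝ) : Prop where
  eq_of_le_of_le_left : ∀ j l : ℤ, L (j - 1) ≤ l → l ≤ L j →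
    ζ j l = ((l - L (j - 1) : ℤ) : ℝ) / ((L j - L (j - 1) : ℤ) : ℝ)
  eq_of_le_of_le_right : ∀ j l : ℤ, L j ≤ l → l ≤ L (j + 1) →
    ζ j l = ((L (j + 1) - l : ℤ) : ℝ) / ((L (j + 1) - L j : ℤ) : ℝ)
  eq_zero : ∀ j l : ℤ, L (j + 1) < l → l < L (j - 1) + 2 * N → ζ j l = 0
  periodic : ∀ j : ℤ, Periodic (ζ j) (2 * N)

namespace IsNodalBasis

variable {N : ℤ} {L : ℤ → ℤ} {ζ : ℤ → ℤ → ℝ}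

theorem mem_Icc_zero_one (hζ : IsNodalBasis N L ζ) (hL : StrictMono L) {j l : ℤ}
    (h₁ : L (j - 1) ≤ l) (h₂ : l ≤ L (j + 1)) : ζ j l ∈ Set.Icc 0 1 := by
  rcases le_total l (L j) with h | h
  · have hpos : (0 : ℝ) < ((L j - L (j - 1) : ℤ) : ℝ) := by
      exact_mod_cast sub_pos.2 (hL (sub_one_lt j))
    rw [hζ.eq_of_le_of_le_left j l h₁ h]
    exact ⟨div_nonneg (by exact_mod_cast sub_nonneg.2 h₁) hpos.le,
      div_le_one_of_le₀ (by push_cast; linarith [(Int.cast_le (R := ℝ)).2 h]) hpos.le⟩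
  · have hpos : (0 : ℝ) < ((L (j + 1) - L j : ℤ) : ℝ) := by
      exact_mod_cast sub_pos.2 (hL (lt_add_one j))
    rw [hζ.eq_of_le_of_le_right j l h h₂]
    exact ⟨div_nonneg (by exact_mod_cast sub_nonneg.2 h₂) hpos.le,
      div_le_one_of_le₀ (by push_cast; linarith [(Int.cast_le (R := ℝ)).2 h]) hpos.le⟩

theorem exists_add_zsmul_mem_Icc (hζ : IsNodalBasis N L ζ) (hN : 0 < N) {j l : ℤ}
    (h : ζ j l ≠ 0) : ∃ n : ℤ, l + n • (2 * N) ∈ Set.Icc (L (j - 1)) (L (j + 1)) := by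
  obtain ⟨n, ⟨hlo, hhi⟩, -⟩ := existsUnique_add_zsmul_mem_Ico (by omega : 0 < 2 * N) l (L (j - 1))
  refine ⟨n, hlo, not_lt.1 fun hgt ↦ h ?_⟩
  rw [← (hζ.periodic j).zsmul n l]
  exact hζ.eq_zero j _ hgt hhi

theorem nonneg (hζ : IsNodalBasis N L ζ) (hL : StrictMono L) (hN : 0 < N) (j l : ℤ) :
    0 ≤ ζ j l := by
  by_contra hneg
  obtain ⟨n, hn⟩ := hζ.exists_add_zsmul_mem_Icc hN fun h0 ↦ hneg h0.ge
  have := (hζ.mem_Icc_zero_one hL hn.1 hn.2).1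
  rw [(hζ.periodic j).zsmul n l] at this
  exact hneg this

theorem sum_Icc_le (hζ : IsNodalBasis N L ζ) (hL : StrictMono L) (hN : 0 < N) (j : ℤ) :
    ∑ l ∈ Icc (-N + 1) N, ζ j l ≤ ((L (j + 1) - L (j - 1) + 1 : ℤ) : ℝ) := by
  have hwindow : Icc (-N + 1) N = Ico (-N + 1) (-N + 1 + 2 * N) := by
    rw [show -N + 1 + 2 * N = N + 1 by ring, Ico_add_one_right_eq_Icc]
  have hsupp : ∀ l ∈ Ico (L (j - 1)) (L (j - 1) + 2 * N), ζ j l ≠ 0 →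
      l ∈ Icc (L (j - 1)) (L (j + 1)) := fun l hl hne ↦ by
    rw [mem_Ico] at hl
    exact mem_Icc.2 ⟨hl.1, not_lt.1 fun hgt ↦ hne (hζ.eq_zero j l hgt hl.2)⟩
  calc ∑ l ∈ Icc (-N + 1) N, ζ j l
      = ∑ l ∈ Ico (L (j - 1)) (L (j - 1) + 2 * N), ζ j l := by
        rw [hwindow, (hζ.periodic j).sum_Ico_add_eq (by omega)]
    _ ≤ ∑ l ∈ Icc (L (j - 1)) (L (j + 1)), ζ j l := by
        rw [← sum_filter_ne_zero]
        refine sum_le_sum_of_subset_of_nonneg (fun l hl ↦ ?_) fun l _ _ ↦ hζ.nonneg hL hN j l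
        rw [mem_filter] at hl
        exact hsupp l hl.1 hl.2
    _ ≤ #(Icc (L (j - 1)) (L (j + 1))) • (1 : ℝ) := sum_le_card_nsmul _ _ _ fun l hl ↦
        (hζ.mem_Icc_zero_one hL (mem_Icc.1 hl).1 (mem_Icc.1 hl).2).2
    _ = ((L (j + 1) - L (j - 1) + 1 : ℤ) : ℝ) := by
        rw [nsmul_one, ← Int.cast_natCast, Int.card_Icc_of_le]
        · ring_nf
        · have := hL.monotone (show j - 1 ≤ j + 1 by omega); omega

theorem abs_sub_le_of_ne_zero (hζ : IsNodalBasis N L ζ) (hN : 0 < N) {u : ℤ → ℝ}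
    (hu : Periodic u (2 * N)) {j : ℤ} {δ : ℝ}
    (hδ : ∀ l, L (j - 1) ≤ l → l ≤ L (j + 1) → |u l - u (L j)| ≤ δ) {l : ℤ} (hl : ζ j l ≠ 0) :
    |u l - u (L j)| ≤ δ := by
  obtain ⟨n, hn₁, hn₂⟩ := hζ.exists_add_zsmul_mem_Icc hN hl
  rw [← hu.zsmul n l]
  exact hδ _ hn₁ hn₂

theorem mul_sum_Icc_le (hζ : IsNodalBasis N L ζ) (hL : StrictMono L) (hN : 0 < N) {ε : ℝ}
    (hε : 0 < ε) {hsz : ℤ → ℝ} (hhsz : ∀ k, hsz k = ε * ((L k - L (k - 1) : ℤ) : ℝ)) (j : ℤ) :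
    ε * ∑ l ∈ Icc (-N + 1) N, ζ j l ≤ 2 * (hsz j + hsz (j + 1)) := by
  have hmass := mul_le_mul_of_nonneg_left (hζ.sum_Icc_le hL hN j) hε.le
  have hgap₁ : ((L (j - 1) : ℤ) : ℝ) + 1 ≤ L j := by exact_mod_cast hL (sub_one_lt j)
  have hgap₂ : ((L j : ℤ) : ℝ) + 1 ≤ L (j + 1) := by exact_mod_cast hL (lt_add_one j)
  rw [hhsz, hhsz, add_sub_cancel_right]
  push_cast at hmass ⊢
  nlinarith

end IsNodalBasis

theorem statement3_general (κ C₀ B : ℝ) (hB : 0 ≤ B) :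
    ∃ C : ℝ, 0 < C ∧
      ∀ fbar : ℝ → ℝ, ContDiff ℝ 2 fbar → (∀ x : ℝ, fbar (x + 2) = fbar x) →
        (∀ x : ℝ, |fbar x| ≤ B) → (∀ x : ℝ, |deriv fbar x| ≤ B) →
        (∀ x : ℝ, |deriv (deriv fbar) x| ≤ B) →
      ∀ (N K r : ℤ) (ε : ℝ) (L : ℤ → ℤ) (hsz : ℤ → ℝ) (ζ : ℤ → ℤ → ℝ) (ν : ℤ → ℝ),
        1 ≤ N → 1 ≤ K → 0 ≤ r → ε = (N : ℝ)⁻¹ →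
        StrictMono L → L 0 = 0 → (∀ k : ℤ, L (k + 2 * K) = L k + 2 * N) →
        (∀ k : ℤ, hsz k = ε * ((L k - L (k - 1) : ℤ) : ℝ)) →
        (∀ k : ℤ, 2 * r + 1 ≤ L k - L (k - 1)) →
        (∀ k : ℤ, κ⁻¹ * hsz (k - 1) ≤ hsz k ∧ hsz k ≤ κ * hsz (k - 1)) →
        (∀ j l : ℤ, L (j - 1) ≤ l → l ≤ L j →
          ζ j l = ((l - L (j - 1) : ℤ) : ℝ) / ((L j - L (j - 1) : ℤ) : ℝ)) →
        (∀ j l : ℤ, L j ≤ l → l ≤ L (j + 1) →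
          ζ j l = ((L (j + 1) - l : ℤ) : ℝ) / ((L (j + 1) - L j : ℤ) : ℝ)) →
        (∀ j l : ℤ, L (j + 1) < l → l < L (j - 1) + 2 * N → ζ j l = 0) →
        (∀ j l : ℤ, ζ j (l + 2 * N) = ζ j l) →
        -- the weights sum all nodal basis functions exactly
        (∀ j ∈ Finset.Icc (-K + 1) K,
          ∑ l ∈ Finset.Icc (-N + 1) N, ζ j l =
            ∑ k ∈ Finset.Icc (-K + 1) K,
              ν k * ∑ l ∈ Finset.Icc (L k - r) (L k + r), ζ j l) →
        -- size bound on the weights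
        (∀ k ∈ Finset.Icc (-K + 1) K,
          0 ≤ ν k ∧ ν k ≤ C₀ * (hsz k + hsz (k + 1)) / (ε * (2 * (r : ℝ) + 1))) →
        ∀ j ∈ Finset.Icc (-K + 1) K,
          |(∑ k ∈ Finset.Icc (-K + 1) K, ν k *
              ∑ l ∈ Finset.Icc (L k - r) (L k + r), ε * fbar (ε * (l : ℝ)) * ζ j l) -
            ∑ l ∈ Finset.Icc (-N + 1) N, ε * fbar (ε * (l : ℝ)) * ζ j l| ≤
          C * (hsz j ^ 2 + hsz (j + 1) ^ 2) := by
  refine ⟨8 * B + 1, by positivity, ?_⟩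
  rintro fbar hf hfper - hf' - N K r ε L hsz ζ ν hN - - hε hL - - hhsz - - hζl hζr hζ0 hζper
    hexact hν j hj
  have hζ : IsNodalBasis N L ζ := ⟨hζl, hζr, hζ0, hζper⟩
  have hN0 : 0 < N := by omega
  have hε0 : 0 < ε := by rw [hε]; exact inv_pos.2 (by exact_mod_cast hN0)
  have hεN : ε * (2 * N) = 2 := by rw [hε]; field_simp
  have hsample : Periodic (fun l : ℤ ↦ ε * fbar (ε * l)) (2 * N) := fun l ↦ by
    show ε * fbar (ε * ((l + 2 * N : ℤ) : ℝ)) = ε * fbar (ε * l)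
    rw [Int.cast_add, mul_add, Int.cast_mul, Int.cast_ofNat, hεN, hfper]
  have hlip (x y : ℝ) : |fbar x - fbar y| ≤ B * |x - y| :=
    abs_sub_le_of_abs_deriv_le (hf.differentiable (by norm_num)) hf' x y
  have hclose : ∀ l, ζ j l ≠ 0 →
      |ε * fbar (ε * l) - ε * fbar (ε * L j)| ≤ ε * B * (hsz j + hsz (j + 1)) :=
    fun l ↦ hζ.abs_sub_le_of_ne_zero hN0 hsample fun l h₁ h₂ ↦ by
      rw [← mul_sub, abs_mul, abs_of_pos hε0, mul_assoc]
      gcongr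
      exact (hlip _ _).trans
        (by gcongr; exact abs_mul_sub_le_of_mem_Icc hε0.le hL.monotone hhsz h₁ h₂)
  have hsz_nonneg := meshSize_nonneg hε0.le hL.monotone hhsz
  have hs : 0 ≤ hsz j + hsz (j + 1) := add_nonneg (hsz_nonneg j) (hsz_nonneg (j + 1))
  have hmass := hζ.mul_sum_Icc_le hL hN0 hε0 hhsz j
  calc _ ≤ 2 * (ε * B * (hsz j + hsz (j + 1))) * ∑ l ∈ Icc (-N + 1) N, ζ j l :=
        abs_sum_clusters_sub_sum_le _ _ (fun k ↦ Icc (L k - r) (L k + r))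
          (hζ.nonneg hL hN0 j) (fun k hk ↦ (hν k hk).1) (hexact j hj) hclose
    _ ≤ (8 * B + 1) * (hsz j ^ 2 + hsz (j + 1) ^ 2) := by
        nlinarith [mul_nonneg (mul_nonneg hB hs) (sub_nonneg.2 hmass),
          mul_nonneg hB (sq_nonneg (hsz j - hsz (j + 1)))]

/-- for smooth 2-periodic external forces and weights which sum
piecewise affine functions exactly (and obey the natural size bound), the
cluster summation of the external forces agrees with the exact sum up to an
error of order `h_j² + h_{j+1}²`, with a constant depending only on the C²
bound `B` of `f̄`, the mesh regularity `κ`, and the weight bound `C₀`. -/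
theorem statement3 (κ C₀ B : ℝ) (hκ : 1 ≤ κ) (hC₀ : 1 ≤ C₀) (hB : 0 ≤ B) :
    ∃ C : ℝ, 0 < C ∧
      ∀ fbar : ℝ → ℝ, ContDiff ℝ 2 fbar → (∀ x : ℝ, fbar (x + 2) = fbar x) →
        (∀ x : ℝ, |fbar x| ≤ B) → (∀ x : ℝ, |deriv fbar x| ≤ B) →
        (∀ x : ℝ, |deriv (deriv fbar) x| ≤ B) →
      ∀ (N K r : ℤ) (ε : ℝ) (L : ℤ → ℤ) (hsz : ℤ → ℝ) (ζ : ℤ → ℤ → ℝ) (ν : ℤ → ℝ),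
        1 ≤ N → 1 ≤ K → 0 ≤ r → ε = (N : ℝ)⁻¹ →
        StrictMono L → L 0 = 0 → (∀ k : ℤ, L (k + 2 * K) = L k + 2 * N) →
        (∀ k : ℤ, hsz k = ε * ((L k - L (k - 1) : ℤ) : ℝ)) →
        (∀ k : ℤ, 2 * r + 1 ≤ L k - L (k - 1)) →
        (∀ k : ℤ, κ⁻¹ * hsz (k - 1) ≤ hsz k ∧ hsz k ≤ κ * hsz (k - 1)) →
        (∀ j l : ℤ, L (j - 1) ≤ l → l ≤ L j →
          ζ j l = ((l - L (j - 1) : ℤ) : ℝ) / ((L j - L (j - 1) : ℤ) : ℝ)) →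
        (∀ j l : ℤ, L j ≤ l → l ≤ L (j + 1) →
          ζ j l = ((L (j + 1) - l : ℤ) : ℝ) / ((L (j + 1) - L j : ℤ) : ℝ)) →
        (∀ j l : ℤ, L (j + 1) < l → l < L (j - 1) + 2 * N → ζ j l = 0) →
        (∀ j l : ℤ, ζ j (l + 2 * N) = ζ j l) →
        -- the weights sum all nodal basis functions exactly
        (∀ j ∈ Finset.Icc (-K + 1) K,
          ∑ l ∈ Finset.Icc (-N + 1) N, ζ j l =
            ∑ k ∈ Finset.Icc (-K + 1) K,
              ν k * ∑ l ∈ Finset.Icc (L k - r) (L k + r), ζ j l) →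
        -- size bound on the weights
        (∀ k ∈ Finset.Icc (-K + 1) K,
          0 ≤ ν k ∧ ν k ≤ C₀ * (hsz k + hsz (k + 1)) / (ε * (2 * (r : ℝ) + 1))) →
        ∀ j ∈ Finset.Icc (-K + 1) K,
          |(∑ k ∈ Finset.Icc (-K + 1) K, ν k *
              ∑ l ∈ Finset.Icc (L k - r) (L k + r), ε * fbar (ε * (l : ℝ)) * ζ j l) -
            ∑ l ∈ Finset.Icc (-N + 1) N, ε * fbar (ε * (l : ℝ)) * ζ j l| ≤
          C * (hsz j ^ 2 + hsz (j + 1) ^ 2) :=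
  statement3_general κ C₀ B hB
end

section
/- Assume the harmonic potential φ(t) = t²/2 and a uniform mesh: ℓ_k = kQ for an integer Q ≥ 2r+1, so h_k = h = εQ for all k, and weights ν_k = h/(ε(2r+1)). Let f̄ ∈ C²(ℝ) be 2-periodic with Σ_{ℓ=−N+1}^N f̄(εℓ) = 0 and set f_ℓ = f̄(εℓ). Let ū_h ∈ X_h solve the exact constrained equilibrium equations Ū'_k − Ū'_{k+1} = f[ζ_k] for all k (where f[ζ_k] = Σ_{ℓ=−N+1}^N ε f_ℓ ζ_k(εℓ)), and let u_h ∈ X_h solve the force-based cluster equations ν_k (U'_k − U'_{k+1}) = f̃_k for all k, where f̃_j = Σ_k ν_k Σ_{ℓ∈C_k} ε f_ℓ ζ_j(εℓ) with C_k = {ℓ_k − r, …, ℓ_k + r}. Then there is a constant C depending only on f̄ such that max_k |U'_k − (ε(2r+1)/h) Ū'_k| ≤ C (ε(2r+1)/h) h², i.e. the cluster solution equals ε(2r+1)/h times the exact constrained solution up to a relative error of order h². -/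
open Finset


open Finset

/-- second-order Taylor bound -/
lemma aux_taylor (f : ℝ → ℝ) (hf : ContDiff ℝ 2 f) (M : ℝ)
    (hM : ∀ t, |deriv (deriv f) t| ≤ M) (x y : ℝ) :
    |f y - f x - deriv f x * (y - x)| ≤ M * (y - x) ^ 2 := by
  have hf' : ContDiff ℝ (1 + 1) f := by norm_num at hf ⊢; exact hf
  have hf1 : ContDiff ℝ 1 (deriv f) := (contDiff_succ_iff_deriv.mp hf').2.2
  have hfd : Differentiable ℝ f := (contDiff_succ_iff_deriv.mp hf').1
  have hfd1 : Differentiable ℝ (deriv f) := hf1.differentiable one_ne_zero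
  -- first: |deriv f t - deriv f x| ≤ M * |t - x| for all t
  have key : ∀ t : ℝ, |deriv f t - deriv f x| ≤ M * |t - x| := by
    intro t
    have := Convex.norm_image_sub_le_of_norm_hasDerivWithin_le
      (f := deriv f) (f' := deriv (deriv f)) (s := Set.univ) (C := M)
      (fun u _ => (hfd1 u).hasDerivAt.hasDerivWithinAt)
      (fun u _ => hM u) convex_univ (Set.mem_univ x) (Set.mem_univ t)
    simpa [Real.norm_eq_abs] using this
  -- now apply MVT to g t = f t - deriv f x * t on segment between x and y
  set g : ℝ → ℝ := fun t => f t - deriv f x * t with hg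
  have hgd : ∀ t : ℝ, HasDerivAt g (deriv f t - deriv f x) t := by
    intro t
    exact ((hfd t).hasDerivAt.sub ((hasDerivAt_id t).const_mul (deriv f x))).congr_deriv
      (by ring)
  have hs : Convex ℝ (Set.Icc (min x y) (max x y)) := convex_Icc _ _
  have hxmem : x ∈ Set.Icc (min x y) (max x y) := ⟨min_le_left _ _, le_max_left _ _⟩
  have hymem : y ∈ Set.Icc (min x y) (max x y) := ⟨min_le_right _ _, le_max_right _ _⟩
  have bound : ∀ t ∈ Set.Icc (min x y) (max x y), ‖deriv f t - deriv f x‖ ≤ M * |y - x| := by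
    intro t ht
    have h1 : |deriv f t - deriv f x| ≤ M * |t - x| := key t
    have hM0 : 0 ≤ M := le_trans (abs_nonneg _) (hM x)
    have h2 : |t - x| ≤ |y - x| := by
      rcases ht with ⟨h3, h4⟩
      rcases le_total x y with h | h
      · rw [min_eq_left h] at h3; rw [max_eq_right h] at h4
        rw [abs_sub_le_iff]; constructor <;> [skip; skip] <;>
          · rw [abs_of_nonneg (by linarith)]; linarith
      · rw [min_eq_right h] at h3; rw [max_eq_left h] at h4
        rw [abs_sub_le_iff]
        constructor <;> · rw [abs_of_nonpos (by linarith), neg_sub]; linarith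
    calc ‖deriv f t - deriv f x‖ = |deriv f t - deriv f x| := rfl
      _ ≤ M * |t - x| := h1
      _ ≤ M * |y - x| := by nlinarith
  have := Convex.norm_image_sub_le_of_norm_hasDerivWithin_le
      (f := g) (f' := fun t => deriv f t - deriv f x) (C := M * |y - x|)
      (fun t _ => (hgd t).hasDerivWithinAt) bound hs hxmem hymem
  have h2 : ‖g y - g x‖ = |f y - f x - deriv f x * (y - x)| := by
    simp [hg, Real.norm_eq_abs]; ring_nf
  rw [h2] at this
  calc |f y - f x - deriv f x * (y - x)| ≤ M * |y - x| * ‖y - x‖ := this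
    _ = M * (y - x) ^ 2 := by
        rw [Real.norm_eq_abs, mul_assoc, ← abs_mul, ← sq_abs ((y : ℝ) - x), sq, abs_mul]


lemma aux_deriv_periodic (f : ℝ → ℝ) (hfper : Function.Periodic f 2) :
    Function.Periodic (deriv f) 2 := by
  intro x
  have : deriv (fun y => f (y + 2)) x = deriv f (x + 2) := by
    simpa using deriv_comp_add_const f 2 x
  rw [← this]
  congr 1
  ext y
  exact hfper y

lemma aux_bound (f : ℝ → ℝ) (hf : ContDiff ℝ 2 f) (hfper : Function.Periodic f 2) :
    ∃ M : ℝ, 0 ≤ M ∧ ∀ t, |deriv (deriv f) t| ≤ M := by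
  have hf' : ContDiff ℝ (1 + 1) f := by norm_num at hf ⊢; exact hf
  have hf1 : ContDiff ℝ 1 (deriv f) := (contDiff_succ_iff_deriv.mp hf').2.2
  have hf1' : ContDiff ℝ (0 + 1) (deriv f) := by norm_num at hf1 ⊢; exact hf1
  have hcont : Continuous (deriv (deriv f)) :=
    ((contDiff_succ_iff_deriv.mp hf1').2.2).continuous
  have hper2 : Function.Periodic (deriv (deriv f)) 2 :=
    aux_deriv_periodic _ (aux_deriv_periodic _ hfper)
  -- max on [0,2]
  obtain ⟨z, _, hz⟩ := (isCompact_Icc (a := (0:ℝ)) (b := 2)).exists_isMaxOn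
    (Set.nonempty_Icc.2 (by norm_num)) ((hcont.abs).continuousOn)
  refine ⟨|deriv (deriv f) z|, abs_nonneg _, fun t => ?_⟩
  obtain ⟨y, hy, hty⟩ := hper2.exists_mem_Ico₀ (by norm_num) t
  rw [hty]
  exact hz (Set.mem_Icc.2 ⟨hy.1, hy.2.le⟩)

open Finset

lemma aux_shift (g : ℤ → ℝ) (P : ℤ) (hP : 0 < P) (hg : ∀ l, g (l + P) = g l) (a b : ℤ) :
    ∑ l ∈ Icc (a + 1) (a + P), g l = ∑ l ∈ Icc (b + 1) (b + P), g l := by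
  have step : ∀ c : ℤ, ∑ l ∈ Icc (c + 1 + 1) (c + 1 + P), g l = ∑ l ∈ Icc (c + 1) (c + P), g l := by
    intro c
    have h1 : Icc (c + 1) (c + P) = insert (c + 1) (Icc (c + 2) (c + P)) := by
      ext x; simp only [mem_Icc, mem_insert]; omega
    have h2 : Icc (c + 1 + 1) (c + 1 + P) = insert (c + 1 + P) (Icc (c + 2) (c + P)) := by
      ext x; simp only [mem_Icc, mem_insert]; omega
    rw [h1, h2, sum_insert (by simp only [mem_Icc]; omega), sum_insert (by simp only [mem_Icc]; omega)]
    have : g (c + 1 + P) = g (c + 1) := hg (c + 1)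
    rw [this]
  suffices h : ∀ c : ℤ, ∑ l ∈ Icc (b + c + 1) (b + c + P), g l = ∑ l ∈ Icc (b + 1) (b + P), g l by
    have := h (a - b)
    simpa [show b + (a - b) = a by ring] using this
  intro c
  induction c using Int.induction_on with
  | zero => simp
  | succ n ih =>
      have := step (b + n)
      rw [show b + (n + 1 : ℤ) = b + n + 1 by ring]
      rw [this, ih]
  | pred n ih =>
      have h2 := step (b + (-(n:ℤ) - 1))
      rw [← h2, show b + (-(n:ℤ) - 1) + 1 + 1 = b + -(n:ℤ) + 1 by ring,
        show b + (-(n:ℤ) - 1) + 1 + P = b + -(n:ℤ) + P by ring]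
      exact ih

open Finset

lemma aux_mass (n : ℤ) (hn : 0 ≤ n) : ∑ m ∈ Icc (-n) n, (n - |m|) = n ^ 2 := by
  obtain ⟨k, rfl⟩ := Int.eq_ofNat_of_zero_le hn
  clear hn
  induction k with
  | zero => simp
  | succ k ih =>
      set n : ℤ := (k : ℤ) with hn
      have hcast : ((k+1 : ℕ) : ℤ) = n + 1 := by push_cast [hn]; ring
      rw [hcast]
      have h1 : Icc (-(n+1)) (n+1) = insert (-(n+1)) (insert (n+1) (Icc (-n) n)) := by
        ext x; simp only [mem_Icc, mem_insert]; omega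
      rw [h1, sum_insert (by simp only [mem_insert, mem_Icc]; omega),
        sum_insert (by simp only [mem_Icc]; omega)]
      have h2 : ∑ m ∈ Icc (-n) n, (n + 1 - |m|) = (∑ m ∈ Icc (-n) n, (n - |m|)) + (2*n + 1) := by
        have hc : ((Icc (-n) n).card : ℤ) = 2*n + 1 := by
          rw [Int.card_Icc]; omega
        calc ∑ m ∈ Icc (-n) n, (n + 1 - |m|) = ∑ m ∈ Icc (-n) n, ((n - |m|) + 1) := by
              apply sum_congr rfl; intro m _; ring
          _ = (∑ m ∈ Icc (-n) n, (n - |m|)) + ((Icc (-n) n).card : ℤ) := by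
              rw [sum_add_distrib, sum_const]; simp
          _ = _ := by rw [hc]
      rw [h2, ih]
      have ha : |(-(n+1))| = n + 1 := by rw [abs_neg]; exact abs_of_nonneg (by omega)
      have hb : |n+1| = n + 1 := abs_of_nonneg (by omega)
      rw [ha, hb]; ring

lemma aux_odd (n : ℤ) (g : ℤ → ℝ) (hodd : ∀ m, g (-m) = -g m) :
    ∑ m ∈ Icc (-n) n, g m = 0 := by
  have h : ∑ m ∈ Icc (-n) n, g m = ∑ m ∈ Icc (-n) n, g (-m) := by
    apply sum_nbij' (i := fun m => -m) (j := fun m => -m)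
    · intro a ha; simp only [mem_Icc] at *; omega
    · intro a ha; simp only [mem_Icc] at *; omega
    · intro a _; omega
    · intro a _; omega
    · intro a _; rw [neg_neg]
  have h2 : ∑ m ∈ Icc (-n) n, g (-m) = -∑ m ∈ Icc (-n) n, g m := by
    rw [← sum_neg_distrib]
    exact sum_congr rfl fun m _ => hodd m
  rw [h2] at h; linarith

open Finset

section
variable (N Q : ℤ) (ζ : ℤ → ℤ → ℝ)

lemma zeta_mid (hQ1 : 1 ≤ Q)
    (hζL : ∀ j l : ℤ, (j - 1) * Q ≤ l → l ≤ j * Q →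
      ζ j l = ((l - (j - 1) * Q : ℤ) : ℝ) / ((j * Q - (j - 1) * Q : ℤ) : ℝ))
    (hζR : ∀ j l : ℤ, j * Q ≤ l → l ≤ (j + 1) * Q →
      ζ j l = (((j + 1) * Q - l : ℤ) : ℝ) / (((j + 1) * Q - j * Q : ℤ) : ℝ))
    (k m : ℤ) (h1 : -Q ≤ m) (h2 : m ≤ Q) :
    ζ k (k * Q + m) = ((Q - |m| : ℤ) : ℝ) / ((Q : ℤ) : ℝ) := by
  have e1 : (k - 1) * Q = k * Q - Q := by ring
  have e2 : (k + 1) * Q = k * Q + Q := by ring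
  rcases le_total m 0 with h | h
  · rw [hζL k (k * Q + m) (by omega) (by omega)]
    rw [show (k * Q + m - (k - 1) * Q : ℤ) = Q - |m| by rw [abs_of_nonpos h]; ring,
      show (k * Q - (k - 1) * Q : ℤ) = Q by ring]
  · rw [hζR k (k * Q + m) (by omega) (by omega)]
    rw [show ((k + 1) * Q - (k * Q + m) : ℤ) = Q - |m| by rw [abs_of_nonneg h]; ring,
      show ((k + 1) * Q - k * Q : ℤ) = Q by ring]

lemma zeta_zero_wrap (hN : 0 < N)
    (hζ0 : ∀ j l : ℤ, (j + 1) * Q < l → l < (j - 1) * Q + 2 * N → ζ j l = 0)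
    (hζp : ∀ j l : ℤ, ζ j (l + 2 * N) = ζ j l)
    (k l : ℤ) (h1 : (k + 1) * Q - 2 * N < l) (h2 : l < (k - 1) * Q) :
    ζ k l = 0 := by
  rw [← hζp k l]
  exact hζ0 k (l + 2 * N) (by omega) (by omega)
end

lemma F_red (fbar : ℝ → ℝ) (N K Q : ℤ) (ε : ℝ) (ζ : ℤ → ℤ → ℝ)
    (hK : 1 ≤ K) (hQ1 : 1 ≤ Q) (hNKQ : N = K * Q)
    (hfp : ∀ l : ℤ, fbar (ε * ((l + 2 * N : ℤ) : ℝ)) = fbar (ε * (l : ℝ)))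
    (hζL : ∀ j l : ℤ, (j - 1) * Q ≤ l → l ≤ j * Q →
      ζ j l = ((l - (j - 1) * Q : ℤ) : ℝ) / ((j * Q - (j - 1) * Q : ℤ) : ℝ))
    (hζR : ∀ j l : ℤ, j * Q ≤ l → l ≤ (j + 1) * Q →
      ζ j l = (((j + 1) * Q - l : ℤ) : ℝ) / (((j + 1) * Q - j * Q : ℤ) : ℝ))
    (hζ0 : ∀ j l : ℤ, (j + 1) * Q < l → l < (j - 1) * Q + 2 * N → ζ j l = 0)
    (hζp : ∀ j l : ℤ, ζ j (l + 2 * N) = ζ j l) (k : ℤ) :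
    ∑ l ∈ Icc (-N + 1) N, ε * fbar (ε * (l : ℝ)) * ζ k l
      = ∑ m ∈ Icc (-Q) Q,
          ε * fbar (ε * ((k * Q + m : ℤ) : ℝ)) * (((Q - |m| : ℤ) : ℝ) / ((Q : ℤ) : ℝ)) := by
  have hNpos : 0 < N := by nlinarith
  have hQN : Q ≤ N := by nlinarith
  -- window shift
  have hper : ∀ l : ℤ, ε * fbar (ε * ((l + 2 * N : ℤ) : ℝ)) * ζ k (l + 2 * N)
      = ε * fbar (ε * (l : ℝ)) * ζ k l := by
    intro l; rw [hfp l, hζp k l]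
  have h1 : ∑ l ∈ Icc (-N + 1) N, ε * fbar (ε * (l : ℝ)) * ζ k l
      = ∑ l ∈ Icc ((k - 1) * Q + 1) ((k - 1) * Q + 2 * N),
          ε * fbar (ε * (l : ℝ)) * ζ k l := by
    have := aux_shift (fun l => ε * fbar (ε * (l : ℝ)) * ζ k l) (2 * N) (by omega)
      hper (-N) ((k - 1) * Q)
    rw [show (-N + 2 * N : ℤ) = N by ring] at this
    exact this
  rw [h1]
  -- restrict to the support
  have h2 : ∑ l ∈ Icc ((k - 1) * Q + 1) ((k - 1) * Q + 2 * N),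
        ε * fbar (ε * (l : ℝ)) * ζ k l
      = ∑ l ∈ Icc ((k - 1) * Q + 1) ((k + 1) * Q), ε * fbar (ε * (l : ℝ)) * ζ k l := by
    symm
    apply sum_subset
    · intro x hx; simp only [mem_Icc] at *
      constructor
      · exact hx.1
      · have : (k + 1) * Q = (k - 1) * Q + 2 * Q := by ring
        omega
    · intro x hx hnot
      simp only [mem_Icc] at hx hnot
      have hx1 : (k + 1) * Q < x := by omega
      rcases lt_or_eq_of_le hx.2 with h | h
      · rw [hζ0 k x hx1 h, mul_zero]
      · have : ζ k x = 0 := by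
          rw [h, hζp k ((k - 1) * Q)]
          rw [hζL k ((k - 1) * Q) le_rfl (by nlinarith)]
          simp
        rw [this, mul_zero]
  rw [h2]
  -- reindex
  have h3 : Icc ((k - 1) * Q + 1) ((k + 1) * Q)
      = (Icc (-Q + 1) Q).map (addLeftEmbedding (k * Q)) := by
    rw [Finset.map_add_left_Icc]
    congr 1 <;> ring
  rw [h3, sum_map]
  have h4 : ∀ m ∈ Icc (-Q + 1) Q,
      ε * fbar (ε * ((addLeftEmbedding (k * Q) m : ℤ) : ℝ)) * ζ k (addLeftEmbedding (k * Q) m)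
        = ε * fbar (ε * ((k * Q + m : ℤ) : ℝ)) * (((Q - |m| : ℤ) : ℝ) / ((Q : ℤ) : ℝ)) := by
    intro m hm
    simp only [mem_Icc] at hm
    rw [addLeftEmbedding_apply]
    rw [zeta_mid Q ζ hQ1 hζL hζR k m (by omega) hm.2]
  rw [sum_congr rfl h4]
  apply sum_subset
  · intro x hx; simp only [mem_Icc] at hx ⊢; omega
  · intro x hx hnot
    simp only [mem_Icc] at hx hnot
    have : x = -Q := by omega
    subst this
    rw [abs_of_nonpos (by omega)]
    simp

open Finset

lemma g_red (fbar : ℝ → ℝ) (N K Q r : ℤ) (ε : ℝ) (ζ : ℤ → ℤ → ℝ)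
    (hK : 1 ≤ K) (hr : 0 ≤ r) (hQ : 2 * r + 1 ≤ Q) (hNKQ : N = K * Q)
    (hfp : ∀ l : ℤ, fbar (ε * ((l + 2 * N : ℤ) : ℝ)) = fbar (ε * (l : ℝ)))
    (hζL : ∀ j l : ℤ, (j - 1) * Q ≤ l → l ≤ j * Q →
      ζ j l = ((l - (j - 1) * Q : ℤ) : ℝ) / ((j * Q - (j - 1) * Q : ℤ) : ℝ))
    (hζR : ∀ j l : ℤ, j * Q ≤ l → l ≤ (j + 1) * Q →
      ζ j l = (((j + 1) * Q - l : ℤ) : ℝ) / (((j + 1) * Q - j * Q : ℤ) : ℝ))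
    (hζ0 : ∀ j l : ℤ, (j + 1) * Q < l → l < (j - 1) * Q + 2 * N → ζ j l = 0)
    (hζp : ∀ j l : ℤ, ζ j (l + 2 * N) = ζ j l) (k : ℤ) :
    ∑ k' ∈ Icc (-K + 1) K, ∑ l ∈ Icc (k' * Q - r) (k' * Q + r),
        ε * fbar (ε * (l : ℝ)) * ζ k l
      = ∑ m ∈ Icc (-r) r,
          (ε * fbar (ε * ((k * Q + m - Q : ℤ) : ℝ)) * (((max m 0 : ℤ) : ℝ) / ((Q : ℤ) : ℝ))
          + ε * fbar (ε * ((k * Q + m : ℤ) : ℝ)) * (((Q - |m| : ℤ) : ℝ) / ((Q : ℤ) : ℝ))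
          + ε * fbar (ε * ((k * Q + m + Q : ℤ) : ℝ)) * (((max (-m) 0 : ℤ) : ℝ) / ((Q : ℤ) : ℝ))) := by
  have hQ1 : 1 ≤ Q := by omega
  set t : ℤ → ℝ := fun k' => ∑ l ∈ Icc (k' * Q - r) (k' * Q + r),
    ε * fbar (ε * (l : ℝ)) * ζ k l with ht
  have reindex : ∀ (c : ℤ) (G : ℤ → ℝ),
      ∑ l ∈ Icc (c - r) (c + r), G l = ∑ m ∈ Icc (-r) r, G (c + m) := by
    intro c G
    rw [show Icc (c - r) (c + r) = (Icc (-r) r).map (addLeftEmbedding c) by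
      rw [Finset.map_add_left_Icc]; congr 1 <;> ring, sum_map]
    apply sum_congr rfl; intro m _; rw [addLeftEmbedding_apply]
  -- periodicity of t
  have htper : ∀ k' : ℤ, t (k' + 2 * K) = t k' := by
    intro k'
    show ∑ l ∈ Icc ((k' + 2 * K) * Q - r) ((k' + 2 * K) * Q + r), ε * fbar (ε * (l : ℝ)) * ζ k l
      = ∑ l ∈ Icc (k' * Q - r) (k' * Q + r), ε * fbar (ε * (l : ℝ)) * ζ k l
    have e1 : (k' + 2 * K) * Q - r = k' * Q - r + 2 * N := by rw [hNKQ]; ring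
    have e2 : (k' + 2 * K) * Q + r = k' * Q + r + 2 * N := by rw [hNKQ]; ring
    rw [e1, e2, show Icc (k' * Q - r + 2 * N) (k' * Q + r + 2 * N)
      = (Icc (k' * Q - r) (k' * Q + r)).map (addLeftEmbedding (2 * N)) by
        rw [Finset.map_add_left_Icc]; congr 1 <;> ring, sum_map]
    apply sum_congr rfl; intro l _
    rw [addLeftEmbedding_apply, show 2 * N + l = l + 2 * N by ring, hfp l, hζp k l]
  -- shift the k'-window
  have hshift : ∑ k' ∈ Icc (-K + 1) K, t k' = ∑ k' ∈ Icc (k - 1) (k - 2 + 2 * K), t k' := by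
    have := aux_shift t (2 * K) (by omega) htper (-K) (k - 2)
    rw [show (-K + 2 * K : ℤ) = K by ring, show (k - 2 + 1 : ℤ) = k - 1 by ring] at this
    exact this
  -- evaluation of t k
  have htk : t k = ∑ m ∈ Icc (-r) r,
      ε * fbar (ε * ((k * Q + m : ℤ) : ℝ)) * (((Q - |m| : ℤ) : ℝ) / ((Q : ℤ) : ℝ)) := by
    rw [ht]
    simp only
    rw [reindex (k * Q) (fun l => ε * fbar (ε * (l : ℝ)) * ζ k l)]
    apply sum_congr rfl; intro m hm
    simp only [mem_Icc] at hm
    rw [zeta_mid Q ζ hQ1 hζL hζR k m (by omega) (by omega)]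
  rw [hshift]
  by_cases hK1 : K = 1
  · -- case K = 1
    subst hK1
    have hNQ : N = Q := by omega
    rw [show (k - 2 + 2 * 1 : ℤ) = k by ring, show Icc (k - 1) k = {k - 1, k} by
      ext x; simp only [mem_Icc, mem_insert, mem_singleton]; omega,
      sum_pair (by omega : k - 1 ≠ k)]
    have htk1 : t (k - 1) = ∑ m ∈ Icc (-r) r,
        (ε * fbar (ε * ((k * Q + m - Q : ℤ) : ℝ)) * (((max m 0 : ℤ) : ℝ) / ((Q : ℤ) : ℝ))
        + ε * fbar (ε * ((k * Q + m + Q : ℤ) : ℝ)) * (((max (-m) 0 : ℤ) : ℝ) / ((Q : ℤ) : ℝ))) := by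
      rw [ht]
      simp only
      rw [reindex ((k - 1) * Q) (fun l => ε * fbar (ε * (l : ℝ)) * ζ k l)]
      apply sum_congr rfl; intro m hm
      simp only [mem_Icc] at hm
      rcases le_or_gt 0 m with h | h
      · -- m ≥ 0 : left linear formula
        rw [hζL k ((k - 1) * Q + m) (by omega) (by
          have : k * Q = (k - 1) * Q + Q := by ring
          omega)]
        rw [show ((k - 1) * Q + m - (k - 1) * Q : ℤ) = m by ring,
          show (k * Q - (k - 1) * Q : ℤ) = Q by ring]
        rw [show (k * Q + m - Q : ℤ) = (k - 1) * Q + m by ring]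
        rw [show (max m 0 : ℤ) = m by omega, show (max (-m) 0 : ℤ) = 0 by omega]
        simp
      · -- m < 0 : wraps around to the right edge
        have hz : ζ k ((k - 1) * Q + m) = ζ k ((k + 1) * Q + m) := by
          rw [← hζp k ((k - 1) * Q + m)]
          congr 1
          rw [hNQ]; ring
        rw [hz, hζR k ((k + 1) * Q + m) (by
            have : (k + 1) * Q = k * Q + Q := by ring
            omega) (by omega)]
        rw [show ((k + 1) * Q - ((k + 1) * Q + m) : ℤ) = -m by ring,
          show ((k + 1) * Q - k * Q : ℤ) = Q by ring]
        have hfrw : fbar (ε * (((k : ℤ) * Q + m + Q : ℤ) : ℝ))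
            = fbar (ε * (((k - 1) * Q + m : ℤ) : ℝ)) := by
          rw [show (k * Q + m + Q : ℤ) = ((k - 1) * Q + m) + 2 * N by rw [hNQ]; ring]
          exact hfp ((k - 1) * Q + m)
        rw [hfrw]
        rw [show (max m 0 : ℤ) = 0 by omega, show (max (-m) 0 : ℤ) = -m by omega]
        simp
    rw [htk1, htk, ← sum_add_distrib]
    apply sum_congr rfl; intro m _
    ring
  · -- case K ≥ 2
    have hK2 : 2 ≤ K := by omega
    have hQN2 : 2 * Q ≤ N := by
      rw [hNKQ]
      nlinarith
    -- restrict window to {k-1, k, k+1}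
    have hrestrict : ∑ k' ∈ Icc (k - 1) (k - 2 + 2 * K), t k'
        = ∑ k' ∈ Icc (k - 1) (k + 1), t k' := by
      symm
      apply sum_subset
      · intro x hx; simp only [mem_Icc] at hx ⊢; omega
      · intro x hx hnot
        simp only [mem_Icc] at hx hnot
        have hx2 : k + 2 ≤ x := by omega
        rw [ht]
        simp only
        apply sum_eq_zero
        intro l hl
        simp only [mem_Icc] at hl
        have hb1 : (k + 2) * Q ≤ x * Q := mul_le_mul_of_nonneg_right hx2 (by omega)
        have hb2 : x * Q ≤ (k - 2 + 2 * K) * Q := mul_le_mul_of_nonneg_right hx.2 (by omega)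
        have e1 : (k + 2) * Q = (k + 1) * Q + Q := by ring
        have e2 : (k - 2 + 2 * K) * Q = (k - 1) * Q + 2 * (K * Q) - Q := by ring
        rw [hζ0 k l (by omega) (by rw [hNKQ]; omega), mul_zero]
    rw [hrestrict, show Icc (k - 1) (k + 1) = {k - 1, k, k + 1} by
      ext x; simp only [mem_Icc, mem_insert, mem_singleton]; omega]
    rw [sum_insert (by simp only [mem_insert, mem_singleton]; omega),
      sum_insert (by simp only [mem_singleton]; omega), sum_singleton]
    have htkm : t (k - 1) = ∑ m ∈ Icc (-r) r,
        ε * fbar (ε * ((k * Q + m - Q : ℤ) : ℝ)) * (((max m 0 : ℤ) : ℝ) / ((Q : ℤ) : ℝ)) := by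
      rw [ht]; simp only
      rw [reindex ((k - 1) * Q) (fun l => ε * fbar (ε * (l : ℝ)) * ζ k l)]
      apply sum_congr rfl; intro m hm
      simp only [mem_Icc] at hm
      rcases le_or_gt 0 m with h | h
      · rw [hζL k ((k - 1) * Q + m) (by omega) (by
          have : k * Q = (k - 1) * Q + Q := by ring
          omega)]
        rw [show ((k - 1) * Q + m - (k - 1) * Q : ℤ) = m by ring,
          show (k * Q - (k - 1) * Q : ℤ) = Q by ring,
          show (k * Q + m - Q : ℤ) = (k - 1) * Q + m by ring,
          show (max m 0 : ℤ) = m by omega]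
      · have hz : ζ k ((k - 1) * Q + m) = 0 := by
          apply zeta_zero_wrap N Q ζ (by nlinarith) hζ0 hζp
          · have : (k + 1) * Q = (k - 1) * Q + 2 * Q := by ring
            omega
          · omega
        rw [hz, show (max m 0 : ℤ) = 0 by omega]
        simp
    have htkp : t (k + 1) = ∑ m ∈ Icc (-r) r,
        ε * fbar (ε * ((k * Q + m + Q : ℤ) : ℝ)) * (((max (-m) 0 : ℤ) : ℝ) / ((Q : ℤ) : ℝ)) := by
      rw [ht]; simp only
      rw [reindex ((k + 1) * Q) (fun l => ε * fbar (ε * (l : ℝ)) * ζ k l)]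
      apply sum_congr rfl; intro m hm
      simp only [mem_Icc] at hm
      rcases le_or_gt m 0 with h | h
      · rw [hζR k ((k + 1) * Q + m) (by
          have : (k + 1) * Q = k * Q + Q := by ring
          omega) (by omega)]
        rw [show ((k + 1) * Q - ((k + 1) * Q + m) : ℤ) = -m by ring,
          show ((k + 1) * Q - k * Q : ℤ) = Q by ring,
          show (k * Q + m + Q : ℤ) = (k + 1) * Q + m by ring,
          show (max (-m) 0 : ℤ) = -m by omega]
      · have hz : ζ k ((k + 1) * Q + m) = 0 := by
          apply hζ0
          · omega
          · have : (k + 1) * Q = (k - 1) * Q + 2 * Q := by ring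
            omega
        rw [hz, show (max (-m) 0 : ℤ) = 0 by omega]
        simp
    rw [htkm, htk, htkp, ← sum_add_distrib, ← sum_add_distrib]
    apply sum_congr rfl; intro m _; ring

open Finset

lemma aux_tel (G : ℤ → ℝ) (a b : ℤ) (hab : a ≤ b) :
    ∑ k ∈ Icc (a + 1) b, (G k - G (k - 1)) = G b - G a := by
  obtain ⟨n, rfl⟩ := Int.le.dest hab
  induction n with
  | zero => simp
  | succ n ih =>
      have e : a + ((n + 1 : ℕ) : ℤ) = (a + (n : ℤ)) + 1 := by push_cast; ring
      rw [e]
      have h1 : Icc (a + 1) (a + (n : ℤ) + 1) = insert (a + (n : ℤ) + 1) (Icc (a + 1) (a + (n : ℤ))) := by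
        ext x; simp only [mem_Icc, mem_insert]; omega
      rw [h1, sum_insert (by simp only [mem_Icc]; omega), ih (by omega)]
      have e2 : a + (n : ℤ) + 1 - 1 = a + (n : ℤ) := by ring
      rw [e2]
      ring

open Finset

lemma max_abs_helper (m Q : ℤ) (h : |m| ≤ Q) :
    (max m 0 : ℤ) + (Q - |m|) + (max (-m) 0 : ℤ) = Q := by
  rcases le_total 0 m with h' | h'
  · rw [max_eq_left h', max_eq_right (by omega : -m ≤ 0), abs_of_nonneg h']; ring
  · rw [max_eq_right h', max_eq_left (by omega : 0 ≤ -m), abs_of_nonpos h']; ring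

set_option maxHeartbeats 1200000 in
lemma aux_delta (fbar : ℝ → ℝ) (M : ℝ) (hM0 : 0 ≤ M)
    (htay : ∀ x y : ℝ, |fbar y - fbar x - deriv fbar x * (y - x)| ≤ M * (y - x) ^ 2)
    (Q r k : ℤ) (ε : ℝ) (hr : 0 ≤ r) (hQ : 2 * r + 1 ≤ Q) (hε : 0 < ε) :
    |(∑ m ∈ Icc (-r) r,
          (ε * fbar (ε * ((k * Q + m - Q : ℤ) : ℝ)) * (((max m 0 : ℤ) : ℝ) / ((Q : ℤ) : ℝ))
          + ε * fbar (ε * ((k * Q + m : ℤ) : ℝ)) * (((Q - |m| : ℤ) : ℝ) / ((Q : ℤ) : ℝ))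
          + ε * fbar (ε * ((k * Q + m + Q : ℤ) : ℝ)) * (((max (-m) 0 : ℤ) : ℝ) / ((Q : ℤ) : ℝ))))
      - ((2 * (r : ℝ) + 1) / ((Q : ℤ) : ℝ)) * ∑ m ∈ Icc (-Q) Q,
          ε * fbar (ε * ((k * Q + m : ℤ) : ℝ)) * (((Q - |m| : ℤ) : ℝ) / ((Q : ℤ) : ℝ))|
    ≤ 8 * M * (2 * (r : ℝ) + 1) * ε ^ 3 * ((Q : ℤ) : ℝ) ^ 2 := by
  have hQ1 : 1 ≤ Q := by omega
  have hQR : (0 : ℝ) < ((Q : ℤ) : ℝ) := by exact_mod_cast (by omega : (0:ℤ) < Q)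
  have hQne : ((Q : ℤ) : ℝ) ≠ 0 := ne_of_gt hQR
  set x : ℝ := ε * ((k * Q : ℤ) : ℝ) with hx
  set d : ℝ := deriv fbar x with hd
  set T : ℝ → ℝ := fun y => fbar y - fbar x - d * (y - x) with hT
  have hTb : ∀ y : ℝ, |y - x| ≤ 2 * ε * ((Q : ℤ) : ℝ) → |T y| ≤ 4 * M * ε ^ 2 * ((Q : ℤ) : ℝ) ^ 2 := by
    intro y hy
    have h1 : |T y| ≤ M * (y - x) ^ 2 := htay x y
    have h2 : (y - x) ^ 2 ≤ (2 * ε * ((Q : ℤ) : ℝ)) ^ 2 := by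
      rw [← sq_abs (y - x)]
      apply pow_le_pow_left₀ (abs_nonneg _) hy
    calc |T y| ≤ M * (y - x) ^ 2 := h1
      _ ≤ M * (2 * ε * ((Q : ℤ) : ℝ)) ^ 2 := by nlinarith
      _ = 4 * M * ε ^ 2 * ((Q : ℤ) : ℝ) ^ 2 := by ring
  have hcard : (((Icc (-r) r).card : ℕ) : ℝ) = 2 * (r : ℝ) + 1 := by
    have h1 : ((Icc (-r) r).card : ℤ) = 2 * r + 1 := by
      rw [Int.card_Icc]; omega
    exact_mod_cast h1
  -- mass and moment for the V weights
  have hmassR : ∑ m ∈ Icc (-Q) Q, ((Q - |m| : ℤ) : ℝ) = ((Q : ℤ) : ℝ) ^ 2 := by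
    have h0 := aux_mass Q (by omega)
    calc ∑ m ∈ Icc (-Q) Q, ((Q - |m| : ℤ) : ℝ) = ((∑ m ∈ Icc (-Q) Q, (Q - |m|) : ℤ) : ℝ) := by
          push_cast; rfl
      _ = ((Q : ℤ) : ℝ) ^ 2 := by rw [h0]; push_cast; ring
  have hoddR : ∑ m ∈ Icc (-Q) Q, ((Q - |m| : ℤ) : ℝ) * ((m : ℤ) : ℝ) = 0 := by
    apply aux_odd
    intro m
    push_cast [abs_neg]
    ring
  set SS : ℝ := ∑ m ∈ Icc (-r) r,
      (((max m 0 : ℤ) : ℝ) * T (ε * ((k * Q + m - Q : ℤ) : ℝ))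
      + ((Q - |m| : ℤ) : ℝ) * T (ε * ((k * Q + m : ℤ) : ℝ))
      + ((max (-m) 0 : ℤ) : ℝ) * T (ε * ((k * Q + m + Q : ℤ) : ℝ))) with hSS
  set VV : ℝ := ∑ m ∈ Icc (-Q) Q,
      ((Q - |m| : ℤ) : ℝ) * T (ε * ((k * Q + m : ℤ) : ℝ)) with hVV
  -- S identity
  have hS : ∑ m ∈ Icc (-r) r,
        (ε * fbar (ε * ((k * Q + m - Q : ℤ) : ℝ)) * (((max m 0 : ℤ) : ℝ) / ((Q : ℤ) : ℝ))
        + ε * fbar (ε * ((k * Q + m : ℤ) : ℝ)) * (((Q - |m| : ℤ) : ℝ) / ((Q : ℤ) : ℝ))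
        + ε * fbar (ε * ((k * Q + m + Q : ℤ) : ℝ)) * (((max (-m) 0 : ℤ) : ℝ) / ((Q : ℤ) : ℝ)))
      = (2 * (r : ℝ) + 1) * (ε * fbar x) + (ε / ((Q : ℤ) : ℝ)) * SS := by
    rw [hSS, mul_sum, show (2 * (r : ℝ) + 1) * (ε * fbar x)
        = ∑ _m ∈ Icc (-r) r, ε * fbar x by rw [sum_const, nsmul_eq_mul, hcard],
      ← sum_add_distrib]
    apply sum_congr rfl
    intro m hm
    simp only [mem_Icc] at hm
    have habs : |m| ≤ Q := by
      rcases le_total 0 m with h' | h'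
      · rw [abs_of_nonneg h']; omega
      · rw [abs_of_nonpos h']; omega
    have hsum : ((max m 0 : ℤ) : ℝ) + ((Q - |m| : ℤ) : ℝ) + ((max (-m) 0 : ℤ) : ℝ)
        = ((Q : ℤ) : ℝ) := by exact_mod_cast max_abs_helper m Q habs
    have hsum' : (((max m 0 : ℤ) : ℝ) + ((Q - |m| : ℤ) : ℝ) + ((max (-m) 0 : ℤ) : ℝ))
        / ((Q : ℤ) : ℝ) = 1 := by rw [hsum]; field_simp
    have hmom : ((max m 0 : ℤ) : ℝ) * (((m : ℤ) : ℝ) - ((Q : ℤ) : ℝ))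
        + ((Q - |m| : ℤ) : ℝ) * ((m : ℤ) : ℝ)
        + ((max (-m) 0 : ℤ) : ℝ) * (((m : ℤ) : ℝ) + ((Q : ℤ) : ℝ)) = 0 := by
      have h0 : (max m 0 : ℤ) * (m - Q) + (Q - |m|) * m + (max (-m) 0 : ℤ) * (m + Q) = 0 := by
        rcases le_total 0 m with h | h
        · rw [max_eq_left h, max_eq_right (by omega : -m ≤ 0), abs_of_nonneg h]; ring
        · rw [max_eq_right h, max_eq_left (by omega : 0 ≤ -m), abs_of_nonpos h]; ring
      exact_mod_cast h0
    have hT1 : fbar (ε * ((k * Q + m - Q : ℤ) : ℝ))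
        = fbar x + d * (ε * (((m : ℤ) : ℝ) - ((Q : ℤ) : ℝ))) + T (ε * ((k * Q + m - Q : ℤ) : ℝ)) := by
      simp only [hT]
      have e : ε * ((k * Q + m - Q : ℤ) : ℝ) - x = ε * (((m : ℤ) : ℝ) - ((Q : ℤ) : ℝ)) := by
        rw [hx]; push_cast; ring
      rw [e]; ring
    have hT2 : fbar (ε * ((k * Q + m : ℤ) : ℝ))
        = fbar x + d * (ε * ((m : ℤ) : ℝ)) + T (ε * ((k * Q + m : ℤ) : ℝ)) := by
      simp only [hT]
      have e : ε * ((k * Q + m : ℤ) : ℝ) - x = ε * ((m : ℤ) : ℝ) := by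
        rw [hx]; push_cast; ring
      rw [e]; ring
    have hT3 : fbar (ε * ((k * Q + m + Q : ℤ) : ℝ))
        = fbar x + d * (ε * (((m : ℤ) : ℝ) + ((Q : ℤ) : ℝ))) + T (ε * ((k * Q + m + Q : ℤ) : ℝ)) := by
      simp only [hT]
      have e : ε * ((k * Q + m + Q : ℤ) : ℝ) - x = ε * (((m : ℤ) : ℝ) + ((Q : ℤ) : ℝ)) := by
        rw [hx]; push_cast; ring
      rw [e]; ring
    linear_combination (ε * ((max m 0 : ℤ) : ℝ) / ((Q : ℤ) : ℝ)) * hT1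
      + (ε * ((Q - |m| : ℤ) : ℝ) / ((Q : ℤ) : ℝ)) * hT2
      + (ε * ((max (-m) 0 : ℤ) : ℝ) / ((Q : ℤ) : ℝ)) * hT3
      + (ε * fbar x) * hsum'
      + (ε * ε * d / ((Q : ℤ) : ℝ)) * hmom
  -- V identity
  have hV : ∑ m ∈ Icc (-Q) Q,
        ε * fbar (ε * ((k * Q + m : ℤ) : ℝ)) * (((Q - |m| : ℤ) : ℝ) / ((Q : ℤ) : ℝ))
      = ((Q : ℤ) : ℝ) * (ε * fbar x) + (ε / ((Q : ℤ) : ℝ)) * VV := by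
    have hexp : ∑ m ∈ Icc (-Q) Q,
          ε * fbar (ε * ((k * Q + m : ℤ) : ℝ)) * (((Q - |m| : ℤ) : ℝ) / ((Q : ℤ) : ℝ))
        = (ε * fbar x / ((Q : ℤ) : ℝ)) * ∑ m ∈ Icc (-Q) Q, ((Q - |m| : ℤ) : ℝ)
          + (ε * ε * d / ((Q : ℤ) : ℝ)) * ∑ m ∈ Icc (-Q) Q, ((Q - |m| : ℤ) : ℝ) * ((m : ℤ) : ℝ)
          + (ε / ((Q : ℤ) : ℝ)) * VV := by
      rw [hVV, mul_sum, mul_sum, mul_sum, ← sum_add_distrib, ← sum_add_distrib]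
      apply sum_congr rfl
      intro m hm
      have hT2 : fbar (ε * ((k * Q + m : ℤ) : ℝ))
          = fbar x + d * (ε * ((m : ℤ) : ℝ)) + T (ε * ((k * Q + m : ℤ) : ℝ)) := by
        simp only [hT]
        have e : ε * ((k * Q + m : ℤ) : ℝ) - x = ε * ((m : ℤ) : ℝ) := by
          rw [hx]; push_cast; ring
        rw [e]; ring
      linear_combination (ε * ((Q - |m| : ℤ) : ℝ) / ((Q : ℤ) : ℝ)) * hT2
    rw [hexp, hmassR, hoddR]
    field_simp
    ring
  rw [hS, hV]
  have key : (2 * (r : ℝ) + 1) * (ε * fbar x) + (ε / ((Q : ℤ) : ℝ)) * SS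
        - ((2 * (r : ℝ) + 1) / ((Q : ℤ) : ℝ)) * (((Q : ℤ) : ℝ) * (ε * fbar x)
          + (ε / ((Q : ℤ) : ℝ)) * VV)
      = (ε / ((Q : ℤ) : ℝ)) * SS - ((2 * (r : ℝ) + 1) * ε / ((Q : ℤ) : ℝ) ^ 2) * VV := by
    field_simp
    ring
  rw [key]
  -- bound the two T-sums
  have hTS : |SS| ≤ (2 * (r : ℝ) + 1) * (((Q : ℤ) : ℝ) * (4 * M * ε ^ 2 * ((Q : ℤ) : ℝ) ^ 2)) := by
    rw [hSS]
    calc _ ≤ ∑ m ∈ Icc (-r) r,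
        |((max m 0 : ℤ) : ℝ) * T (ε * ((k * Q + m - Q : ℤ) : ℝ))
        + ((Q - |m| : ℤ) : ℝ) * T (ε * ((k * Q + m : ℤ) : ℝ))
        + ((max (-m) 0 : ℤ) : ℝ) * T (ε * ((k * Q + m + Q : ℤ) : ℝ))| := abs_sum_le_sum_abs _ _
      _ ≤ ∑ _m ∈ Icc (-r) r, ((Q : ℤ) : ℝ) * (4 * M * ε ^ 2 * ((Q : ℤ) : ℝ) ^ 2) := by
          apply sum_le_sum
          intro m hm
          simp only [mem_Icc] at hm
          have habs : |m| ≤ Q := by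
            rcases le_total 0 m with h' | h'
            · rw [abs_of_nonneg h']; omega
            · rw [abs_of_nonpos h']; omega
          have hmr : |(m : ℝ)| ≤ ((Q : ℤ) : ℝ) := by
            have : |(m : ℤ)| ≤ Q := habs
            exact_mod_cast this
          have hmrr := abs_le.mp hmr
          have ha0 : (0 : ℝ) ≤ ((max m 0 : ℤ) : ℝ) := by exact_mod_cast le_max_right m 0
          have hb0 : (0 : ℝ) ≤ ((Q - |m| : ℤ) : ℝ) := by
            have : (0 : ℤ) ≤ Q - |m| := by omega
            exact_mod_cast this
          have hc0 : (0 : ℝ) ≤ ((max (-m) 0 : ℤ) : ℝ) := by exact_mod_cast le_max_right (-m) 0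
          have hsum : ((max m 0 : ℤ) : ℝ) + ((Q - |m| : ℤ) : ℝ) + ((max (-m) 0 : ℤ) : ℝ)
              = ((Q : ℤ) : ℝ) := by exact_mod_cast max_abs_helper m Q habs
          have hd1 : |ε * ((k * Q + m - Q : ℤ) : ℝ) - x| ≤ 2 * ε * ((Q : ℤ) : ℝ) := by
            have e : ε * ((k * Q + m - Q : ℤ) : ℝ) - x = ε * (((m : ℤ) : ℝ) - ((Q : ℤ) : ℝ)) := by
              rw [hx]; push_cast; ring
            rw [e, abs_mul, abs_of_pos hε]
            have h5 : |((m : ℤ) : ℝ) - ((Q : ℤ) : ℝ)| ≤ 2 * ((Q : ℤ) : ℝ) := by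
              rw [abs_le]; constructor <;> nlinarith
            calc ε * |((m : ℤ) : ℝ) - ((Q : ℤ) : ℝ)| ≤ ε * (2 * ((Q : ℤ) : ℝ)) :=
                mul_le_mul_of_nonneg_left h5 hε.le
              _ = 2 * ε * ((Q : ℤ) : ℝ) := by ring
          have hd2 : |ε * ((k * Q + m : ℤ) : ℝ) - x| ≤ 2 * ε * ((Q : ℤ) : ℝ) := by
            have e : ε * ((k * Q + m : ℤ) : ℝ) - x = ε * ((m : ℤ) : ℝ) := by
              rw [hx]; push_cast; ring
            rw [e, abs_mul, abs_of_pos hε]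
            have h5 : |((m : ℤ) : ℝ)| ≤ 2 * ((Q : ℤ) : ℝ) := by nlinarith
            calc ε * |((m : ℤ) : ℝ)| ≤ ε * (2 * ((Q : ℤ) : ℝ)) :=
                mul_le_mul_of_nonneg_left h5 hε.le
              _ = 2 * ε * ((Q : ℤ) : ℝ) := by ring
          have hd3 : |ε * ((k * Q + m + Q : ℤ) : ℝ) - x| ≤ 2 * ε * ((Q : ℤ) : ℝ) := by
            have e : ε * ((k * Q + m + Q : ℤ) : ℝ) - x = ε * (((m : ℤ) : ℝ) + ((Q : ℤ) : ℝ)) := by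
              rw [hx]; push_cast; ring
            rw [e, abs_mul, abs_of_pos hε]
            have h5 : |((m : ℤ) : ℝ) + ((Q : ℤ) : ℝ)| ≤ 2 * ((Q : ℤ) : ℝ) := by
              rw [abs_le]; constructor <;> nlinarith
            calc ε * |((m : ℤ) : ℝ) + ((Q : ℤ) : ℝ)| ≤ ε * (2 * ((Q : ℤ) : ℝ)) :=
                mul_le_mul_of_nonneg_left h5 hε.le
              _ = 2 * ε * ((Q : ℤ) : ℝ) := by ring
          have hb1 := hTb _ hd1
          have hb2 := hTb _ hd2
          have hb3 := hTb _ hd3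
          have htri : |((max m 0 : ℤ) : ℝ) * T (ε * ((k * Q + m - Q : ℤ) : ℝ))
              + ((Q - |m| : ℤ) : ℝ) * T (ε * ((k * Q + m : ℤ) : ℝ))
              + ((max (-m) 0 : ℤ) : ℝ) * T (ε * ((k * Q + m + Q : ℤ) : ℝ))|
              ≤ ((max m 0 : ℤ) : ℝ) * |T (ε * ((k * Q + m - Q : ℤ) : ℝ))|
              + ((Q - |m| : ℤ) : ℝ) * |T (ε * ((k * Q + m : ℤ) : ℝ))|
              + ((max (-m) 0 : ℤ) : ℝ) * |T (ε * ((k * Q + m + Q : ℤ) : ℝ))| := by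
            have t1 := abs_add_le (((max m 0 : ℤ) : ℝ) * T (ε * ((k * Q + m - Q : ℤ) : ℝ))
                + ((Q - |m| : ℤ) : ℝ) * T (ε * ((k * Q + m : ℤ) : ℝ)))
              (((max (-m) 0 : ℤ) : ℝ) * T (ε * ((k * Q + m + Q : ℤ) : ℝ)))
            have t2 := abs_add_le (((max m 0 : ℤ) : ℝ) * T (ε * ((k * Q + m - Q : ℤ) : ℝ)))
              (((Q - |m| : ℤ) : ℝ) * T (ε * ((k * Q + m : ℤ) : ℝ)))
            have w1 : |((max m 0 : ℤ) : ℝ) * T (ε * ((k * Q + m - Q : ℤ) : ℝ))|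
                = ((max m 0 : ℤ) : ℝ) * |T (ε * ((k * Q + m - Q : ℤ) : ℝ))| := by
              rw [abs_mul, abs_of_nonneg ha0]
            have w2 : |((Q - |m| : ℤ) : ℝ) * T (ε * ((k * Q + m : ℤ) : ℝ))|
                = ((Q - |m| : ℤ) : ℝ) * |T (ε * ((k * Q + m : ℤ) : ℝ))| := by
              rw [abs_mul, abs_of_nonneg hb0]
            have w3 : |((max (-m) 0 : ℤ) : ℝ) * T (ε * ((k * Q + m + Q : ℤ) : ℝ))|
                = ((max (-m) 0 : ℤ) : ℝ) * |T (ε * ((k * Q + m + Q : ℤ) : ℝ))| := by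
              rw [abs_mul, abs_of_nonneg hc0]
            rw [w1, w2] at t2
            rw [w3] at t1
            linarith
          calc _ ≤ ((max m 0 : ℤ) : ℝ) * |T (ε * ((k * Q + m - Q : ℤ) : ℝ))|
              + ((Q - |m| : ℤ) : ℝ) * |T (ε * ((k * Q + m : ℤ) : ℝ))|
              + ((max (-m) 0 : ℤ) : ℝ) * |T (ε * ((k * Q + m + Q : ℤ) : ℝ))| := htri
            _ ≤ ((Q : ℤ) : ℝ) * (4 * M * ε ^ 2 * ((Q : ℤ) : ℝ) ^ 2) := by
                have hstep : ((max m 0 : ℤ) : ℝ) * |T (ε * ((k * Q + m - Q : ℤ) : ℝ))|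
                    + ((Q - |m| : ℤ) : ℝ) * |T (ε * ((k * Q + m : ℤ) : ℝ))|
                    + ((max (-m) 0 : ℤ) : ℝ) * |T (ε * ((k * Q + m + Q : ℤ) : ℝ))|
                    ≤ (((max m 0 : ℤ) : ℝ) + ((Q - |m| : ℤ) : ℝ) + ((max (-m) 0 : ℤ) : ℝ))
                        * (4 * M * ε ^ 2 * ((Q : ℤ) : ℝ) ^ 2) := by
                  nlinarith [mul_le_mul_of_nonneg_left hb1 ha0, mul_le_mul_of_nonneg_left hb2 hb0,
                    mul_le_mul_of_nonneg_left hb3 hc0]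
                rw [hsum] at hstep
                exact hstep
      _ = (2 * (r : ℝ) + 1) * (((Q : ℤ) : ℝ) * (4 * M * ε ^ 2 * ((Q : ℤ) : ℝ) ^ 2)) := by
          rw [sum_const, nsmul_eq_mul, hcard]
  have hTV : |VV| ≤ ((Q : ℤ) : ℝ) ^ 2 * (4 * M * ε ^ 2 * ((Q : ℤ) : ℝ) ^ 2) := by
    rw [hVV]
    calc _ ≤ ∑ m ∈ Icc (-Q) Q, |((Q - |m| : ℤ) : ℝ) * T (ε * ((k * Q + m : ℤ) : ℝ))| :=
          abs_sum_le_sum_abs _ _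
      _ ≤ ∑ m ∈ Icc (-Q) Q, ((Q - |m| : ℤ) : ℝ) * (4 * M * ε ^ 2 * ((Q : ℤ) : ℝ) ^ 2) := by
          apply sum_le_sum
          intro m hm
          simp only [mem_Icc] at hm
          have habs : |m| ≤ Q := by
            rcases le_total 0 m with h' | h'
            · rw [abs_of_nonneg h']; omega
            · rw [abs_of_nonpos h']; omega
          have hb0 : (0 : ℝ) ≤ ((Q - |m| : ℤ) : ℝ) := by
            have : (0 : ℤ) ≤ Q - |m| := by omega
            exact_mod_cast this
          have hmQ : |(m : ℝ)| ≤ ((Q : ℤ) : ℝ) := by exact_mod_cast habs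
          have hd2 : |ε * ((k * Q + m : ℤ) : ℝ) - x| ≤ 2 * ε * ((Q : ℤ) : ℝ) := by
            have e : ε * ((k * Q + m : ℤ) : ℝ) - x = ε * ((m : ℤ) : ℝ) := by
              rw [hx]; push_cast; ring
            rw [e, abs_mul, abs_of_pos hε]
            have h5 : |((m : ℤ) : ℝ)| ≤ 2 * ((Q : ℤ) : ℝ) := by nlinarith [abs_le.mp hmQ]
            calc ε * |((m : ℤ) : ℝ)| ≤ ε * (2 * ((Q : ℤ) : ℝ)) :=
                mul_le_mul_of_nonneg_left h5 hε.le
              _ = 2 * ε * ((Q : ℤ) : ℝ) := by ring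
          have hb2 := hTb _ hd2
          rw [abs_mul, abs_of_nonneg hb0]
          have := abs_nonneg (T (ε * ((k * Q + m : ℤ) : ℝ)))
          nlinarith
      _ = ((Q : ℤ) : ℝ) ^ 2 * (4 * M * ε ^ 2 * ((Q : ℤ) : ℝ) ^ 2) := by
          rw [← sum_mul, hmassR]
  -- final combination
  have c1 : (0:ℝ) ≤ ε / ((Q : ℤ) : ℝ) := by positivity
  have c2 : (0:ℝ) ≤ (2 * (r : ℝ) + 1) * ε / ((Q : ℤ) : ℝ) ^ 2 := by
    have : (0:ℝ) ≤ (r:ℝ) := by exact_mod_cast hr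
    positivity
  calc |(ε / ((Q : ℤ) : ℝ)) * SS - ((2 * (r : ℝ) + 1) * ε / ((Q : ℤ) : ℝ) ^ 2) * VV|
      ≤ |(ε / ((Q : ℤ) : ℝ)) * SS| + |((2 * (r : ℝ) + 1) * ε / ((Q : ℤ) : ℝ) ^ 2) * VV| :=
        abs_sub _ _
    _ = (ε / ((Q : ℤ) : ℝ)) * |SS| + ((2 * (r : ℝ) + 1) * ε / ((Q : ℤ) : ℝ) ^ 2) * |VV| := by
        rw [abs_mul, abs_mul, abs_of_nonneg c1, abs_of_nonneg c2]
    _ ≤ 8 * M * (2 * (r : ℝ) + 1) * ε ^ 3 * ((Q : ℤ) : ℝ) ^ 2 := by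
        have b1 : (ε / ((Q : ℤ) : ℝ)) * ((2 * (r : ℝ) + 1) * (((Q : ℤ) : ℝ) * (4 * M * ε ^ 2 * ((Q : ℤ) : ℝ) ^ 2)))
            = 4 * M * (2 * (r : ℝ) + 1) * ε ^ 3 * ((Q : ℤ) : ℝ) ^ 2 := by
          field_simp
        have b2 : ((2 * (r : ℝ) + 1) * ε / ((Q : ℤ) : ℝ) ^ 2) * (((Q : ℤ) : ℝ) ^ 2 * (4 * M * ε ^ 2 * ((Q : ℤ) : ℝ) ^ 2))
            = 4 * M * (2 * (r : ℝ) + 1) * ε ^ 3 * ((Q : ℤ) : ℝ) ^ 2 := by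
          field_simp
        nlinarith [mul_le_mul_of_nonneg_left hTS c1, mul_le_mul_of_nonneg_left hTV c2]


/-- for the harmonic potential on a uniform mesh `ℓ_k = kQ` with
weights `ν = h/(ε(2r+1))`, the solution of the force-based cluster equations
equals `ε(2r+1)/h` times the exact constrained solution, up to a relative error
of order `h²`, with a constant depending only on `f̄`. -/
theorem statement4 (fbar : ℝ → ℝ) (hf : ContDiff ℝ 2 fbar)
    (hfper : ∀ x : ℝ, fbar (x + 2) = fbar x) :
    ∃ C : ℝ, 0 < C ∧
      ∀ (N K Q r : ℤ) (ε hm : ℝ) (ζ : ℤ → ℤ → ℝ) (ub u Ubp Up : ℤ → ℝ),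
        1 ≤ N → 1 ≤ K → 0 ≤ r → 2 * r + 1 ≤ Q → N = K * Q →
        ε = (N : ℝ)⁻¹ → hm = ε * (Q : ℝ) →
        -- nodal basis functions for the uniform mesh `L k = k * Q`
        (∀ j l : ℤ, (j - 1) * Q ≤ l → l ≤ j * Q →
          ζ j l = ((l - (j - 1) * Q : ℤ) : ℝ) / ((j * Q - (j - 1) * Q : ℤ) : ℝ)) →
        (∀ j l : ℤ, j * Q ≤ l → l ≤ (j + 1) * Q →
          ζ j l = (((j + 1) * Q - l : ℤ) : ℝ) / (((j + 1) * Q - j * Q : ℤ) : ℝ)) →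
        (∀ j l : ℤ, (j + 1) * Q < l → l < (j - 1) * Q + 2 * N → ζ j l = 0) →
        (∀ j l : ℤ, ζ j (l + 2 * N) = ζ j l) →
        -- mean-zero external force
        (∑ l ∈ Finset.Icc (-N + 1) N, fbar (ε * (l : ℝ)) = 0) →
        IsCoarse N ε (fun k => k * Q) ub → IsCoarse N ε (fun k => k * Q) u →
        (∀ k : ℤ, Ubp k = (ub (k * Q) - ub ((k - 1) * Q)) / hm) →
        (∀ k : ℤ, Up k = (u (k * Q) - u ((k - 1) * Q)) / hm) →
        -- exact constrained equilibrium equations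
        (∀ k ∈ Finset.Icc (-K + 1) K,
          Ubp k - Ubp (k + 1) =
            ∑ l ∈ Finset.Icc (-N + 1) N, ε * fbar (ε * (l : ℝ)) * ζ k l) →
        -- force-based cluster equations
        (∀ k ∈ Finset.Icc (-K + 1) K,
          (hm / (ε * (2 * (r : ℝ) + 1))) * (Up k - Up (k + 1)) =
            ∑ k' ∈ Finset.Icc (-K + 1) K, (hm / (ε * (2 * (r : ℝ) + 1))) *
              ∑ l ∈ Finset.Icc (k' * Q - r) (k' * Q + r),
                ε * fbar (ε * (l : ℝ)) * ζ k l) →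
        ∀ j ∈ Finset.Icc (-K + 1) K,
          |Up j - (ε * (2 * (r : ℝ) + 1) / hm) * Ubp j| ≤
            C * (ε * (2 * (r : ℝ) + 1) / hm) * hm ^ 2 := by
  obtain ⟨M, hM0, hM⟩ := aux_bound fbar hf (fun x => hfper x)
  refine ⟨16 * (M + 1), by linarith, ?_⟩
  intro N K Q r ε hm ζ ub u Ubp Up hN hK hr hQ hNKQ hε hhm hζL hζR hζ0 hζp _hmean hub hu
    hUbp hUp hExact hCluster j hj
  have htay : ∀ x y : ℝ, |fbar y - fbar x - deriv fbar x * (y - x)| ≤ M * (y - x) ^ 2 :=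
    aux_taylor fbar hf M hM
  have hQ1 : 1 ≤ Q := by omega
  have hNpos : (0 : ℤ) < N := by omega
  have hNR : (0 : ℝ) < (N : ℝ) := by exact_mod_cast hNpos
  have hεpos : 0 < ε := by rw [hε]; exact inv_pos.2 hNR
  have hQR : (0 : ℝ) < ((Q : ℤ) : ℝ) := by exact_mod_cast (by omega : (0:ℤ) < Q)
  have hmpos : 0 < hm := by rw [hhm]; exact mul_pos hεpos hQR
  have hrR : (0 : ℝ) ≤ (r : ℝ) := by exact_mod_cast hr
  have hrpos : (0 : ℝ) < 2 * (r : ℝ) + 1 := by linarith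
  have hKR : (0 : ℝ) < (K : ℝ) := by exact_mod_cast (by omega : (0:ℤ) < K)
  -- periodicity of fbar along the lattice
  have hε2N : ε * (2 * (N : ℝ)) = 2 := by
    rw [hε]; field_simp
  have hfp : ∀ l : ℤ, fbar (ε * ((l + 2 * N : ℤ) : ℝ)) = fbar (ε * (l : ℝ)) := by
    intro l
    have e : ε * ((l + 2 * N : ℤ) : ℝ) = ε * (l : ℝ) + 2 := by
      push_cast
      linear_combination hε2N
    rw [e, hfper]
  -- notation
  set c : ℝ := ε * (2 * (r : ℝ) + 1) / hm with hc
  have hcval : c = (2 * (r : ℝ) + 1) / ((Q : ℤ) : ℝ) := by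
    rw [hc, hhm]
    field_simp
  have hcpos : 0 < c := by rw [hcval]; positivity
  set F : ℤ → ℝ := fun k => ∑ l ∈ Icc (-N + 1) N, ε * fbar (ε * (l : ℝ)) * ζ k l with hF
  set g : ℤ → ℝ := fun k => ∑ k' ∈ Icc (-K + 1) K, ∑ l ∈ Icc (k' * Q - r) (k' * Q + r),
    ε * fbar (ε * (l : ℝ)) * ζ k l with hgdef
  -- cluster equations after cancelling the weight
  have hν : (0 : ℝ) < hm / (ε * (2 * (r : ℝ) + 1)) := by positivity
  have hg : ∀ k ∈ Icc (-K + 1) K, Up k - Up (k + 1) = g k := by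
    intro k hk
    have h0 := hCluster k hk
    rw [← Finset.mul_sum] at h0
    exact mul_left_cancel₀ (ne_of_gt hν) h0
  set D : ℤ → ℝ := fun k => Up k - c * Ubp k with hD
  set per : ℝ := 8 * M * (2 * (r : ℝ) + 1) * ε ^ 3 * ((Q : ℤ) : ℝ) ^ 2 with hper
  have hper0 : 0 ≤ per := by rw [hper]; positivity
  have hdel : ∀ k ∈ Icc (-K + 1) K, |D k - D (k + 1)| ≤ per := by
    intro k hk
    have e1 : D k - D (k + 1) = (Up k - Up (k + 1)) - c * (Ubp k - Ubp (k + 1)) := by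
      rw [hD]; ring
    rw [e1, hg k hk, hExact k hk]
    have e2 : g k = ∑ k' ∈ Icc (-K + 1) K, ∑ l ∈ Icc (k' * Q - r) (k' * Q + r),
        ε * fbar (ε * (l : ℝ)) * ζ k l := rfl
    rw [e2, g_red fbar N K Q r ε ζ hK hr hQ hNKQ hfp hζL hζR hζ0 hζp k,
      F_red fbar N K Q ε ζ hK hQ1 hNKQ hfp hζL hζR hζ0 hζp k, hcval, hper]
    exact aux_delta fbar M hM0 htay Q r k ε hr hQ hεpos
  -- telescoping bound
  have tel : ∀ p : ℤ, -K + 1 ≤ p → ∀ q : ℤ, p ≤ q → q ≤ K →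
      |D p - D q| ≤ ((q - p : ℤ) : ℝ) * per := by
    intro p hp q hpq
    obtain ⟨n, rfl⟩ := Int.le.dest hpq
    induction n with
    | zero => intro _; simp
    | succ n ih =>
        intro hqK
        have e : p + ((n + 1 : ℕ) : ℤ) = (p + (n : ℤ)) + 1 := by push_cast; ring
        rw [e] at hqK ⊢
        have h1 := ih (by omega) (by omega)
        have h2 := hdel (p + (n : ℤ)) (mem_Icc.2 ⟨by omega, by omega⟩)
        have e3 : D p - D (p + (n : ℤ) + 1)
            = (D p - D (p + (n : ℤ))) + (D (p + (n : ℤ)) - D (p + (n : ℤ) + 1)) := by ring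
        calc |D p - D (p + (n : ℤ) + 1)|
            ≤ |D p - D (p + (n : ℤ))| + |D (p + (n : ℤ)) - D (p + (n : ℤ) + 1)| := by
              rw [e3]; exact abs_add_le _ _
          _ ≤ ((p + (n : ℤ) - p : ℤ) : ℝ) * per + per := by
              have := ih (by omega) (by omega)
              linarith
          _ = ((p + (n : ℤ) + 1 - p : ℤ) : ℝ) * per := by push_cast; ring
  have hB : ∀ p ∈ Icc (-K + 1) K, ∀ q ∈ Icc (-K + 1) K,
      |D p - D q| ≤ (2 * (K : ℝ)) * per := by
    intro p hp q hq
    simp only [mem_Icc] at hp hq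
    have key : ∀ p' q' : ℤ, -K + 1 ≤ p' → p' ≤ q' → q' ≤ K →
        |D p' - D q'| ≤ (2 * (K : ℝ)) * per := by
      intro p' q' h1 h2 h3
      calc |D p' - D q'| ≤ ((q' - p' : ℤ) : ℝ) * per := tel p' h1 q' h2 h3
        _ ≤ (2 * (K : ℝ)) * per := by
            apply mul_le_mul_of_nonneg_right _ hper0
            have : (q' - p' : ℤ) ≤ 2 * K := by omega
            exact_mod_cast this
    rcases le_total p q with h | h
    · exact key p q hp.1 h hq.2
    · rw [abs_sub_comm]; exact key q p hq.1 h hp.2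
  -- mean zero
  have husum : ∑ k ∈ Icc (-K + 1) K, Up k = 0 := by
    have e1 : ∀ k : ℤ, Up k = u (k * Q) / hm - u ((k - 1) * Q) / hm := by
      intro k; rw [hUp]; ring
    calc ∑ k ∈ Icc (-K + 1) K, Up k
        = ∑ k ∈ Icc (-K + 1) K, ((fun i => u (i * Q) / hm) k - (fun i => u (i * Q) / hm) (k - 1)) := by
          apply sum_congr rfl; intro k _
          simp only
          exact e1 k
      _ = u (K * Q) / hm - u ((-K) * Q) / hm := by
          have := aux_tel (fun i => u (i * Q) / hm) (-K) K (by omega)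
          rw [show (-K + 1 : ℤ) = -K + 1 by ring] at this
          exact this
      _ = 0 := by
          have e2 : K * Q = (-K) * Q + 2 * N := by rw [hNKQ]; ring
          rw [e2, hu.1 ((-K) * Q)]
          ring
  have hubsum : ∑ k ∈ Icc (-K + 1) K, Ubp k = 0 := by
    have e1 : ∀ k : ℤ, Ubp k = ub (k * Q) / hm - ub ((k - 1) * Q) / hm := by
      intro k; rw [hUbp]; ring
    calc ∑ k ∈ Icc (-K + 1) K, Ubp k
        = ∑ k ∈ Icc (-K + 1) K, ((fun i => ub (i * Q) / hm) k - (fun i => ub (i * Q) / hm) (k - 1)) := by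
          apply sum_congr rfl; intro k _
          simp only
          exact e1 k
      _ = ub (K * Q) / hm - ub ((-K) * Q) / hm := aux_tel (fun i => ub (i * Q) / hm) (-K) K (by omega)
      _ = 0 := by
          have e2 : K * Q = (-K) * Q + 2 * N := by rw [hNKQ]; ring
          rw [e2, hub.1 ((-K) * Q)]
          ring
  have hDsum : ∑ k ∈ Icc (-K + 1) K, D k = 0 := by
    rw [hD]
    simp only
    rw [sum_sub_distrib, husum, ← mul_sum, hubsum]
    ring
  -- conclusion
  have hcardK : (((Icc (-K + 1) K).card : ℕ) : ℝ) = 2 * (K : ℝ) := by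
    have h1 : ((Icc (-K + 1) K).card : ℤ) = 2 * K := by
      rw [Int.card_Icc]; omega
    exact_mod_cast h1
  have hfinal : |D j| ≤ (2 * (K : ℝ)) * per := by
    have e1 : ∑ k ∈ Icc (-K + 1) K, (D j - D k) = (2 * (K : ℝ)) * D j := by
      rw [sum_sub_distrib, hDsum, sum_const, nsmul_eq_mul, hcardK]
      ring
    have e2 : (2 * (K : ℝ)) * |D j| = |∑ k ∈ Icc (-K + 1) K, (D j - D k)| := by
      rw [e1, abs_mul, abs_of_nonneg (by linarith : (0:ℝ) ≤ 2 * (K:ℝ))]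
    have e3 : |∑ k ∈ Icc (-K + 1) K, (D j - D k)| ≤ (2 * (K : ℝ)) * ((2 * (K : ℝ)) * per) := by
      calc |∑ k ∈ Icc (-K + 1) K, (D j - D k)| ≤ ∑ k ∈ Icc (-K + 1) K, |D j - D k| :=
            abs_sum_le_sum_abs _ _
        _ ≤ ∑ _k ∈ Icc (-K + 1) K, (2 * (K : ℝ)) * per := by
            apply sum_le_sum
            intro k hk
            exact hB j hj k hk
        _ = (2 * (K : ℝ)) * ((2 * (K : ℝ)) * per) := by
            rw [sum_const, nsmul_eq_mul, hcardK]
    have e4 : (2 * (K : ℝ)) * |D j| ≤ (2 * (K : ℝ)) * ((2 * (K : ℝ)) * per) := by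
      rw [e2]; exact e3
    have h2K : (0:ℝ) < 2 * (K : ℝ) := by linarith
    exact le_of_mul_le_mul_left e4 h2K
  -- translate the bound
  have hKεQ : (K : ℝ) * (ε * ((Q : ℤ) : ℝ)) = 1 := by
    rw [hε]
    have : ((K : ℤ) : ℝ) * ((Q : ℤ) : ℝ) = (N : ℝ) := by
      rw [hNKQ]; push_cast; ring
    field_simp
    linarith [this]
  have hbound : (2 * (K : ℝ)) * per ≤ (16 * (M + 1)) * c * hm ^ 2 := by
    have e5 : (16 * (M + 1)) * c * hm ^ 2 = 16 * (M + 1) * (2 * (r : ℝ) + 1) * ε ^ 2 * ((Q : ℤ) : ℝ) := by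
      rw [hcval, hhm]
      field_simp
    have e6 : (2 * (K : ℝ)) * per = 16 * M * (2 * (r : ℝ) + 1) * ε ^ 2 * ((Q : ℤ) : ℝ)
        * ((K : ℝ) * (ε * ((Q : ℤ) : ℝ))) := by
      rw [hper]; ring
    rw [e5, e6, hKεQ, mul_one]
    have : (0:ℝ) ≤ (2 * (r : ℝ) + 1) * ε ^ 2 * ((Q : ℤ) : ℝ) := by positivity
    nlinarith
  calc |Up j - ε * (2 * (r : ℝ) + 1) / hm * Ubp j| = |D j| := by rw [hD]
    _ ≤ (2 * (K : ℝ)) * per := hfinal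
    _ ≤ (16 * (M + 1)) * (ε * (2 * (r : ℝ) + 1) / hm) * hm ^ 2 := hbound
end

section
/- Let φ: ℝ → ℝ be any function, let r ≥ 0 be an integer with ℓ_k − ℓ_{k−1} ≥ 2r+1 for all k, and let C_k = {ℓ_k − r, …, ℓ_k + r}. For v ∈ X define the site energy E_ℓ(v) = ½(φ(v'_ℓ) + φ(v'_{ℓ+1})). Then for every v_h ∈ X_h with element gradients V'_k, Σ_{ℓ∈C_k} E_ℓ(v_h) = ½(2r+1)(φ(V'_k) + φ(V'_{k+1})) = (2r+1) E_{ℓ_k}(v_h); that is, for nearest-neighbour interaction the cluster average of site energies reduces exactly to the single-point (trapezoidal) value at the repatom. -/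
/-- for nearest-neighbour interaction, the cluster sum of site
energies of a piecewise affine displacement reduces exactly to `(2r+1)` times
the single-point (trapezoidal) value at the repatom. -/
theorem statement5
    (N K : ℤ) (hN : 1 ≤ N) (hK : 1 ≤ K)
    (ε : ℝ) (hε : ε = (N : ℝ)⁻¹)
    (L : ℤ → ℤ) (hmono : StrictMono L) (hL0 : L 0 = 0)
    (hLper : ∀ k : ℤ, L (k + 2 * K) = L k + 2 * N)
    (hsz : ℤ → ℝ) (hhsz : ∀ k : ℤ, hsz k = ε * ((L k - L (k - 1) : ℤ) : ℝ))
    (r : ℤ) (hr : 0 ≤ r) (hnov : ∀ k : ℤ, 2 * r + 1 ≤ L k - L (k - 1))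
    (φ : ℝ → ℝ)
    (v : ℤ → ℝ) (hv : IsCoarse N ε L v)
    (Vp : ℤ → ℝ) (hVp : ∀ k : ℤ, Vp k = (v (L k) - v (L (k - 1))) / hsz k)
    (E : ℤ → ℝ)
    (hE : ∀ l : ℤ, E l = (1 / 2) *
      (φ (ε⁻¹ * (v l - v (l - 1))) + φ (ε⁻¹ * (v (l + 1) - v l)))) :
    ∀ k : ℤ,
      (∑ l ∈ Finset.Icc (L k - r) (L k + r), E l =
        (1 / 2) * (2 * (r : ℝ) + 1) * (φ (Vp k) + φ (Vp (k + 1)))) ∧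
      (∑ l ∈ Finset.Icc (L k - r) (L k + r), E l = (2 * (r : ℝ) + 1) * E (L k)) := by
  have hNne : (N : ℝ) ≠ 0 := by
    have : (0 : ℝ) < (N : ℝ) := by exact_mod_cast (by omega : (0:ℤ) < N)
    exact ne_of_gt this
  have hεne : ε ≠ 0 := by rw [hε]; exact inv_ne_zero hNne
  -- slope lemma
  have slope : ∀ k l : ℤ, L (k - 1) < l → l ≤ L k →
      ε⁻¹ * (v l - v (l - 1)) = Vp k := by
    intro k l h1 h2
    have hl := hv.2.2 k l (by omega) h2
    have hl' := hv.2.2 k (l - 1) (by omega) (by omega)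
    have key : v l - v (l - 1) =
        ε * ((v (L k) - v (L (k - 1))) / (ε * ((L k - L (k - 1) : ℤ) : ℝ))) := by
      rw [hl, hl']; push_cast; ring
    rw [key, hVp, hhsz, inv_mul_cancel_left₀ hεne]
  intro k
  have hgapk := hnov k
  have hgapk1 := hnov (k + 1)
  rw [show k + 1 - 1 = k from by ring] at hgapk1
  have gradk : ∀ l : ℤ, L (k - 1) < l → l ≤ L k →
      ε⁻¹ * (v l - v (l - 1)) = Vp k := slope k
  have gradk1 : ∀ l : ℤ, L k < l → l ≤ L (k + 1) →
      ε⁻¹ * (v l - v (l - 1)) = Vp (k + 1) := by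
    intro l h1 h2
    apply slope (k + 1) l _ h2
    rw [show k + 1 - 1 = k from by ring]; exact h1
  -- E values on the three regions
  have hEa : ∀ l ∈ Finset.Icc (L k - r) (L k - 1), E l = φ (Vp k) := by
    intro l hl
    rw [Finset.mem_Icc] at hl
    rw [hE, gradk l (by omega) (by omega)]
    have h2 := gradk (l + 1) (by omega) (by omega)
    simp only [add_sub_cancel_right] at h2
    rw [h2]; ring
  have hEmid : E (L k) = (1 / 2) * (φ (Vp k) + φ (Vp (k + 1))) := by
    rw [hE, gradk (L k) (by omega) le_rfl]
    have h2 := gradk1 (L k + 1) (by omega) (by omega)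
    simp only [add_sub_cancel_right] at h2
    rw [h2]
  have hEb : ∀ l ∈ Finset.Icc (L k + 1) (L k + r), E l = φ (Vp (k + 1)) := by
    intro l hl
    rw [Finset.mem_Icc] at hl
    rw [hE, gradk1 l (by omega) (by omega)]
    have h2 := gradk1 (l + 1) (by omega) (by omega)
    simp only [add_sub_cancel_right] at h2
    rw [h2]; ring
  -- split the sum
  have hsplit : ∑ l ∈ Finset.Icc (L k - r) (L k + r), E l =
      (∑ l ∈ Finset.Icc (L k - r) (L k - 1), E l) + E (L k) +
        ∑ l ∈ Finset.Icc (L k + 1) (L k + r), E l := by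
    have e1 : Finset.Icc (L k - r) (L k + r) =
        Finset.Icc (L k - r) (L k) ∪ Finset.Icc (L k + 1) (L k + r) := by
      ext x; simp only [Finset.mem_Icc, Finset.mem_union]; omega
    have e2 : Finset.Icc (L k - r) (L k) =
        Finset.Icc (L k - r) (L k - 1) ∪ {L k} := by
      ext x; simp only [Finset.mem_Icc, Finset.mem_union, Finset.mem_singleton]; omega
    have d1 : Disjoint (Finset.Icc (L k - r) (L k)) (Finset.Icc (L k + 1) (L k + r)) := by
      rw [Finset.disjoint_left]; intro x hx hx'
      rw [Finset.mem_Icc] at hx hx'; omega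
    have d2 : Disjoint (Finset.Icc (L k - r) (L k - 1)) ({L k} : Finset ℤ) := by
      rw [Finset.disjoint_left]; intro x hx hx'
      rw [Finset.mem_Icc] at hx; rw [Finset.mem_singleton] at hx'; omega
    rw [e1, Finset.sum_union d1, e2, Finset.sum_union d2, Finset.sum_singleton]
  have hcard1 : ((Finset.Icc (L k - r) (L k - 1)).card : ℝ) = (r : ℝ) := by
    rw [Int.card_Icc]
    rw [show L k - 1 + 1 - (L k - r) = r from by ring]
    exact_mod_cast congrArg Int.cast (Int.toNat_of_nonneg hr)
  have hcard2 : ((Finset.Icc (L k + 1) (L k + r)).card : ℝ) = (r : ℝ) := by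
    rw [Int.card_Icc]
    rw [show L k + r + 1 - (L k + 1) = r from by ring]
    exact_mod_cast congrArg Int.cast (Int.toNat_of_nonneg hr)
  have hsum1 : ∑ l ∈ Finset.Icc (L k - r) (L k - 1), E l = (r : ℝ) * φ (Vp k) := by
    rw [Finset.sum_congr rfl hEa, Finset.sum_const, nsmul_eq_mul, hcard1]
  have hsum2 : ∑ l ∈ Finset.Icc (L k + 1) (L k + r), E l = (r : ℝ) * φ (Vp (k + 1)) := by
    rw [Finset.sum_congr rfl hEb, Finset.sum_const, nsmul_eq_mul, hcard2]
  have main : ∑ l ∈ Finset.Icc (L k - r) (L k + r), E l =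
      (1 / 2) * (2 * (r : ℝ) + 1) * (φ (Vp k) + φ (Vp (k + 1))) := by
    rw [hsplit, hsum1, hsum2, hEmid]; ring
  refine ⟨main, ?_⟩
  rw [main, hEmid]; ring
end

section
/- Let φ: ℝ → ℝ be any function. For v_h ∈ X_h with element gradients V'_k, define the exact stored energy E(v_h) = Σ_{ℓ=−N+1}^N ε φ(v'_{h,ℓ}) = Σ_{k=−K+1}^K h_k φ(V'_k) and the node-based (non-local QC) energy E_h(v_h) = Σ_{k=−K+1}^K ω_k · ½(φ(V'_k) + φ(V'_{k+1})) with weights ω_k = ½(h_k + h_{k+1}). Then ½(ω_k + ω_{k−1}) = h_k(1 + ω̂_k) with ω̂_k = (h_{k−1} − 2h_k + h_{k+1})/(4h_k), and consequently E_h(v_h) = E(v_h) + Σ_{k=−K+1}^K h_k ω̂_k φ(V'_k). -/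
/-!
The fine gradient of an affine interpolant is constant on each element, so the atomistic energy
over one period splits into the element contributions `h_k φ(V'_k)`. In the node-based energy the
term `ω_k φ(V'_{k+1})` is re-indexed by `k ↦ k - 1`, which costs nothing because all sequences are
periodic and the sums run over a full period; then `φ(V'_k)` carries the weight
`½(ω_k + ω_{k-1}) = h_k (1 + ω̂_k)`.
-/

open Finset Function

namespace Finset

variable {M : Type*}

theorem sum_Ioc_add_one_eq_sum_Ioc [AddCommMonoid M] (f : ℤ → M) (a b : ℤ) :
    ∑ k ∈ Ioc a b, f (k + 1) = ∑ k ∈ Ioc (a + 1) (b + 1), f k := by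
  rw [← map_add_right_Ioc, sum_map]
  rfl

theorem sum_Ioc_period_eq [AddCancelCommMonoid M] {f : ℤ → M} {T : ℤ} (hf : Periodic f T)
    (a b : ℤ) : ∑ l ∈ Ioc a (a + T), f l = ∑ l ∈ Ioc b (b + T), f l := by
  set S : ℤ → M := fun c ↦ ∑ l ∈ Ioc c (c + T), f l
  have step : Periodic S 1 := by
    intro c
    rcases lt_or_ge T 0 with hT | hT
    · simp only [S, Ioc_eq_empty (show ¬c + 1 < c + 1 + T by omega),
        Ioc_eq_empty (show ¬c < c + T by omega)]
    have h₁ := insert_Ioc_add_one_left_eq_Ioc (show c < c + 1 + T by omega)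
    have h₂ := insert_Ioc_right_eq_Ioc_add_one (show c ≤ c + T by omega)
    rw [show c + T + 1 = c + 1 + T by ring, ← h₁] at h₂
    have := congrArg (∑ l ∈ ·, f l) h₂
    rw [sum_insert (by simp), sum_insert left_notMem_Ioc, hf (c + 1)] at this
    exact (add_left_cancel this).symm
  simpa using (step.int_mul (b - a) a).symm

theorem sum_Ioc_eq_sum_Ioc_sum_Ioc_of_monotone [AddCommMonoid M] (f : ℤ → M) {L : ℤ → ℤ}
    (hL : Monotone L) (a b : ℤ) :
    ∑ l ∈ Ioc (L a) (L b), f l = ∑ k ∈ Ioc a b, ∑ l ∈ Ioc (L (k - 1)) (L k), f l := by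
  rcases lt_or_ge b a with hba | hab
  · rw [Ioc_eq_empty (not_lt.2 (hL hba.le)), Ioc_eq_empty (not_lt.2 hba.le), sum_empty, sum_empty]
  induction b, hab using Int.leInduction with
  | base => simp
  | succ b hab ih =>
    rw [← insert_Ioc_right_eq_Ioc_add_one hab, sum_insert (by simp), ← ih, add_sub_cancel_right,
      ← Ioc_union_Ioc_eq_Ioc (hL hab) (hL (by omega)), sum_union (Ioc_disjoint_Ioc_of_le le_rfl),
      add_comm]

theorem sum_Ioc_period_mul_avg_eq {𝕜 : Type*} [Field 𝕜] {ω ψ : ℤ → 𝕜} {T : ℤ}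
    (hω : Periodic ω T) (hψ : Periodic ψ T) (a : ℤ) :
    ∑ k ∈ Ioc a (a + T), ω k * ((ψ k + ψ (k + 1)) / 2) =
      ∑ k ∈ Ioc a (a + T), (ω k + ω (k - 1)) / 2 * ψ k := by
  have hg : Periodic (fun k ↦ ω (k - 1) * ψ k) T := fun k ↦ by
    simp only [← sub_add_eq_add_sub, hω (k - 1), hψ k]
  have shift : ∑ k ∈ Ioc a (a + T), ω k * ψ (k + 1) = ∑ k ∈ Ioc a (a + T), ω (k - 1) * ψ k := by
    calc ∑ k ∈ Ioc a (a + T), ω k * ψ (k + 1)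
        = ∑ k ∈ Ioc (a + 1) (a + 1 + T), ω (k - 1) * ψ k := by
          simp only [← sum_Ioc_add_one_eq_sum_Ioc, add_sub_cancel_right, add_right_comm a 1 T]
      _ = _ := sum_Ioc_period_eq hg _ _
  calc _ = (∑ k ∈ Ioc a (a + T), ω k * ψ k + ∑ k ∈ Ioc a (a + T), ω k * ψ (k + 1)) / 2 := by
        rw [← sum_add_distrib, sum_div]
        exact sum_congr rfl fun k _ ↦ by ring
    _ = _ := by
        rw [shift, ← sum_add_distrib, sum_div]
        exact sum_congr rfl fun k _ ↦ by ring

end Finset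

namespace IsCoarse

variable {N : ℤ} {ε : ℝ} {L : ℤ → ℤ} {v : ℤ → ℝ}

theorem inv_mul_sub_eq (hv : IsCoarse N ε L v) (hε : ε ≠ 0) {k l : ℤ}
    (hl : l ∈ Ioc (L (k - 1)) (L k)) :
    ε⁻¹ * (v l - v (l - 1)) =
      (v (L k) - v (L (k - 1))) / (ε * ((L k - L (k - 1) : ℤ) : ℝ)) := by
  rw [mem_Ioc] at hl
  rw [hv.2.2 k l hl.1.le hl.2, hv.2.2 k (l - 1) (by omega) (by omega)]
  push_cast
  field_simp
  ring

theorem sum_Ioc_element (hv : IsCoarse N ε L v) (hε : ε ≠ 0) {k : ℤ} (hL : L (k - 1) ≤ L k)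
    (φ : ℝ → ℝ) :
    ∑ l ∈ Ioc (L (k - 1)) (L k), ε * φ (ε⁻¹ * (v l - v (l - 1))) =
      ε * ((L k - L (k - 1) : ℤ) : ℝ) *
        φ ((v (L k) - v (L (k - 1))) / (ε * ((L k - L (k - 1) : ℤ) : ℝ))) := by
  rw [sum_congr rfl fun l hl ↦ by rw [hv.inv_mul_sub_eq hε hl], sum_const, Int.card_Ioc,
    nsmul_eq_mul, ← Int.cast_natCast, Int.toNat_of_nonneg (by omega)]
  ring

theorem sum_Ioc_period_eq_sum_elements (hv : IsCoarse N ε L v) (hε : ε ≠ 0) (hL : Monotone L)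
    {T : ℤ} (hLper : ∀ k, L (k + T) = L k + 2 * N) (φ : ℝ → ℝ) (a b : ℤ) :
    ∑ l ∈ Ioc b (b + 2 * N), ε * φ (ε⁻¹ * (v l - v (l - 1))) =
      ∑ k ∈ Ioc a (a + T), ε * ((L k - L (k - 1) : ℤ) : ℝ) *
        φ ((v (L k) - v (L (k - 1))) / (ε * ((L k - L (k - 1) : ℤ) : ℝ))) := by
  have hper : Periodic (fun l ↦ ε * φ (ε⁻¹ * (v l - v (l - 1)))) (2 * N) := fun l ↦ by
    simp only [hv.1 l, ← sub_add_eq_add_sub, hv.1 (l - 1)]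
  rw [sum_Ioc_period_eq hper b (L a), ← hLper, sum_Ioc_eq_sum_Ioc_sum_Ioc_of_monotone _ hL]
  exact sum_congr rfl fun k _ ↦ hv.sum_Ioc_element hε (hL (by omega)) φ

end IsCoarse

theorem statement6_general
    (N K : ℤ) (hN : 1 ≤ N)
    (ε : ℝ) (hε : ε = (N : ℝ)⁻¹)
    (L : ℤ → ℤ) (hmono : StrictMono L)
    (hLper : ∀ k : ℤ, L (k + 2 * K) = L k + 2 * N)
    (hsz : ℤ → ℝ) (hhsz : ∀ k : ℤ, hsz k = ε * ((L k - L (k - 1) : ℤ) : ℝ))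
    (φ : ℝ → ℝ)
    (v : ℤ → ℝ) (hv : IsCoarse N ε L v)
    (Vp : ℤ → ℝ) (hVp : ∀ k : ℤ, Vp k = (v (L k) - v (L (k - 1))) / hsz k)
    (ω : ℤ → ℝ) (hω : ∀ k : ℤ, ω k = (hsz k + hsz (k + 1)) / 2)
    (oh : ℤ → ℝ)
    (hoh : ∀ k : ℤ, oh k = (hsz (k - 1) - 2 * hsz k + hsz (k + 1)) / (4 * hsz k)) :
    (∀ k : ℤ, (ω k + ω (k - 1)) / 2 = hsz k * (1 + oh k)) ∧
    (∑ l ∈ Finset.Icc (-N + 1) N, ε * φ (ε⁻¹ * (v l - v (l - 1))) =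
      ∑ k ∈ Finset.Icc (-K + 1) K, hsz k * φ (Vp k)) ∧
    (∑ k ∈ Finset.Icc (-K + 1) K, ω k * ((φ (Vp k) + φ (Vp (k + 1))) / 2) =
      (∑ k ∈ Finset.Icc (-K + 1) K, hsz k * φ (Vp k)) +
        ∑ k ∈ Finset.Icc (-K + 1) K, hsz k * oh k * φ (Vp k)) := by
  have hε0 : ε ≠ 0 := by rw [hε]; exact inv_ne_zero (by exact_mod_cast (by omega : N ≠ 0))
  have hsz0 (k : ℤ) : hsz k ≠ 0 := by
    have : L (k - 1) < L k := hmono (sub_one_lt k)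
    rw [hhsz]
    exact mul_ne_zero hε0 (by exact_mod_cast (by omega : L k - L (k - 1) ≠ 0))
  have hsz_per : Periodic hsz (2 * K) := fun k ↦ by
    rw [hhsz, hhsz, ← sub_add_eq_add_sub, hLper, hLper, add_sub_add_right_eq_sub]
  have hVp_per : Periodic Vp (2 * K) := fun k ↦ by
    rw [hVp, hVp, hsz_per, ← sub_add_eq_add_sub, hLper, hLper, hv.1, hv.1]
  have hω_per : Periodic ω (2 * K) := fun k ↦ by
    rw [hω, hω, hsz_per, add_right_comm, hsz_per]
  have avg (k : ℤ) : (ω k + ω (k - 1)) / 2 = hsz k * (1 + oh k) := by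
    rw [hω, hω, hoh, sub_add_cancel]
    field_simp [hsz0 k]
    ring
  have window (n : ℤ) : Icc (-n + 1) n = Ioc (-n) (-n + 2 * n) := by
    rw [Icc_add_one_left_eq_Ioc]; ring_nf
  refine ⟨avg, ?_, ?_⟩
  · rw [window, window, hv.sum_Ioc_period_eq_sum_elements hε0 hmono.monotone hLper φ (-K)]
    simp only [← hhsz, ← hVp]
  · rw [window, sum_Ioc_period_mul_avg_eq hω_per (ψ := fun k ↦ φ (Vp k))
      (fun k ↦ congrArg φ (hVp_per k)), ← sum_add_distrib]
    exact sum_congr rfl fun k _ ↦ by rw [avg]; ring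

/-- the node-based (non-local QC) energy satisfies
`½(ω_k + ω_{k−1}) = h_k (1 + ω̂_k)` and
`E_h(v_h) = E(v_h) + Σ_k h_k ω̂_k φ(V'_k)`, where
`E(v_h) = Σ_l ε φ(v'_l) = Σ_k h_k φ(V'_k)`. -/
theorem statement6
    (N K : ℤ) (hN : 1 ≤ N) (hK : 1 ≤ K)
    (ε : ℝ) (hε : ε = (N : ℝ)⁻¹)
    (L : ℤ → ℤ) (hmono : StrictMono L) (hL0 : L 0 = 0)
    (hLper : ∀ k : ℤ, L (k + 2 * K) = L k + 2 * N)
    (hsz : ℤ → ℝ) (hhsz : ∀ k : ℤ, hsz k = ε * ((L k - L (k - 1) : ℤ) : ℝ))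
    (φ : ℝ → ℝ)
    (v : ℤ → ℝ) (hv : IsCoarse N ε L v)
    (Vp : ℤ → ℝ) (hVp : ∀ k : ℤ, Vp k = (v (L k) - v (L (k - 1))) / hsz k)
    (ω : ℤ → ℝ) (hω : ∀ k : ℤ, ω k = (hsz k + hsz (k + 1)) / 2)
    (oh : ℤ → ℝ)
    (hoh : ∀ k : ℤ, oh k = (hsz (k - 1) - 2 * hsz k + hsz (k + 1)) / (4 * hsz k)) :
    (∀ k : ℤ, (ω k + ω (k - 1)) / 2 = hsz k * (1 + oh k)) ∧
    (∑ l ∈ Finset.Icc (-N + 1) N, ε * φ (ε⁻¹ * (v l - v (l - 1))) =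
      ∑ k ∈ Finset.Icc (-K + 1) K, hsz k * φ (Vp k)) ∧
    (∑ k ∈ Finset.Icc (-K + 1) K, ω k * ((φ (Vp k) + φ (Vp (k + 1))) / 2) =
      (∑ k ∈ Finset.Icc (-K + 1) K, hsz k * φ (Vp k)) +
        ∑ k ∈ Finset.Icc (-K + 1) K, hsz k * oh k * φ (Vp k)) :=
  statement6_general N K hN ε hε L hmono hLper hsz hhsz φ v hv Vp hVp ω hω oh hoh
end

section
/- Let φ: ℝ → ℝ be any function. For v_h ∈ X_h with element gradients V'_k, let E(v_h) = Σ_{k=−K+1}^K h_k φ(V'_k) and E_h(v_h) = Σ_{k=−K+1}^K ω_k · ½(φ(V'_k) + φ(V'_{k+1})) with ω_k = ½(h_k + h_{k+1}). Then the quadrature error of the node-based energy equals a weighted sum of second differences of the energy density: E_h(v_h) = E(v_h) + ¼ Σ_{k=−K+1}^K h_k (φ(V'_{k+1}) − 2φ(V'_k) + φ(V'_{k−1})). -/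
/-!
Expanding `ω_k · ½(φ_k + φ_{k+1})` gives `¼(h_k φ_k + h_k φ_{k+1} + h_{k+1} φ_k + h_{k+1} φ_{k+1})`.
Over one full period an index shift leaves a sum unchanged, so `Σ h_{k+1} φ_{k+1} = Σ h_k φ_k` and
`Σ h_{k+1} φ_k = Σ h_k φ_{k-1}`, and the four terms regroup into `Σ h_k φ_k` plus a quarter of the
weighted second differences.
-/

open Finset Function

namespace Function.Periodic

variable {M : Type*} {f : ℤ → M} {a b : ℤ}

theorem sum_Icc_comp_add_one [AddCommMonoid M] (hf : Periodic f (b - a + 1)) :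
    ∑ k ∈ Icc a b, f (k + 1) = ∑ k ∈ Icc a b, f k := by
  rcases lt_or_ge b a with hba | hab
  · simp [Icc_eq_empty_of_lt hba]
  have hwrap : f (b + 1) = f a := by convert hf a using 2; ring
  calc ∑ k ∈ Icc a b, f (k + 1) = ∑ k ∈ Icc (a + 1) (b + 1), f k := by
        rw [← map_add_right_Icc, sum_map]; rfl
    _ = f (b + 1) + ∑ k ∈ Icc (a + 1) b, f k := by
        rw [← insert_Icc_right_eq_Icc_add_one (by omega), sum_insert (by simp)]
    _ = ∑ k ∈ Icc a b, f k := by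
        rw [hwrap, ← sum_insert (by simp), insert_Icc_add_one_left_eq_Icc hab]

theorem sum_Icc_sub_comp_add_one [AddCommGroup M] (hf : Periodic f (b - a + 1)) :
    ∑ k ∈ Icc a b, (f (k + 1) - f k) = 0 := by
  rw [sum_sub_distrib, hf.sum_Icc_comp_add_one, sub_self]

end Function.Periodic

theorem sum_Icc_avg_mul_avg_eq_of_periodic {h g : ℤ → ℝ} {a b : ℤ}
    (hh : Periodic h (b - a + 1)) (hg : Periodic g (b - a + 1)) :
    ∑ k ∈ Icc a b, (h k + h (k + 1)) / 2 * ((g k + g (k + 1)) / 2) =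
      ∑ k ∈ Icc a b, h k * g k +
        1 / 4 * ∑ k ∈ Icc a b, h k * (g (k + 1) - 2 * g k + g (k - 1)) := by
  have hF := (hh.mul hg).sum_Icc_sub_comp_add_one
  have hG := (hh.mul (hg.sub_const 1)).sum_Icc_sub_comp_add_one
  simp only [Pi.mul_apply, add_sub_cancel_right] at hF hG
  have hterm : ∀ k, (h k + h (k + 1)) / 2 * ((g k + g (k + 1)) / 2) =
      h k * g k + 1 / 4 * (h k * (g (k + 1) - 2 * g k + g (k - 1))) +
        1 / 4 * (h (k + 1) * g (k + 1) - h k * g k) +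
        1 / 4 * (h (k + 1) * g k - h k * g (k - 1)) := by
    intro k
    ring
  simp only [hterm, sum_add_distrib, ← mul_sum, hF, hG, mul_zero, add_zero]

theorem periodic_meshSize {N K : ℤ} {ε : ℝ} {L : ℤ → ℤ}
    (hLper : ∀ k : ℤ, L (k + 2 * K) = L k + 2 * N) {hsz : ℤ → ℝ}
    (hhsz : ∀ k : ℤ, hsz k = ε * ((L k - L (k - 1) : ℤ) : ℝ)) :
    Periodic hsz (2 * K) := by
  intro k
  rw [hhsz, hhsz, show k + 2 * K - 1 = k - 1 + 2 * K by ring, hLper, hLper]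
  push_cast
  ring

theorem periodic_elementGradient {N K : ℤ} {L : ℤ → ℤ}
    (hLper : ∀ k : ℤ, L (k + 2 * K) = L k + 2 * N) {hsz : ℤ → ℝ} (hh : Periodic hsz (2 * K))
    {v : ℤ → ℝ} (hv : ∀ l : ℤ, v (l + 2 * N) = v l)
    {Vp : ℤ → ℝ} (hVp : ∀ k : ℤ, Vp k = (v (L k) - v (L (k - 1))) / hsz k) :
    Periodic Vp (2 * K) := by
  intro k
  rw [hVp, hVp, hh, show k + 2 * K - 1 = k - 1 + 2 * K by ring, hLper, hLper, hv, hv]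

theorem statement7_general
    (N K : ℤ)
    (ε : ℝ)
    (L : ℤ → ℤ)
    (hLper : ∀ k : ℤ, L (k + 2 * K) = L k + 2 * N)
    (hsz : ℤ → ℝ) (hhsz : ∀ k : ℤ, hsz k = ε * ((L k - L (k - 1) : ℤ) : ℝ))
    (φ : ℝ → ℝ)
    (v : ℤ → ℝ) (hv : IsCoarse N ε L v)
    (Vp : ℤ → ℝ) (hVp : ∀ k : ℤ, Vp k = (v (L k) - v (L (k - 1))) / hsz k)
    (ω : ℤ → ℝ) (hω : ∀ k : ℤ, ω k = (hsz k + hsz (k + 1)) / 2) :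
    ∑ k ∈ Finset.Icc (-K + 1) K, ω k * ((φ (Vp k) + φ (Vp (k + 1))) / 2) =
      (∑ k ∈ Finset.Icc (-K + 1) K, hsz k * φ (Vp k)) +
        (1 / 4) * ∑ k ∈ Finset.Icc (-K + 1) K,
          hsz k * (φ (Vp (k + 1)) - 2 * φ (Vp k) + φ (Vp (k - 1))) := by
  have hperiod : K - (-K + 1) + 1 = 2 * K := by ring
  have hh : Periodic hsz (2 * K) := periodic_meshSize hLper hhsz
  have hVper : Periodic Vp (2 * K) := periodic_elementGradient hLper hh hv.1 hVp
  simp only [hω]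
  exact sum_Icc_avg_mul_avg_eq_of_periodic (hperiod ▸ hh) (hperiod ▸ hVper.comp φ)

/-- the quadrature error of the node-based energy equals a
weighted sum of second differences of the energy density. -/
theorem statement7
    (N K : ℤ) (hN : 1 ≤ N) (hK : 1 ≤ K)
    (ε : ℝ) (hε : ε = (N : ℝ)⁻¹)
    (L : ℤ → ℤ) (hmono : StrictMono L) (hL0 : L 0 = 0)
    (hLper : ∀ k : ℤ, L (k + 2 * K) = L k + 2 * N)
    (hsz : ℤ → ℝ) (hhsz : ∀ k : ℤ, hsz k = ε * ((L k - L (k - 1) : ℤ) : ℝ))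
    (φ : ℝ → ℝ)
    (v : ℤ → ℝ) (hv : IsCoarse N ε L v)
    (Vp : ℤ → ℝ) (hVp : ∀ k : ℤ, Vp k = (v (L k) - v (L (k - 1))) / hsz k)
    (ω : ℤ → ℝ) (hω : ∀ k : ℤ, ω k = (hsz k + hsz (k + 1)) / 2) :
    ∑ k ∈ Finset.Icc (-K + 1) K, ω k * ((φ (Vp k) + φ (Vp (k + 1))) / 2) =
      (∑ k ∈ Finset.Icc (-K + 1) K, hsz k * φ (Vp k)) +
        (1 / 4) * ∑ k ∈ Finset.Icc (-K + 1) K,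
          hsz k * (φ (Vp (k + 1)) - 2 * φ (Vp k) + φ (Vp (k - 1))) :=
  statement7_general N K ε L hLper hsz hhsz φ v hv Vp hVp ω hω
end

section
/- Assume the harmonic potential φ(t) = t²/2 and a κ-regular mesh for some κ ≥ 1. Let F: X_h → ℝ be any linear functional, let ū_h ∈ X_h be the unique solution of the exact constrained equations Σ_k h_k Ū'_k V'_k = F[v_h] for all v_h ∈ X_h, and let u_h ∈ X_h be the unique solution of the non-local QC equations Σ_k h_k (1 + ω̂_k) U'_k V'_k = F[v_h] for all v_h ∈ X_h, where ω̂_k = (h_{k−1} − 2h_k + h_{k+1})/(4h_k). Define a = ½ Σ_k h_k ω̂_k Ū'_k and ρ(ū_h) = (Σ_k h_k (ω̂_k Ū'_k − a)²)^{1/2}. Then ½(1 + κ⁻¹) ‖ū_h' − u_h'‖_{L²} ≤ ρ(ū_h) ≤ ½(1 + κ) ‖ū_h' − u_h'‖_{L²}, where ‖w‖_{L²}² = Σ_k h_k w_k² for 2K-periodic piecewise constant functions; i.e. the deviation of the node-based QC solution from the best approximation is bounded above and below by the variational crime ρ(ū_h). -/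
open Finset Function

theorem sum_Ioc_sub_sub_one {M : Type*} [AddCommGroup M] (f : ℤ → M) {a b : ℤ} (hab : a ≤ b) :
    ∑ k ∈ Ioc a b, (f k - f (k - 1)) = f b - f a := by
  induction b, hab using Int.leInduction with
  | base => simp
  | succ n hn ih =>
    rw [← insert_Ioc_right_eq_Ioc_add_one hn, sum_insert (by simp), ih, add_sub_cancel_right]
    abel

theorem exists_sub_sub_one_eq {M : Type*} [AddCommGroup M] (g : ℤ → M) :
    ∃ V : ℤ → M, V 0 = 0 ∧ ∀ k, V k - V (k - 1) = g k := by
  refine ⟨fun k => ∑ j ∈ Ioc 0 k, g j - ∑ j ∈ Ioc k 0, g j, by simp, fun k => ?_⟩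
  dsimp only
  rcases le_or_gt k 0 with hk | hk
  · rw [Ioc_eq_empty_of_le hk, Ioc_eq_empty_of_le (by omega : k - 1 ≤ 0),
      ← insert_Ioc_left_eq_Ioc_sub_one hk, sum_insert (by simp)]
    abel
  · rw [Ioc_eq_empty_of_le hk.le, Ioc_eq_empty_of_le (by omega : 0 ≤ k - 1),
      ← insert_Ioc_sub_one_right_eq_Ioc hk, sum_insert (by simp)]
    abel

theorem StrictMono.exists_apply_le_lt_apply_add_one {L : ℤ → ℤ} (hL : StrictMono L) (l : ℤ) :
    ∃ k, L k ≤ l ∧ l < L (k + 1) := by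
  have hshift : Monotone fun k => L k - k :=
    monotone_int_of_le_succ fun k => by have := hL (lt_add_one k); omega
  obtain ⟨k, hk, hmax⟩ := Int.exists_greatest_of_bdd (P := fun k => L k ≤ l)
    ⟨max 0 (l - L 0), fun k hk => by
      have := @hshift 0 k
      simp only at this hk
      omega⟩
    ⟨min 0 (l - L 0), by have := hshift (min_le_left 0 (l - L 0)); simp only at this ⊢; omega⟩
  exact ⟨k, hk, lt_of_not_ge fun h => by have := hmax _ h; omega⟩

theorem StrictMono.eq_of_apply_le_lt {L : ℤ → ℤ} (hL : StrictMono L) {j k l : ℤ}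
    (hj : L j ≤ l ∧ l < L (j + 1)) (hk : L k ≤ l ∧ l < L (k + 1)) : j = k := by
  by_contra hne
  rcases lt_or_gt_of_ne hne with h | h
  · have := hL.monotone (Int.add_one_le_of_lt h); omega
  · have := hL.monotone (Int.add_one_le_of_lt h); omega

theorem exists_periodic_sub_sub_one_eq {M : Type*} [AddCommGroup M] {g : ℤ → M} {a p : ℤ}
    (hp : 0 ≤ p) (hg : Periodic g p) (hsum : ∑ k ∈ Ioc a (a + p), g k = 0) :
    ∃ V : ℤ → M, V 0 = 0 ∧ Periodic V p ∧ ∀ k, V k - V (k - 1) = g k := by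
  obtain ⟨V, hV0, hV⟩ := exists_sub_sub_one_eq g
  refine ⟨V, hV0, fun k => ?_, hV⟩
  -- `V (k + p) - V k` does not depend on `k`, and at `k = a` it is the window sum of `g`.
  have hstep : Periodic (fun k => V (k + p) - V k) 1 := fun k => by
    have h1 := hV (k + 1 + p)
    have h2 := hV (k + 1)
    rw [add_right_comm, add_sub_cancel_right, add_right_comm, hg] at h1
    rw [add_sub_cancel_right] at h2
    simp only
    rw [sub_eq_iff_eq_add.mp h1, sub_eq_iff_eq_add.mp h2]
    abel
  have hshift : V (k + p) - V k = V (a + p) - V a := by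
    simpa using (hstep.int_mul_eq k).trans (hstep.int_mul_eq a).symm
  rw [← sub_eq_zero, hshift, ← sum_Ioc_sub_sub_one V (le_add_of_nonneg_right hp)]
  simpa [hV] using hsum

section WeightedNorm

variable {ι : Type*} {s : Finset ι} {w : ι → ℝ}

theorem sum_mul_mul_le_sqrt_mul_sqrt (hw : ∀ i ∈ s, 0 ≤ w i) (f g : ι → ℝ) :
    ∑ i ∈ s, w i * (f i * g i) ≤ √(∑ i ∈ s, w i * f i ^ 2) * √(∑ i ∈ s, w i * g i ^ 2) := by
  have hsq (f : ι → ℝ) : ∑ i ∈ s, (√(w i) * f i) ^ 2 = ∑ i ∈ s, w i * f i ^ 2 :=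
    sum_congr rfl fun i hi => by rw [mul_pow, Real.sq_sqrt (hw i hi)]
  calc ∑ i ∈ s, w i * (f i * g i) = ∑ i ∈ s, (√(w i) * f i) * (√(w i) * g i) :=
        sum_congr rfl fun i hi => by rw [mul_mul_mul_comm, Real.mul_self_sqrt (hw i hi)]
    _ ≤ _ := Real.sum_mul_le_sqrt_mul_sqrt s _ _
    _ = _ := by rw [hsq, hsq]

theorem mul_sqrt_le_sqrt_of_sum_eq_zero {m e r : ι → ℝ} {α : ℝ} (hw : ∀ i ∈ s, 0 ≤ w i)
    (hm : ∀ i ∈ s, α ≤ m i) (horth : ∑ i ∈ s, w i * ((m i * e i - r i) * e i) = 0) :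
    α * √(∑ i ∈ s, w i * e i ^ 2) ≤ √(∑ i ∈ s, w i * r i ^ 2) := by
  set E := √(∑ i ∈ s, w i * e i ^ 2)
  have hE : E ^ 2 = ∑ i ∈ s, w i * e i ^ 2 :=
    Real.sq_sqrt (sum_nonneg fun i hi => mul_nonneg (hw i hi) (sq_nonneg _))
  have hcoercive : α * E * E ≤ √(∑ i ∈ s, w i * r i ^ 2) * E := by
    calc α * E * E = ∑ i ∈ s, w i * (α * e i ^ 2) := by
          rw [mul_assoc, ← sq, hE, mul_sum]; exact sum_congr rfl fun i _ => by ring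
      _ ≤ ∑ i ∈ s, w i * (m i * e i * e i) := sum_le_sum fun i hi =>
          mul_le_mul_of_nonneg_left (by nlinarith [hm i hi, sq_nonneg (e i)]) (hw i hi)
      _ = ∑ i ∈ s, w i * (r i * e i) := by
          rw [← sub_eq_zero, ← sum_sub_distrib, ← horth]
          exact sum_congr rfl fun i _ => by ring
      _ ≤ _ := sum_mul_mul_le_sqrt_mul_sqrt hw r e
  rcases (show 0 ≤ E from Real.sqrt_nonneg _).eq_or_lt with h0 | hpos
  · rw [← h0, mul_zero]; exact Real.sqrt_nonneg _
  · exact le_of_mul_le_mul_right hcoercive hpos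

theorem sqrt_le_mul_sqrt_of_sum_eq_zero {m e r : ι → ℝ} {β : ℝ} (hw : ∀ i ∈ s, 0 ≤ w i)
    (hβ : 0 ≤ β) (hm : ∀ i ∈ s, |m i| ≤ β)
    (horth : ∑ i ∈ s, w i * ((m i * e i - r i) * r i) = 0) :
    √(∑ i ∈ s, w i * r i ^ 2) ≤ β * √(∑ i ∈ s, w i * e i ^ 2) := by
  set R := √(∑ i ∈ s, w i * r i ^ 2)
  have hR : R * R = ∑ i ∈ s, w i * (r i * r i) := by
    rw [Real.mul_self_sqrt (sum_nonneg fun i hi => mul_nonneg (hw i hi) (sq_nonneg _))]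
    exact sum_congr rfl fun i _ => by ring
  have hme : √(∑ i ∈ s, w i * (m i * e i) ^ 2) ≤ β * √(∑ i ∈ s, w i * e i ^ 2) := by
    rw [← Real.sqrt_sq hβ, ← Real.sqrt_mul (sq_nonneg β), mul_sum]
    refine Real.sqrt_le_sqrt (sum_le_sum fun i hi => ?_)
    have : m i ^ 2 ≤ β ^ 2 := by rw [← sq_abs]; exact pow_le_pow_left₀ (abs_nonneg _) (hm i hi) 2
    rw [mul_pow, mul_left_comm]
    exact mul_le_mul_of_nonneg_right this (mul_nonneg (hw i hi) (sq_nonneg _))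
  have hbound : R * R ≤ β * √(∑ i ∈ s, w i * e i ^ 2) * R := by
    calc R * R = ∑ i ∈ s, w i * (m i * e i * r i) := by
          rw [hR, ← sub_eq_zero, ← sum_sub_distrib, ← neg_eq_zero, ← horth, ← sum_neg_distrib]
          exact sum_congr rfl fun i _ => by ring
      _ ≤ √(∑ i ∈ s, w i * (m i * e i) ^ 2) * R := sum_mul_mul_le_sqrt_mul_sqrt hw _ r
      _ ≤ _ := mul_le_mul_of_nonneg_right hme (Real.sqrt_nonneg _)
  rcases (show 0 ≤ R from Real.sqrt_nonneg _).eq_or_lt with h0 | hpos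
  · rw [← h0]; exact mul_nonneg hβ (Real.sqrt_nonneg _)
  · exact le_of_mul_le_mul_right hbound hpos

theorem galerkin_orthogonality {ω Ū U g : ι → ℝ} {a c : ℝ}
    (hexact : ∑ i ∈ s, w i * (Ū i * g i) = c) (hqc : ∑ i ∈ s, w i * ((1 + ω i) * U i * g i) = c)
    (hg : ∑ i ∈ s, w i * g i = 0) :
    ∑ i ∈ s, w i * (((1 + ω i) * (Ū i - U i) - (ω i * Ū i - a)) * g i) = 0 := by
  calc _ = ∑ i ∈ s, w i * (Ū i * g i) - ∑ i ∈ s, w i * ((1 + ω i) * U i * g i) +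
        a * ∑ i ∈ s, w i * g i := by
        rw [mul_sum, ← sum_sub_distrib, ← sum_add_distrib]
        exact sum_congr rfl fun i _ => by ring
    _ = 0 := by rw [hexact, hqc, hg]; ring

end WeightedNorm

section Mesh

variable {N K : ℤ} {ε : ℝ} {L : ℤ → ℤ}

def meshWidth (ε : ℝ) (L : ℤ → ℤ) (k : ℤ) : ℝ := ε * ((L k - L (k - 1) : ℤ) : ℝ)

noncomputable def nodalGrad (ε : ℝ) (L : ℤ → ℤ) (v : ℤ → ℝ) (k : ℤ) : ℝ :=
  (v (L k) - v (L (k - 1))) / meshWidth ε L k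

theorem meshWidth_pos (hε : 0 < ε) (hL : StrictMono L) (k : ℤ) : 0 < meshWidth ε L k := by
  have := hL (sub_one_lt k)
  exact mul_pos hε (by exact_mod_cast sub_pos.mpr this)

theorem periodic_meshWidth (hLper : ∀ k, L (k + 2 * K) = L k + 2 * N) :
    Periodic (meshWidth ε L) (2 * K) := fun k => by
  simp only [meshWidth, add_sub_right_comm k, hLper]
  ring_nf

theorem sum_meshWidth (hK : 0 ≤ K) (hLper : ∀ k, L (k + 2 * K) = L k + 2 * N) :
    ∑ k ∈ Ioc (-K) K, meshWidth ε L k = ε * (2 * N) := by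
  have hLK : L K = L (-K) + 2 * N := by rw [← hLper]; ring_nf
  simp only [meshWidth, ← mul_sum, Int.cast_sub]
  rw [sum_Ioc_sub_sub_one (fun k => (L k : ℝ)) (by omega), hLK]
  push_cast
  ring

theorem nodalGrad_sub (v w : ℤ → ℝ) (k : ℤ) :
    nodalGrad ε L (v - w) k = nodalGrad ε L v k - nodalGrad ε L w k := by
  simp only [nodalGrad, Pi.sub_apply]
  ring

noncomputable def qcWeight (h : ℤ → ℝ) (k : ℤ) : ℝ := (h (k - 1) - 2 * h k + h (k + 1)) / (4 * h k)

theorem Function.Periodic.qcWeight {h : ℤ → ℝ} {p : ℤ} (hh : Periodic h p) :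
    Periodic (qcWeight h) p := fun k => by
  simp only [_root_.qcWeight, add_sub_right_comm k p, add_right_comm k p, hh _]

theorem one_add_div_mem_Icc_of_ratio_bounds {κ p q r : ℝ} (hκ : 0 < κ) (hq : 0 < q)
    (hpq : κ⁻¹ * p ≤ q ∧ q ≤ κ * p) (hqr : κ⁻¹ * q ≤ r ∧ r ≤ κ * q) :
    1 + (p - 2 * q + r) / (4 * q) ∈ Set.Icc (1 / 2 * (1 + κ⁻¹)) (1 / 2 * (1 + κ)) := by
  have hp_lo : κ⁻¹ * q ≤ p := by
    calc κ⁻¹ * q ≤ κ⁻¹ * (κ * p) := by gcongr; exact hpq.2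
      _ = p := by field_simp
  have hp_hi : p ≤ κ * q := by
    calc p = κ * (κ⁻¹ * p) := by field_simp
      _ ≤ κ * q := by gcongr; exact hpq.1
  have hsplit : 1 + (p - 2 * q + r) / (4 * q) = 1 / 2 + (p + r) / (4 * q) := by
    field_simp; ring
  rw [hsplit, Set.mem_Icc]
  constructor
  · have : κ⁻¹ / 2 ≤ (p + r) / (4 * q) := by rw [le_div_iff₀ (by positivity)]; linarith
    linarith
  · have : (p + r) / (4 * q) ≤ κ / 2 := by rw [div_le_iff₀ (by positivity)]; linarith
    linarith

theorem one_add_qcWeight_mem_Icc {h : ℤ → ℝ} {κ : ℝ} (hκ : 0 < κ) (hpos : ∀ k, 0 < h k)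
    (hreg : ∀ k, κ⁻¹ * h (k - 1) ≤ h k ∧ h k ≤ κ * h (k - 1)) (k : ℤ) :
    1 + qcWeight h k ∈ Set.Icc (1 / 2 * (1 + κ⁻¹)) (1 / 2 * (1 + κ)) := by
  have hnext := hreg (k + 1)
  rw [add_sub_cancel_right] at hnext
  exact one_add_div_mem_Icc_of_ratio_bounds hκ (hpos k) (hreg k) hnext

namespace IsCoarse

theorem sub {v w : ℤ → ℝ} (hv : IsCoarse N ε L v) (hw : IsCoarse N ε L w) :
    IsCoarse N ε L (v - w) := by
  obtain ⟨hv_per, hv0, hv_aff⟩ := hv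
  obtain ⟨hw_per, hw0, hw_aff⟩ := hw
  refine ⟨fun l => by simp [hv_per, hw_per], by simp [hv0, hw0], fun k l h1 h2 => ?_⟩
  simp only [Pi.sub_apply, hv_aff k l h1 h2, hw_aff k l h1 h2]
  ring

theorem periodic_nodalGrad {v : ℤ → ℝ} (hv : IsCoarse N ε L v)
    (hLper : ∀ k, L (k + 2 * K) = L k + 2 * N) : Periodic (nodalGrad ε L v) (2 * K) := fun k => by
  simp only [nodalGrad, add_sub_right_comm k, hLper, hv.1, periodic_meshWidth hLper k]

theorem sum_meshWidth_mul_nodalGrad {v : ℤ → ℝ} (hv : IsCoarse N ε L v) (hε : 0 < ε)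
    (hL : StrictMono L) (hK : 0 ≤ K) (hLper : ∀ k, L (k + 2 * K) = L k + 2 * N) :
    ∑ k ∈ Ioc (-K) K, meshWidth ε L k * nodalGrad ε L v k = 0 := by
  have hLK : L K = L (-K) + 2 * N := by rw [← hLper]; ring_nf
  simp only [nodalGrad, mul_div_cancel₀ _ (meshWidth_pos hε hL _).ne']
  rw [sum_Ioc_sub_sub_one (fun k => v (L k)) (by omega), hLK, hv.1, sub_self]

end IsCoarse

theorem exists_isCoarse_interpolant (hε : ε ≠ 0) (hL : StrictMono L) (hL0 : L 0 = 0)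
    (hLper : ∀ k, L (k + 2 * K) = L k + 2 * N) {V : ℤ → ℝ} (hV0 : V 0 = 0)
    (hVper : Periodic V (2 * K)) : ∃ v, IsCoarse N ε L v ∧ ∀ k, v (L k) = V k := by
  choose c hc using hL.exists_apply_le_lt_apply_add_one
  have hc_eq {l k : ℤ} (h : L k ≤ l ∧ l < L (k + 1)) : c l = k := hL.eq_of_apply_le_lt (hc l) h
  have hgap (k : ℤ) : ((L k - L (k - 1) : ℤ) : ℝ) ≠ 0 := by
    have := hL (sub_one_lt k); norm_cast; omega
  set v : ℤ → ℝ := fun l => V (c l) +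
    ((l - L (c l) : ℤ) : ℝ) / ((L (c l + 1) - L (c l) : ℤ) : ℝ) * (V (c l + 1) - V (c l))
  have hnode (k : ℤ) : v (L k) = V k := by
    simp [v, hc_eq ⟨le_rfl, hL (lt_add_one k)⟩]
  have hcell {k l : ℤ} (h1 : L (k - 1) ≤ l) (h2 : l ≤ L k) : v l = V (k - 1) +
      ((l - L (k - 1) : ℤ) : ℝ) / ((L k - L (k - 1) : ℤ) : ℝ) * (V k - V (k - 1)) := by
    rcases h2.lt_or_eq with h2 | rfl
    · simp only [v, hc_eq (k := k - 1) ⟨h1, by rwa [sub_add_cancel]⟩, sub_add_cancel]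
    · rw [hnode, div_self (hgap _)]; ring
  refine ⟨v, ⟨fun l => ?_, ?_, fun k l h1 h2 => ?_⟩, hnode⟩
  · have hshift : c (l + 2 * N) = c l + 2 * K := hc_eq <| by
      rw [add_right_comm, hLper, hLper]; have := hc l; omega
    simp only [v, hshift, add_right_comm _ (2 * K) 1, hLper, hVper (c l), hVper (c l + 1)]
    push_cast
    ring
  · simpa [hL0, hV0] using hnode 0
  · have := hgap k
    rw [hcell h1 h2, hnode, hnode]
    field_simp

theorem exists_isCoarse_nodalGrad_eq (hε : 0 < ε) (hL : StrictMono L) (hL0 : L 0 = 0)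
    (hLper : ∀ k, L (k + 2 * K) = L k + 2 * N) (hK : 0 ≤ K) {G : ℤ → ℝ}
    (hG : Periodic G (2 * K)) (hsum : ∑ k ∈ Ioc (-K) K, meshWidth ε L k * G k = 0) :
    ∃ v, IsCoarse N ε L v ∧ ∀ k, nodalGrad ε L v k = G k := by
  obtain ⟨V, hV0, hVper, hV⟩ := exists_periodic_sub_sub_one_eq (a := -K) (by omega)
    ((periodic_meshWidth hLper).mul hG) (by rwa [show -K + 2 * K = K by ring])
  obtain ⟨v, hv, hnode⟩ := exists_isCoarse_interpolant hε.ne' hL hL0 hLper hV0 hVper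
  refine ⟨v, hv, fun k => ?_⟩
  rw [nodalGrad, hnode, hnode, hV, Pi.mul_apply, mul_div_cancel_left₀ _ (meshWidth_pos hε hL k).ne']

end Mesh

/-- for the harmonic potential on a κ-regular mesh, the deviation
of the non-local QC solution `u_h` from the best approximation `ū_h` is bounded
above and below by the variational crime `ρ(ū_h)`:
`½(1+κ⁻¹)‖ū_h' − u_h'‖ ≤ ρ(ū_h) ≤ ½(1+κ)‖ū_h' − u_h'‖`. -/
theorem statement10
    (N K : ℤ) (hN : 1 ≤ N) (hK : 1 ≤ K)
    (ε : ℝ) (hε : ε = (N : ℝ)⁻¹)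
    (L : ℤ → ℤ) (hmono : StrictMono L) (hL0 : L 0 = 0)
    (hLper : ∀ k : ℤ, L (k + 2 * K) = L k + 2 * N)
    (hsz : ℤ → ℝ) (hhsz : ∀ k : ℤ, hsz k = ε * ((L k - L (k - 1) : ℤ) : ℝ))
    (κ : ℝ) (hκ : 1 ≤ κ)
    (hreg : ∀ k : ℤ, κ⁻¹ * hsz (k - 1) ≤ hsz k ∧ hsz k ≤ κ * hsz (k - 1))
    (oh : ℤ → ℝ)
    (hoh : ∀ k : ℤ, oh k = (hsz (k - 1) - 2 * hsz k + hsz (k + 1)) / (4 * hsz k))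
    (F : (ℤ → ℝ) → ℝ)
    (ub u : ℤ → ℝ) (hub : IsCoarse N ε L ub) (hu : IsCoarse N ε L u)
    (Ubp : ℤ → ℝ) (hUbp : ∀ k : ℤ, Ubp k = (ub (L k) - ub (L (k - 1))) / hsz k)
    (Up : ℤ → ℝ) (hUp : ∀ k : ℤ, Up k = (u (L k) - u (L (k - 1))) / hsz k)
    -- `ū_h` solves the exact constrained equations
    (hexact : ∀ v : ℤ → ℝ, IsCoarse N ε L v →
      ∑ k ∈ Finset.Icc (-K + 1) K,
        hsz k * (Ubp k * ((v (L k) - v (L (k - 1))) / hsz k)) = F v)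
    -- `u_h` solves the non-local QC equations
    (hqc : ∀ v : ℤ → ℝ, IsCoarse N ε L v →
      ∑ k ∈ Finset.Icc (-K + 1) K,
        hsz k * ((1 + oh k) * Up k * ((v (L k) - v (L (k - 1))) / hsz k)) = F v)
    (a : ℝ) (ha : a = (1 / 2) * ∑ k ∈ Finset.Icc (-K + 1) K, hsz k * (oh k * Ubp k))
    (ρ : ℝ)
    (hρ : ρ = Real.sqrt (∑ k ∈ Finset.Icc (-K + 1) K, hsz k * (oh k * Ubp k - a) ^ 2)) :
    (1 / 2) * (1 + κ⁻¹) *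
        Real.sqrt (∑ k ∈ Finset.Icc (-K + 1) K, hsz k * (Ubp k - Up k) ^ 2) ≤ ρ ∧
      ρ ≤ (1 / 2) * (1 + κ) *
        Real.sqrt (∑ k ∈ Finset.Icc (-K + 1) K, hsz k * (Ubp k - Up k) ^ 2) := by
  obtain rfl : hsz = meshWidth ε L := funext hhsz
  obtain rfl : oh = qcWeight (meshWidth ε L) := funext hoh
  obtain rfl : Ubp = nodalGrad ε L ub := funext hUbp
  obtain rfl : Up = nodalGrad ε L u := funext hUp
  rw [Icc_add_one_left_eq_Ioc] at hexact hqc ha hρ ⊢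
  subst hρ
  have hε0 : 0 < ε := hε ▸ inv_pos.mpr (by exact_mod_cast hN)
  have hK0 : 0 ≤ K := by omega
  have hh := meshWidth_pos hε0 hmono
  have hκ0 : 0 < κ := by linarith
  have hm := one_add_qcWeight_mem_Icc hκ0 hh hreg
  have horth (v : ℤ → ℝ) (hv : IsCoarse N ε L v) :=
    galerkin_orthogonality (g := nodalGrad ε L v) (a := a) (hexact v hv) (hqc v hv)
      (hv.sum_meshWidth_mul_nodalGrad hε0 hmono hK0 hLper)
  have hr_sum : ∑ k ∈ Ioc (-K) K,
      meshWidth ε L k * (qcWeight (meshWidth ε L) k * nodalGrad ε L ub k - a) = 0 := by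
    simp only [mul_sub, sum_sub_distrib]
    have htotal : ε * (2 * N) = 2 := by rw [hε]; field_simp
    rw [← sum_mul, sum_meshWidth hK0 hLper, htotal, ha]
    ring
  obtain ⟨v, hv, hvgrad⟩ := exists_isCoarse_nodalGrad_eq hε0 hmono hL0 hLper hK0
    (fun k => by
      simp only [(periodic_meshWidth hLper).qcWeight k, hub.periodic_nodalGrad hLper k]) hr_sum
  constructor
  · refine mul_sqrt_le_sqrt_of_sum_eq_zero (fun k _ => (hh k).le) (fun k _ => (hm k).1) ?_
    simpa only [nodalGrad_sub] using horth _ (hub.sub hu)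
  · refine sqrt_le_mul_sqrt_of_sum_eq_zero (fun k _ => (hh k).le) (by positivity)
      (fun k _ => abs_le.mpr ⟨by linarith [(hm k).1, inv_pos.mpr hκ0], (hm k).2⟩) ?_
    simpa only [hvgrad] using horth v hv
end

section
/- Assume the harmonic potential φ(t) = t²/2 and a κ-regular mesh for some κ ≥ 1. Then the Hessian of the non-local QC energy, E_h''[v_h, v_h] = Σ_{k=−K+1}^K h_k (1 + ω̂_k)(V'_k)² with ω̂_k = (h_{k−1} − 2h_k + h_{k+1})/(4h_k), satisfies the two-sided bound (½(1 + κ⁻¹))² ‖v_h'‖_{L²}² ≤ E_h''[v_h, v_h] ≤ (½(1 + κ))² ‖v_h'‖_{L²}² for all v_h ∈ X_h, where ‖v_h'‖_{L²}² = Σ_k h_k (V'_k)². In particular E_h'' is positive definite on X_h. -/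
theorem eq_of_forall_eq_sub_one {α : Type*} {f : ℤ → α} {a b : ℤ}
    (hf : ∀ k, a < k → k ≤ b → f k = f (k - 1)) {i : ℤ} (hai : a ≤ i) (hib : i ≤ b) :
    f i = f a := by
  induction i, hai using Int.leInduction with
  | base => rfl
  | succ i hai ih =>
    rw [hf (i + 1) (by omega) hib, add_sub_cancel_right, ih (by omega)]

namespace IsCoarse

variable {N : ℤ} {ε : ℝ} {L : ℤ → ℤ} {v : ℤ → ℝ}

theorem eq_zero_of_nodes_eq_zero_of_mem_Icc (hv : IsCoarse N ε L v) {a b : ℤ} (hab : a ≤ b)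
    (hnodes : ∀ k, a ≤ k → k ≤ b → v (L k) = 0) {l : ℤ} (hal : L a ≤ l) (hlb : l ≤ L b) :
    v l = 0 := by
  induction b, hab using Int.leInduction generalizing l with
  | base => rw [le_antisymm hlb hal, hnodes a le_rfl le_rfl]
  | succ b hab ih =>
    rcases le_or_gt l (L b) with hl | hl
    · exact ih (fun k hak hkb => hnodes k hak (by omega)) hal hl
    · have hint := hv.2.2 (b + 1) l (by rw [add_sub_cancel_right]; exact hl.le) hlb
      rw [add_sub_cancel_right, hnodes b hab (by omega), hnodes (b + 1) (by omega) le_rfl] at hint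
      simpa using hint

theorem eq_zero_of_nodes_eq_zero (hv : IsCoarse N ε L v) (hN : 0 < N) {a b : ℤ} (hab : a ≤ b)
    (hLab : L b = L a + 2 * N) (hnodes : ∀ k, a ≤ k → k ≤ b → v (L k) = 0) : v = 0 := by
  have hper : Function.Periodic v (2 * N) := hv.1
  funext l
  obtain ⟨y, ⟨hay, hyb⟩, hly⟩ := hper.exists_mem_Ico (by omega) l (L a)
  rw [hly]
  exact hv.eq_zero_of_nodes_eq_zero_of_mem_Icc hab hnodes hay (by omega)

theorem eq_zero_of_nodal_eq (hv : IsCoarse N ε L v) (hN : 0 < N) (hL0 : L 0 = 0) {a b : ℤ}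
    (ha : a ≤ 0) (hb : 0 ≤ b) (hLab : L b = L a + 2 * N)
    (hstep : ∀ k, a < k → k ≤ b → v (L k) = v (L (k - 1))) : v = 0 := by
  refine hv.eq_zero_of_nodes_eq_zero hN (ha.trans hb) hLab fun k hak hkb => ?_
  calc v (L k) = v (L a) := eq_of_forall_eq_sub_one (f := fun j => v (L j)) hstep hak hkb
    _ = v (L 0) := (eq_of_forall_eq_sub_one (f := fun j => v (L j)) hstep ha hb).symm
    _ = 0 := by rw [hL0, hv.2.1]

end IsCoarse

/-- The weight `h_k (1 + ω̂_k)` of the `k`-th element in the Hessian of the harmonic energy. -/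
noncomputable def meshAverage (h : ℤ → ℝ) (k : ℤ) : ℝ :=
  (h (k - 1) + 2 * h k + h (k + 1)) / 4

section Mesh

variable {h : ℤ → ℝ} {κ : ℝ}

theorem mul_one_add_eq_meshAverage (k : ℤ) (hk : h k ≠ 0) :
    h k * (1 + (h (k - 1) - 2 * h k + h (k + 1)) / (4 * h k)) = meshAverage h k := by
  unfold meshAverage
  field_simp
  ring

theorem neighbours_le_of_regular (hκ : 0 < κ)
    (hreg : ∀ k, κ⁻¹ * h (k - 1) ≤ h k ∧ h k ≤ κ * h (k - 1)) (k : ℤ) :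
    (κ⁻¹ * h k ≤ h (k - 1) ∧ h (k - 1) ≤ κ * h k) ∧
      (κ⁻¹ * h k ≤ h (k + 1) ∧ h (k + 1) ≤ κ * h k) := by
  obtain ⟨hprev_lo, hprev_hi⟩ := hreg k
  refine ⟨⟨?_, ?_⟩, by simpa using hreg (k + 1)⟩
  · rwa [inv_mul_le_iff₀ hκ]
  · rwa [inv_mul_le_iff₀ hκ] at hprev_lo

theorem half_one_add_inv_mul_le_meshAverage (hκ : 0 < κ)
    (hreg : ∀ k, κ⁻¹ * h (k - 1) ≤ h k ∧ h k ≤ κ * h (k - 1)) (k : ℤ) :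
    (1 / 2) * (1 + κ⁻¹) * h k ≤ meshAverage h k := by
  obtain ⟨⟨hprev, -⟩, ⟨hnext, -⟩⟩ := neighbours_le_of_regular hκ hreg k
  unfold meshAverage
  linarith

theorem meshAverage_le_half_one_add_mul (hκ : 0 < κ)
    (hreg : ∀ k, κ⁻¹ * h (k - 1) ≤ h k ∧ h k ≤ κ * h (k - 1)) (k : ℤ) :
    meshAverage h k ≤ (1 / 2) * (1 + κ) * h k := by
  obtain ⟨⟨-, hprev⟩, ⟨-, hnext⟩⟩ := neighbours_le_of_regular hκ hreg k
  unfold meshAverage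
  linarith

theorem sq_mul_sum_le_sum_meshAverage_mul_sq (hκ : 1 ≤ κ)
    (hreg : ∀ k, κ⁻¹ * h (k - 1) ≤ h k ∧ h k ≤ κ * h (k - 1)) (hnonneg : ∀ k, 0 ≤ h k)
    (s : Finset ℤ) (V : ℤ → ℝ) :
    ((1 / 2) * (1 + κ⁻¹)) ^ 2 * (∑ k ∈ s, h k * V k ^ 2) ≤ ∑ k ∈ s, meshAverage h k * V k ^ 2 := by
  have hc : ((1 / 2) * (1 + κ⁻¹)) ^ 2 ≤ (1 / 2) * (1 + κ⁻¹) :=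
    pow_le_of_le_one (by positivity) (by linarith [inv_le_one_of_one_le₀ hκ]) two_ne_zero
  rw [Finset.mul_sum]
  refine Finset.sum_le_sum fun k _ => ?_
  have := hnonneg k
  calc ((1 / 2) * (1 + κ⁻¹)) ^ 2 * (h k * V k ^ 2)
      _ ≤ (1 / 2) * (1 + κ⁻¹) * h k * V k ^ 2 := by rw [← mul_assoc]; gcongr
      _ ≤ meshAverage h k * V k ^ 2 := by
        gcongr; exact half_one_add_inv_mul_le_meshAverage (by positivity) hreg k

theorem sum_meshAverage_mul_sq_le_sq_mul_sum (hκ : 1 ≤ κ)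
    (hreg : ∀ k, κ⁻¹ * h (k - 1) ≤ h k ∧ h k ≤ κ * h (k - 1)) (hnonneg : ∀ k, 0 ≤ h k)
    (s : Finset ℤ) (V : ℤ → ℝ) :
    ∑ k ∈ s, meshAverage h k * V k ^ 2 ≤ ((1 / 2) * (1 + κ)) ^ 2 * (∑ k ∈ s, h k * V k ^ 2) := by
  have hc : (1 / 2) * (1 + κ) ≤ ((1 / 2) * (1 + κ)) ^ 2 :=
    le_self_pow₀ (by linarith) two_ne_zero
  rw [Finset.mul_sum]
  refine Finset.sum_le_sum fun k _ => ?_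
  have := hnonneg k
  calc meshAverage h k * V k ^ 2
      _ ≤ (1 / 2) * (1 + κ) * h k * V k ^ 2 := by
        gcongr; exact meshAverage_le_half_one_add_mul (by positivity) hreg k
      _ ≤ ((1 / 2) * (1 + κ)) ^ 2 * (h k * V k ^ 2) := by rw [← mul_assoc]; gcongr

end Mesh

/-- for the harmonic potential on a κ-regular mesh, the Hessian
of the non-local QC energy satisfies the two-sided bound
`(½(1+κ⁻¹))² ‖v_h'‖² ≤ E_h''[v_h, v_h] ≤ (½(1+κ))² ‖v_h'‖²`; in particular it
is positive definite on `X_h`. -/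
theorem statement11
    (N K : ℤ) (hN : 1 ≤ N) (hK : 1 ≤ K)
    (ε : ℝ) (hε : ε = (N : ℝ)⁻¹)
    (L : ℤ → ℤ) (hmono : StrictMono L) (hL0 : L 0 = 0)
    (hLper : ∀ k : ℤ, L (k + 2 * K) = L k + 2 * N)
    (hsz : ℤ → ℝ) (hhsz : ∀ k : ℤ, hsz k = ε * ((L k - L (k - 1) : ℤ) : ℝ))
    (κ : ℝ) (hκ : 1 ≤ κ)
    (hreg : ∀ k : ℤ, κ⁻¹ * hsz (k - 1) ≤ hsz k ∧ hsz k ≤ κ * hsz (k - 1))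
    (oh : ℤ → ℝ)
    (hoh : ∀ k : ℤ, oh k = (hsz (k - 1) - 2 * hsz k + hsz (k + 1)) / (4 * hsz k))
    (v : ℤ → ℝ) (hv : IsCoarse N ε L v)
    (Vp : ℤ → ℝ) (hVp : ∀ k : ℤ, Vp k = (v (L k) - v (L (k - 1))) / hsz k) :
    ((1 / 2) * (1 + κ⁻¹)) ^ 2 * (∑ k ∈ Finset.Icc (-K + 1) K, hsz k * Vp k ^ 2) ≤
        (∑ k ∈ Finset.Icc (-K + 1) K, hsz k * ((1 + oh k) * Vp k ^ 2)) ∧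
      (∑ k ∈ Finset.Icc (-K + 1) K, hsz k * ((1 + oh k) * Vp k ^ 2)) ≤
        ((1 / 2) * (1 + κ)) ^ 2 * (∑ k ∈ Finset.Icc (-K + 1) K, hsz k * Vp k ^ 2) ∧
      (v ≠ 0 → 0 < ∑ k ∈ Finset.Icc (-K + 1) K, hsz k * ((1 + oh k) * Vp k ^ 2)) := by
  have hpos : ∀ k, 0 < hsz k := fun k => by
    have hgap : (0 : ℝ) < ((L k - L (k - 1) : ℤ) : ℝ) := by
      exact_mod_cast sub_pos.mpr (hmono (sub_one_lt k))
    rw [hhsz, hε]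
    positivity
  have hsummand : ∀ k, hsz k * ((1 + oh k) * Vp k ^ 2) = meshAverage hsz k * Vp k ^ 2 :=
    fun k => by rw [← mul_assoc, hoh, mul_one_add_eq_meshAverage k (hpos k).ne']
  have hnonneg : ∀ k, 0 ≤ hsz k := fun k => (hpos k).le
  simp only [hsummand]
  have hlower := sq_mul_sum_le_sum_meshAverage_mul_sq hκ hreg hnonneg (Finset.Icc (-K + 1) K) Vp
  refine ⟨hlower, sum_meshAverage_mul_sq_le_sq_mul_sum hκ hreg hnonneg _ Vp,
    fun hv0 => hlower.trans_lt' (mul_pos (by positivity) ?_)⟩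
  obtain ⟨k, hk, hVk⟩ : ∃ k ∈ Finset.Icc (-K + 1) K, Vp k ≠ 0 := by
    by_contra! hflat
    refine hv0 (hv.eq_zero_of_nodal_eq (by omega) hL0 (a := -K) (b := K) (by omega) (by omega)
      (by rw [← hLper (-K)]; ring_nf) fun k hk1 hk2 => ?_)
    have hVk := hflat k (Finset.mem_Icc.mpr ⟨by omega, hk2⟩)
    rw [hVp, div_eq_zero_iff, sub_eq_zero] at hVk
    exact hVk.resolve_right (hpos k).ne'
  exact Finset.sum_pos' (fun j _ => mul_nonneg (hnonneg j) (sq_nonneg _))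
    ⟨k, hk, mul_pos (hpos k) (sq_pos_of_ne_zero hVk)⟩
end

section
/- Let ψ ∈ C⁴(ℝ) with ψ' > 0 and ψ(x + 2) = ψ(x) + 2 for all x. Let K ≥ 1, h = 1/K, and define the smooth mesh h_k = ψ(hk) − ψ(h(k−1)) for k ∈ ℤ, and ω̂_k = (h_{k−1} − 2h_k + h_{k+1})/(4h_k). Then there exist h₀ > 0 and C > 0, depending only on ψ, such that for all h ≤ h₀ and all k, |ω̂_k − ¼ h² ψ'''(x̄_k)/ψ'(x̄_k)| ≤ C h³, where x̄_k = (k − ½)h. In particular |ω̂_k| ≤ C' h² with C' = ¼ max_{x∈[−1,1]} |ψ'''(x)/ψ'(x)| + C h₀. -/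
/-!
Expand `ψ` to fourth order about the reference midpoint `x̄_k` of the element. The numerator
`h_{k-1} - 2 h_k + h_{k+1}` is a third difference of the nodes, equal to `h³ ψ'''(x̄_k) + O(h⁴)`,
while `h_k = h ψ'(x̄_k) + O(h³)` and `h_k ≥ h · min ψ'` by the mean value theorem, so the quotient
is `¼ h² ψ'''(x̄_k) / ψ'(x̄_k) + O(h³)`. Since `ψ (x + 2) = ψ x + 2`, the derivatives of `ψ` are
2-periodic, which makes every constant (bounds on `ψ''''`, `ψ'''`, `ψ'''/ψ'` and `min ψ' > 0`)
uniform in `k`.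
-/

open Set Function
open scoped Nat

theorem deriv_periodic_of_map_add {ψ : ℝ → ℝ} {c d : ℝ} (h : ∀ x, ψ (x + c) = ψ x + d) :
    Periodic (deriv ψ) c := fun x => by
  have key := deriv_comp_add_const (f := ψ) (a := c) (x := x)
  simp only [h, deriv_add_const] at key
  exact key.symm

theorem Function.Periodic.iteratedDeriv {g : ℝ → ℝ} {c : ℝ} (hg : Periodic g c) (n : ℕ) :
    Periodic (iteratedDeriv n g) c := fun x => by
  have key := congrFun (iteratedDeriv_comp_add_const (n := n) (f := g) (s := c)) x
  rw [show (fun z => g (z + c)) = g from funext hg] at key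
  exact key.symm

theorem Function.Periodic.exists_forall_le {g : ℝ → ℝ} {c : ℝ} (hg : Periodic g c) (hc : c ≠ 0)
    (hcont : Continuous g) : ∃ y, ∀ x, g y ≤ g x := by
  obtain ⟨_, ⟨y, rfl⟩, hy⟩ := (hg.compact_of_continuous hc hcont).exists_isLeast (range_nonempty g)
  exact ⟨y, fun x => hy (mem_range_self x)⟩

theorem Function.Periodic.le_sSup_image_Icc {g : ℝ → ℝ} {c : ℝ} (hg : Periodic g c) (hc : 0 < c)
    (hcont : Continuous g) (a x : ℝ) : g x ≤ sSup (g '' Icc a (a + c)) := by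
  rw [hg.image_Icc hc]
  exact le_csSup (hg.compact_of_continuous hc.ne' hcont).bddAbove (mem_range_self x)

theorem abs_sub_taylor_le {f : ℝ → ℝ} {n : ℕ} {M : ℝ} (hf : ContDiff ℝ (n + 1) f)
    (hM : ∀ y, |iteratedDeriv (n + 1) f y| ≤ M) (x t : ℝ) :
    |f (x + t) - ∑ k ∈ Finset.range (n + 1), t ^ k / k ! * iteratedDeriv k f x| ≤
      M * |t| ^ (n + 1) / (n + 1)! := by
  rcases eq_or_ne t 0 with rfl | ht
  · simp [Finset.sum_range_succ']
  obtain ⟨y, -, hy⟩ :=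
    taylor_mean_remainder_lagrange_iteratedDeriv (x₀ := x) (x := x + t) (by simpa) hf.contDiffOn
  have htaylor : taylorWithinEval f n (uIcc x (x + t)) x (x + t) =
      ∑ k ∈ Finset.range (n + 1), t ^ k / k ! * iteratedDeriv k f x := by
    rw [taylor_within_apply]
    refine Finset.sum_congr rfl fun k hk => ?_
    rw [iteratedDerivWithin_eq_iteratedDeriv (uniqueDiffOn_uIcc (by simpa))
      (hf.contDiffAt.of_le ?_) left_mem_uIcc, add_sub_cancel_left, smul_eq_mul]
    · ring
    · exact_mod_cast (Finset.mem_range.mp hk).le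
  rw [← htaylor, hy, abs_div, abs_mul, abs_pow, add_sub_cancel_left, Nat.abs_cast]
  gcongr
  exact hM y

theorem abs_sub_taylor_three_le {f : ℝ → ℝ} {M : ℝ} (hf : ContDiff ℝ 4 f)
    (hM : ∀ y, |iteratedDeriv 4 f y| ≤ M) (x t : ℝ) :
    |f (x + t) - (f x + t * deriv f x + t ^ 2 / 2 * iteratedDeriv 2 f x +
      t ^ 3 / 6 * iteratedDeriv 3 f x)| ≤ M * t ^ 4 / 24 := by
  have key := abs_sub_taylor_le (n := 3) hf hM x t
  simp only [Finset.sum_range_succ, Finset.sum_range_zero] at key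
  norm_num [Nat.factorial, Even.pow_abs] at key
  convert key using 3

section FiniteDifferences

variable {f : ℝ → ℝ} {M : ℝ} (hf : ContDiff ℝ 4 f) (hM : ∀ y, |iteratedDeriv 4 f y| ≤ M)
include hf hM

theorem abs_centralDiff_sub_le (x h : ℝ) :
    |f (x + h / 2) - f (x - h / 2) - (h * deriv f x + h ^ 3 / 24 * iteratedDeriv 3 f x)| ≤
      M * h ^ 4 / 192 := by
  have right := abs_le.mp (abs_sub_taylor_three_le hf hM x (h / 2))
  have left := abs_le.mp (abs_sub_taylor_three_le hf hM x (-(h / 2)))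
  rw [← sub_eq_add_neg] at left
  rw [abs_le]
  constructor <;> linarith [right.1, right.2, left.1, left.2]

theorem abs_thirdDiff_sub_le (x h : ℝ) :
    |f (x + 3 * h / 2) - 3 * f (x + h / 2) + 3 * f (x - h / 2) - f (x - 3 * h / 2) -
      h ^ 3 * iteratedDeriv 3 f x| ≤ 7 * M * h ^ 4 / 16 := by
  have r₁ := abs_le.mp (abs_sub_taylor_three_le hf hM x (h / 2))
  have l₁ := abs_le.mp (abs_sub_taylor_three_le hf hM x (-(h / 2)))
  have r₃ := abs_le.mp (abs_sub_taylor_three_le hf hM x (3 * h / 2))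
  have l₃ := abs_le.mp (abs_sub_taylor_three_le hf hM x (-(3 * h / 2)))
  rw [← sub_eq_add_neg] at l₁ l₃
  rw [abs_le]
  constructor <;> linarith [r₁.1, r₁.2, l₁.1, l₁.2, r₃.1, r₃.2, l₃.1, l₃.2]

end FiniteDifferences

theorem abs_div_sub_div_le {N D a b : ℝ} (hD : 0 < D) (hb : b ≠ 0) :
    |N / D - a / b| ≤ (|N - a| + |a / b| * |D - b|) / D := by
  have key : N / D - a / b = ((N - a) - a / b * (D - b)) / D := by
    field_simp
    ring
  rw [key, abs_div, abs_of_pos hD, ← abs_mul]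
  gcongr
  exact abs_sub _ _

/-- `ω̂_k` for the nodes `f (x + (j - 1/2) h)`, `j ∈ ℤ`, where `x = x̄_k` is the reference
midpoint of the `k`-th element. -/
noncomputable def meshCoeff (f : ℝ → ℝ) (x h : ℝ) : ℝ :=
  ((f (x - h / 2) - f (x - 3 * h / 2)) - 2 * (f (x + h / 2) - f (x - h / 2)) +
      (f (x + 3 * h / 2) - f (x + h / 2))) / (4 * (f (x + h / 2) - f (x - h / 2)))

theorem meshCoeff_sub_half_div (f : ℝ → ℝ) (k K : ℝ) :
    meshCoeff f ((k - 1 / 2) / K) (1 / K) =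
      ((f ((k - 1) / K) - f ((k - 2) / K)) - 2 * (f (k / K) - f ((k - 1) / K)) +
        (f ((k + 1) / K) - f (k / K))) / (4 * (f (k / K) - f ((k - 1) / K))) := by
  simp only [meshCoeff]
  ring_nf

theorem abs_meshCoeff_sub_le {f : ℝ → ℝ} {M₃ M₄ S δ x h : ℝ} (hf : ContDiff ℝ 4 f)
    (hM₄ : ∀ y, |iteratedDeriv 4 f y| ≤ M₄) (hM₃ : |iteratedDeriv 3 f x| ≤ M₃)
    (hS : |iteratedDeriv 3 f x / deriv f x| ≤ S) (hδ : 0 < δ) (hδf : ∀ y, δ ≤ deriv f y)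
    (hh : 0 < h) (hh₁ : h ≤ 1) :
    |meshCoeff f x h - 1 / 4 * h ^ 2 * (iteratedDeriv 3 f x / deriv f x)| ≤
      (7 * M₄ / 16 + S * (M₃ / 24 + M₄ / 192)) / (4 * δ) * h ^ 3 := by
  set d₁ := deriv f x
  set d₃ := iteratedDeriv 3 f x
  set D := f (x + h / 2) - f (x - h / 2)
  set N := f (x + 3 * h / 2) - 3 * f (x + h / 2) + 3 * f (x - h / 2) - f (x - 3 * h / 2)
  have hM₄0 : 0 ≤ M₄ := (abs_nonneg _).trans (hM₄ 0)
  have hM₃0 : 0 ≤ M₃ := (abs_nonneg _).trans hM₃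
  have hS0 : 0 ≤ S := (abs_nonneg _).trans hS
  have hd₁ : 0 < d₁ := hδ.trans_le (hδf x)
  have hD : δ * h ≤ D := by
    have := mul_sub_le_image_sub_of_le_deriv (hf.differentiable (by norm_num)) hδf
      (show x - h / 2 ≤ x + h / 2 by linarith)
    rwa [show x + h / 2 - (x - h / 2) = h by ring] at this
  have hD0 : 0 < D := (mul_pos hδ hh).trans_le hD
  have hω : meshCoeff f x h - 1 / 4 * h ^ 2 * (d₃ / d₁) = (N / D - h ^ 3 * d₃ / (h * d₁)) / 4 := by
    simp only [meshCoeff, N, D]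
    field_simp
    ring
  have hN : |N - h ^ 3 * d₃| ≤ 7 * M₄ * h ^ 4 / 16 := abs_thirdDiff_sub_le hf hM₄ x h
  have hDb : |D - h * d₁| ≤ h ^ 3 * (M₃ / 24 + M₄ / 192) := by
    have hc := abs_le.mp (abs_centralDiff_sub_le hf hM₄ x h)
    have h3 := abs_le.mp hM₃
    have h43 : h ^ 4 ≤ h ^ 3 := pow_le_pow_of_le_one hh.le hh₁ (by norm_num)
    rw [abs_le]
    constructor <;> nlinarith [pow_pos hh 3]
  have hq : |h ^ 3 * d₃ / (h * d₁)| ≤ h ^ 2 * S := by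
    rw [show h ^ 3 * d₃ / (h * d₁) = h ^ 2 * (d₃ / d₁) by field_simp, abs_mul,
      abs_of_nonneg (by positivity)]
    gcongr
  rw [hω, abs_div, abs_of_pos (four_pos : (0 : ℝ) < 4)]
  calc |N / D - h ^ 3 * d₃ / (h * d₁)| / 4
      ≤ (|N - h ^ 3 * d₃| + |h ^ 3 * d₃ / (h * d₁)| * |D - h * d₁|) / D / 4 := by
        gcongr
        exact abs_div_sub_div_le hD0 (by positivity)
    _ ≤ (7 * M₄ * h ^ 4 / 16 + h ^ 2 * S * (h ^ 3 * (M₃ / 24 + M₄ / 192))) / (δ * h) / 4 := by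
        gcongr
    _ = (7 * M₄ / 16 + h * (S * (M₃ / 24 + M₄ / 192))) / (4 * δ) * h ^ 3 := by
        field_simp
    _ ≤ (7 * M₄ / 16 + S * (M₃ / 24 + M₄ / 192)) / (4 * δ) * h ^ 3 := by
        gcongr (7 * M₄ / 16 + ?_) / _ * _
        exact mul_le_of_le_one_left (by positivity) hh₁

theorem abs_le_of_abs_sub_le_mul_pow {a b C S h h₀ : ℝ} (hab : |a - b| ≤ C * h ^ 3)
    (hb : |b| ≤ S * h ^ 2) (hC : 0 ≤ C) (hh₀ : h ≤ h₀) :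
    |a| ≤ (S + C * h₀) * h ^ 2 := by
  have : C * h ^ 2 * h ≤ C * h ^ 2 * h₀ := by gcongr
  linarith [abs_sub_abs_le_abs_sub a b]

/-- on a smooth mesh generated by a smooth periodic deformation
`ψ`, the quadrature coefficients satisfy
`ω̂_k = ¼ h² ψ'''(x̄_k)/ψ'(x̄_k) + O(h³)`; in particular `|ω̂_k| ≤ C' h²`. -/
theorem statement12 (ψ : ℝ → ℝ) (hψ : ContDiff ℝ 4 ψ)
    (hψ' : ∀ x : ℝ, 0 < deriv ψ x) (hper : ∀ x : ℝ, ψ (x + 2) = ψ x + 2) :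
    ∃ h₀ : ℝ, 0 < h₀ ∧ ∃ C : ℝ, 0 < C ∧
      ∀ K : ℤ, 1 ≤ K → (1 : ℝ) / (K : ℝ) ≤ h₀ → ∀ k : ℤ,
        (|((ψ (((k : ℝ) - 1) / (K : ℝ)) - ψ (((k : ℝ) - 2) / (K : ℝ))) -
              2 * (ψ ((k : ℝ) / (K : ℝ)) - ψ (((k : ℝ) - 1) / (K : ℝ))) +
              (ψ (((k : ℝ) + 1) / (K : ℝ)) - ψ ((k : ℝ) / (K : ℝ)))) /
              (4 * (ψ ((k : ℝ) / (K : ℝ)) - ψ (((k : ℝ) - 1) / (K : ℝ)))) -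
            (1 / 4) * ((1 : ℝ) / (K : ℝ)) ^ 2 *
              (iteratedDeriv 3 ψ (((k : ℝ) - 1 / 2) / (K : ℝ)) /
                deriv ψ (((k : ℝ) - 1 / 2) / (K : ℝ)))| ≤
          C * ((1 : ℝ) / (K : ℝ)) ^ 3) ∧
        (|((ψ (((k : ℝ) - 1) / (K : ℝ)) - ψ (((k : ℝ) - 2) / (K : ℝ))) -
              2 * (ψ ((k : ℝ) / (K : ℝ)) - ψ (((k : ℝ) - 1) / (K : ℝ))) +
              (ψ (((k : ℝ) + 1) / (K : ℝ)) - ψ ((k : ℝ) / (K : ℝ)))) /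
              (4 * (ψ ((k : ℝ) / (K : ℝ)) - ψ (((k : ℝ) - 1) / (K : ℝ))))| ≤
          ((1 / 4) * sSup ((fun x => |iteratedDeriv 3 ψ x / deriv ψ x|) ''
              Set.Icc (-1 : ℝ) 1) + C * h₀) * ((1 : ℝ) / (K : ℝ)) ^ 2) := by
  have hp₁ : Periodic (deriv ψ) 2 := deriv_periodic_of_map_add hper
  have hp : ∀ n, Periodic (iteratedDeriv (n + 1) ψ) 2 := fun n => by
    rw [iteratedDeriv_succ']
    exact hp₁.iteratedDeriv n
  have hc₁ : Continuous (deriv ψ) := hψ.continuous_deriv (by norm_num)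
  have hc₃ : Continuous (iteratedDeriv 3 ψ) := hψ.continuous_iteratedDeriv 3 (by norm_num)
  have hc₄ : Continuous (iteratedDeriv 4 ψ) := hψ.continuous_iteratedDeriv 4 le_rfl
  obtain ⟨M₃, hM₃⟩ : ∃ M, ∀ x, |iteratedDeriv 3 ψ x| ≤ M :=
    ⟨_, ((hp 2).comp abs).le_sSup_image_Icc two_pos hc₃.abs 0⟩
  obtain ⟨M₄, hM₄⟩ : ∃ M, ∀ x, |iteratedDeriv 4 ψ x| ≤ M :=
    ⟨_, ((hp 3).comp abs).le_sSup_image_Icc two_pos hc₄.abs 0⟩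
  obtain ⟨y, hδ⟩ := hp₁.exists_forall_le two_ne_zero hc₁
  rw [show Icc (-1 : ℝ) 1 = Icc (-1) (-1 + 2) by norm_num]
  set S := sSup ((fun x => |iteratedDeriv 3 ψ x / deriv ψ x|) '' Icc (-1) (-1 + 2))
  have hS : ∀ x, |iteratedDeriv 3 ψ x / deriv ψ x| ≤ S :=
    (((hp 2).div hp₁).comp abs).le_sSup_image_Icc two_pos
      ((hc₃.div hc₁ fun x => (hψ' x).ne').abs) (-1)
  set C := max ((7 * M₄ / 16 + S * (M₃ / 24 + M₄ / 192)) / (4 * deriv ψ y)) 1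
  refine ⟨1, one_pos, C, lt_max_of_lt_right one_pos, fun K hK hKh k => ?_⟩
  have hK₀ : (0 : ℝ) < K := Int.cast_pos.mpr (by omega)
  rw [← meshCoeff_sub_half_div]
  set h := (1 : ℝ) / K
  set m := ((k : ℝ) - 1 / 2) / K
  have hh : 0 < h := by positivity
  have hω : |meshCoeff ψ m h - 1 / 4 * h ^ 2 * (iteratedDeriv 3 ψ m / deriv ψ m)| ≤ C * h ^ 3 :=
    (abs_meshCoeff_sub_le hψ hM₄ (hM₃ m) (hS m) (hψ' y) hδ hh hKh).trans
      (by gcongr; exact le_max_left _ _)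
  have hq : |1 / 4 * h ^ 2 * (iteratedDeriv 3 ψ m / deriv ψ m)| ≤ 1 / 4 * S * h ^ 2 := by
    rw [abs_mul, abs_of_nonneg (by positivity), mul_right_comm]
    gcongr
    exact hS m
  exact ⟨hω, abs_le_of_abs_sub_le_mul_pow hω hq (zero_le_one.trans (le_max_right _ _)) hKh⟩
end

section
/- Let h > 0 and define the 2K-periodic oscillatory mesh h_k = ½ h (3 + (−1)^k), i.e. h_k = h for odd k and h_k = 2h for even k. Then the quadrature coefficients ω̂_k = (h_{k−1} − 2h_k + h_{k+1})/(4h_k) satisfy ω̂_k = 1/2 for odd k and ω̂_k = −1/4 for even k, and moreover Σ_{k=−K+1}^K h_k ω̂_k² = (1/8) Σ_{k=−K+1}^K h_k; i.e. for a constant gradient the relative variational crime on this quasi-uniform but non-smooth mesh is 1/√8, independent of h. -/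
/-!
On the mesh `h, 2h, h, 2h, …` each coefficient `ω̂_k` depends only on the parity of `k`, and
`h_k ω̂_k² = h_k / 8 - (-1)^k h / 8` for every `k`. Over a window of `2K` consecutive indices the
alternating term sums to zero.
-/

open Finset

/-- The reflection `k ↦ 1 - k` of `[-K+1, K]` swaps the parity of `k`. -/
theorem sum_Icc_neg_one_zpow_eq_zero {α : Type*} [DivisionRing α] (K : ℤ) :
    ∑ k ∈ Icc (-K + 1) K, (-1 : α) ^ k = 0 := by
  refine sum_involution (fun k _ => 1 - k) (fun k _ => ?_) (fun k _ _ => by omega)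
    (fun k hk => by simp only [mem_Icc] at hk ⊢; omega) (fun k _ => by ring)
  rw [zpow_sub₀ (neg_ne_zero.mpr one_ne_zero), zpow_one]
  rcases Int.even_or_odd k with hk | hk <;> simp [hk.neg_one_zpow]

namespace OscillatoryMesh

variable {h : ℝ} {hsz oh : ℤ → ℝ} {k : ℤ}

theorem size_of_odd (hhsz : ∀ k : ℤ, hsz k = (1 / 2) * h * (3 + (-1 : ℝ) ^ k))
    (hk : Odd k) : hsz k = h := by
  rw [hhsz, hk.neg_one_zpow]; ring

theorem size_of_even (hhsz : ∀ k : ℤ, hsz k = (1 / 2) * h * (3 + (-1 : ℝ) ^ k))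
    (hk : Even k) : hsz k = 2 * h := by
  rw [hhsz, hk.neg_one_zpow]; ring

theorem coeff_of_odd (hh : h ≠ 0)
    (hhsz : ∀ k : ℤ, hsz k = (1 / 2) * h * (3 + (-1 : ℝ) ^ k))
    (hoh : ∀ k : ℤ, oh k = (hsz (k - 1) - 2 * hsz k + hsz (k + 1)) / (4 * hsz k))
    (hk : Odd k) : oh k = 1 / 2 := by
  rw [hoh, size_of_odd hhsz hk, size_of_even hhsz (hk.sub_odd odd_one),
    size_of_even hhsz (hk.add_odd odd_one)]
  field_simp; ring

theorem coeff_of_even (hh : h ≠ 0)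
    (hhsz : ∀ k : ℤ, hsz k = (1 / 2) * h * (3 + (-1 : ℝ) ^ k))
    (hoh : ∀ k : ℤ, oh k = (hsz (k - 1) - 2 * hsz k + hsz (k + 1)) / (4 * hsz k))
    (hk : Even k) : oh k = -(1 / 4) := by
  rw [hoh, size_of_even hhsz hk, size_of_odd hhsz (hk.sub_odd odd_one),
    size_of_odd hhsz hk.add_one]
  field_simp; ring

theorem size_mul_coeff_sq (hh : h ≠ 0)
    (hhsz : ∀ k : ℤ, hsz k = (1 / 2) * h * (3 + (-1 : ℝ) ^ k))
    (hoh : ∀ k : ℤ, oh k = (hsz (k - 1) - 2 * hsz k + hsz (k + 1)) / (4 * hsz k)) (k : ℤ) :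
    hsz k * oh k ^ 2 = (1 / 8) * hsz k - h / 8 * (-1 : ℝ) ^ k := by
  rcases Int.even_or_odd k with hk | hk
  · rw [coeff_of_even hh hhsz hoh hk, size_of_even hhsz hk, hk.neg_one_zpow]; ring
  · rw [coeff_of_odd hh hhsz hoh hk, size_of_odd hhsz hk, hk.neg_one_zpow]; ring

end OscillatoryMesh

theorem statement15_general (K : ℤ) (h : ℝ) (hpos : 0 < h)
    (hsz : ℤ → ℝ)
    (hhsz : ∀ k : ℤ, hsz k = (1 / 2) * h * (3 + (-1 : ℝ) ^ k))
    (oh : ℤ → ℝ)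
    (hoh : ∀ k : ℤ, oh k = (hsz (k - 1) - 2 * hsz k + hsz (k + 1)) / (4 * hsz k)) :
    (∀ k : ℤ, Odd k → oh k = 1 / 2) ∧
    (∀ k : ℤ, Even k → oh k = -(1 / 4)) ∧
    (∑ k ∈ Finset.Icc (-K + 1) K, hsz k * oh k ^ 2 =
      (1 / 8) * ∑ k ∈ Finset.Icc (-K + 1) K, hsz k) := by
  have hh : h ≠ 0 := hpos.ne'
  refine ⟨fun k => OscillatoryMesh.coeff_of_odd hh hhsz hoh,
    fun k => OscillatoryMesh.coeff_of_even hh hhsz hoh, ?_⟩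
  rw [sum_congr rfl fun k _ => OscillatoryMesh.size_mul_coeff_sq hh hhsz hoh k, sum_sub_distrib, ← mul_sum,
    ← mul_sum, sum_Icc_neg_one_zpow_eq_zero, mul_zero, sub_zero]

/-- on the oscillatory mesh `h_k = ½h(3 + (−1)^k)` the quadrature
coefficients are `ω̂_k = ½` for odd `k` and `ω̂_k = −¼` for even `k`, and
`Σ h_k ω̂_k² = ⅛ Σ h_k`. -/
theorem statement15 (K : ℤ) (hK : 1 ≤ K) (h : ℝ) (hpos : 0 < h)
    (hsz : ℤ → ℝ)
    (hhsz : ∀ k : ℤ, hsz k = (1 / 2) * h * (3 + (-1 : ℝ) ^ k))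
    (oh : ℤ → ℝ)
    (hoh : ∀ k : ℤ, oh k = (hsz (k - 1) - 2 * hsz k + hsz (k + 1)) / (4 * hsz k)) :
    (∀ k : ℤ, Odd k → oh k = 1 / 2) ∧
    (∀ k : ℤ, Even k → oh k = -(1 / 4)) ∧
    (∑ k ∈ Finset.Icc (-K + 1) K, hsz k * oh k ^ 2 =
      (1 / 8) * ∑ k ∈ Finset.Icc (-K + 1) K, hsz k) :=
  statement15_general K h hpos hsz hhsz oh hoh
end
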